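/- arXiv:math/0512283 — 6 statements merged into one kernel-verified Lean document; each statement's English description precedes it below -/
import Mathlib

section
/- Let K be a field, n ≥ 2, and let ≻ be any monomial order on R = K[x_{ij} : 1 ≤ i,j ≤ n] such that for all 1 ≤ i < h ≤ n and 1 ≤ j < k ≤ n the ≻-leading monomial of the 2-minor x_{ij}x_{hk} − x_{ik}x_{hj} is x_{ik}x_{hj} when i = j or h = k, and is x_{ij}x_{hk} when i ≠ j and h ≠ k. Then the initial ideal in_≻(I(2,n)) equals H(2,n). -/
open MvPolynomial

/-!
Since the 2-minors have the prescribed leading monomials, it suffices that they form a Gröbner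
basis, i.e. that every element of `I(2,n)` supported on monomials outside `H(2,n)` vanishes.
Such an element is killed by the Segre map `x_{ij} ↦ y_i z_j`, which sends a monomial to the
monomial recording its row and column sums, so it suffices that a monomial outside `H(2,n)` is
determined by its row and column sums. After cancelling common factors, two distinct such
monomials would have disjoint nonempty supports occupying the same rows and columns; comparing
the leftmost cells of the two supports in their common top row produces a forbidden pair.
-/

/-- `d` is the leading monomial (exponent vector) of `f` with respect to the
monomial order `m`: it lies in the support of `f` and dominates every other
element of the support. -/
def IsLeadingMonomial {σ K : Type*} [CommSemiring K] (m : MonomialOrder σ)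
    (f : MvPolynomial σ K) (d : σ →₀ ℕ) : Prop :=
  d ∈ f.support ∧ ∀ e ∈ f.support, e ≠ d → m.toSyn e < m.toSyn d

/-- The initial ideal of `I` with respect to the monomial order `m`: the ideal
generated by the leading monomials of all nonzero elements of `I`. -/
noncomputable def initialIdeal {σ K : Type*} [CommSemiring K] (m : MonomialOrder σ)
    (I : Ideal (MvPolynomial σ K)) : Ideal (MvPolynomial σ K) :=
  Ideal.span {g : MvPolynomial σ K |
    ∃ f ∈ I, ∃ d, IsLeadingMonomial m f d ∧ g = monomial d 1}

/-- The 2-minor `x_{ij} x_{hk} - x_{ik} x_{hj}` of the generic `n × n` matrix. -/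
noncomputable def minor2 (K : Type*) [Field K] (n : ℕ) (i h j k : Fin n) :
    MvPolynomial (Fin n × Fin n) K :=
  X (i, j) * X (h, k) - X (i, k) * X (h, j)

/-- The ideal `I(2,n)` generated by the 2-minors of the generic `n × n` matrix. -/
noncomputable def segreIdeal (K : Type*) [Field K] (n : ℕ) :
    Ideal (MvPolynomial (Fin n × Fin n) K) :=
  Ideal.span {f : MvPolynomial (Fin n × Fin n) K |
    ∃ i h j k : Fin n, i < h ∧ j < k ∧ f = minor2 K n i h j k}

/-- The monomial ideal `H(2,n)`. -/
noncomputable def Hideal (K : Type*) [Field K] (n : ℕ) :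
    Ideal (MvPolynomial (Fin n × Fin n) K) :=
  Ideal.span {g : MvPolynomial (Fin n × Fin n) K |
    ∃ i h j k : Fin n, i < h ∧ j < k ∧
      (((i = j ∨ h = k) ∧ g = X (i, k) * X (h, j)) ∨
       ((i ≠ j ∧ h ≠ k) ∧ g = X (i, j) * X (h, k)))}

/-- The exponent vector of the quadratic monomial `x_p x_q`. -/
noncomputable def mon2 {σ : Type*} (p q : σ) : σ →₀ ℕ :=
  Finsupp.single p 1 + Finsupp.single q 1

namespace MonomialOrder

variable {σ R : Type*} [CommRing R] (m : MonomialOrder σ)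

theorem isLeadingMonomial_iff {f : MvPolynomial σ R} {d : σ →₀ ℕ} :
    IsLeadingMonomial m f d ↔ f ≠ 0 ∧ m.degree f = d := by
  constructor
  · rintro ⟨hd, hmax⟩
    have hf : f ≠ 0 := by rintro rfl; simp at hd
    refine ⟨hf, by_contra fun hne => ?_⟩
    exact (m.le_degree hd).not_gt (hmax _ ((m.degree_mem_support_iff f).mpr hf) hne)
  · rintro ⟨hf, rfl⟩
    refine ⟨(m.degree_mem_support_iff f).mpr hf, fun e he hne => ?_⟩
    exact (m.le_degree he).lt_of_ne (m.toSyn.injective.ne hne)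

theorem exists_degree_le_of_mem_span {B : Set (MvPolynomial σ R)}
    (hB : ∀ b ∈ B, IsUnit (m.leadingCoeff b))
    (hred : ∀ r ∈ Ideal.span B, (∀ c ∈ r.support, ∀ b ∈ B, ¬ m.degree b ≤ c) → r = 0)
    {f : MvPolynomial σ R} (hf : f ∈ Ideal.span B) (hf0 : f ≠ 0) :
    ∃ b ∈ B, m.degree b ≤ m.degree f := by
  obtain ⟨g, r, hfgr, hdeg, hr⟩ := m.div_set hB f
  have hsum : Finsupp.linearCombination _ (fun b : B => (b : MvPolynomial σ R)) g
      = ∑ b ∈ g.support, g b * (b : MvPolynomial σ R) := by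
    simp [Finsupp.linearCombination_apply, Finsupp.sum]
  have hgB : ∑ b ∈ g.support, g b * (b : MvPolynomial σ R) ∈ Ideal.span B :=
    Ideal.sum_mem _ fun b _ => Ideal.mul_mem_left _ _ (Ideal.subset_span b.2)
  have hr0 : r = 0 := by
    refine hred r ?_ hr
    rw [eq_sub_of_add_eq' hfgr.symm, hsum]
    exact Ideal.sub_mem _ hf hgB
  rw [hr0, add_zero, hsum] at hfgr
  have hcoeff : coeff (m.degree f) (∑ b ∈ g.support, g b * (b : MvPolynomial σ R)) ≠ 0 := by
    rw [← hfgr]; exact m.coeff_degree_ne_zero_iff.mpr hf0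
  rw [coeff_sum] at hcoeff
  obtain ⟨b, -, hb⟩ := Finset.exists_ne_zero_of_sum_ne_zero hcoeff
  rw [mul_comm] at hb
  have hgb : g b ≠ 0 := by rintro h; simp [h] at hb
  have hdeg_eq : m.degree ((b : MvPolynomial σ R) * g b) = m.degree f :=
    m.toSyn.injective ((hdeg b).antisymm (m.le_degree (mem_support_iff.mpr hb)))
  rw [m.degree_mul_of_isRegular_left (hB b b.2).isRegular hgb] at hdeg_eq
  exact ⟨b, b.2, hdeg_eq ▸ le_self_add⟩

theorem initialIdeal_span_eq_of_reduced_eq_zero [Nontrivial R] {B : Set (MvPolynomial σ R)}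
    (hB : ∀ b ∈ B, IsUnit (m.leadingCoeff b))
    (hred : ∀ r ∈ Ideal.span B, (∀ c ∈ r.support, ∀ b ∈ B, ¬ m.degree b ≤ c) → r = 0) :
    initialIdeal m (Ideal.span B) = Ideal.span ((fun b => monomial (m.degree b) 1) '' B) := by
  apply le_antisymm
  · rw [initialIdeal, Ideal.span_le]
    rintro _ ⟨f, hf, d, hlead, rfl⟩
    obtain ⟨hf0, rfl⟩ := m.isLeadingMonomial_iff.mp hlead
    obtain ⟨b, hb, hle⟩ := m.exists_degree_le_of_mem_span hB hred hf hf0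
    rw [← tsub_add_cancel_of_le hle, ← mul_one (1 : R), ← monomial_mul]
    exact Ideal.mul_mem_left _ _ (Ideal.subset_span ⟨b, hb, by rw [mul_one]⟩)
  · rw [Ideal.span_le]
    rintro _ ⟨b, hb, rfl⟩
    have hb0 : b ≠ 0 := m.leadingCoeff_ne_zero_iff.mp (hB b hb).ne_zero
    exact Ideal.subset_span
      ⟨b, Ideal.subset_span hb, _, m.isLeadingMonomial_iff.mpr ⟨hb0, rfl⟩, rfl⟩

end MonomialOrder

section Standard

variable {α : Type*} [LinearOrder α]

/-- The supports of the monomials that lie outside `H(2,n)`. -/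
structure IsStandard (S : Set (α × α)) : Prop where
  inc : ∀ ⦃a b c e⦄, (a, b) ∈ S → (c, e) ∈ S → a < c → b < e → a = b ∨ c = e
  dec : ∀ ⦃a b c e⦄, (a, b) ∈ S → (c, e) ∈ S → a < c → e < b → a ≠ e ∧ c ≠ b

theorem IsStandard.mono {S T : Set (α × α)} (hT : IsStandard T) (h : S ⊆ T) : IsStandard S :=
  ⟨fun _ _ _ _ h₁ h₂ => hT.inc (h h₁) (h h₂), fun _ _ _ _ h₁ h₂ => hT.dec (h h₁) (h h₂)⟩

theorem exists_mem_row_of_image_fst_eq {S T : Finset (α × α)}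
    (h : S.image Prod.fst = T.image Prod.fst) {a b : α} (hab : (a, b) ∈ S) : ∃ y, (a, y) ∈ T := by
  obtain ⟨⟨_, y⟩, hy, rfl⟩ := Finset.mem_image.mp (h ▸ Finset.mem_image_of_mem Prod.fst hab)
  exact ⟨y, hy⟩

theorem exists_mem_col_of_image_snd_eq {S T : Finset (α × α)}
    (h : S.image Prod.snd = T.image Prod.snd) {a b : α} (hab : (a, b) ∈ S) : ∃ x, (x, b) ∈ T := by
  obtain ⟨⟨x, _⟩, hx, rfl⟩ := Finset.mem_image.mp (h ▸ Finset.mem_image_of_mem Prod.snd hab)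
  exact ⟨x, hx⟩

theorem IsStandard.false_of_disjoint_of_lt {S T : Finset (α × α)}
    (hS : IsStandard (S : Set (α × α))) (hT : IsStandard (T : Set (α × α))) (hST : Disjoint S T)
    (hrow : S.image Prod.fst = T.image Prod.fst) (hcol : S.image Prod.snd = T.image Prod.snd)
    {a b b' : α} (hab : (a, b) ∈ S) (hab' : (a, b') ∈ T)
    (haS : ∀ p ∈ S, a ≤ p.1) (haT : ∀ p ∈ T, a ≤ p.1) (hb' : ∀ y, (a, y) ∈ T → b' ≤ y)
    (hbb' : b < b') : False := by
  obtain ⟨c, hc⟩ := exists_mem_col_of_image_snd_eq hcol hab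
  obtain ⟨c', hc'⟩ := exists_mem_col_of_image_snd_eq hcol.symm hab'
  have hac : a < c := (haT _ hc).lt_of_ne fun h => (hb' _ (h ▸ hc)).not_gt hbb'
  have hac' : a < c' :=
    (haS _ hc').lt_of_ne fun h => Finset.disjoint_left.mp hST (h ▸ hc') hab'
  rcases hS.inc hab hc' hac' hbb' with hdiag | hdiag
  · exact (hT.dec hab' hc hac hbb').1 hdiag
  · rw [hdiag] at hc' hac'
    obtain ⟨y, hy⟩ := exists_mem_row_of_image_fst_eq hrow hc'
    rcases lt_trichotomy y b' with hlt | rfl | hgt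
    · exact (hT.dec hab' hy hac' hlt).2 rfl
    · exact Finset.disjoint_left.mp hST hc' hy
    · rcases hT.inc hab' hy hac' hgt with h | h
      exacts [hac'.ne h, hgt.ne h]

theorem IsStandard.eq_empty_of_disjoint {S T : Finset (α × α)}
    (hS : IsStandard (S : Set (α × α))) (hT : IsStandard (T : Set (α × α))) (hST : Disjoint S T)
    (hrow : S.image Prod.fst = T.image Prod.fst) (hcol : S.image Prod.snd = T.image Prod.snd) :
    S = ∅ := by
  by_contra hne
  obtain ⟨⟨a, b₀⟩, hp, hmin⟩ :=
    S.exists_min_image Prod.fst (Finset.nonempty_iff_ne_empty.mpr hne)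
  have haT : ∀ q ∈ T, a ≤ q.1 := fun q hq => by
    obtain ⟨y, hy⟩ := exists_mem_row_of_image_fst_eq hrow.symm hq
    exact hmin (q.1, y) hy
  obtain ⟨b₁, hq⟩ := exists_mem_row_of_image_fst_eq hrow hp
  have hminCol : ∀ (U : Finset (α × α)) {y}, (a, y) ∈ U →
      ∃ b, (a, b) ∈ U ∧ ∀ z, (a, z) ∈ U → b ≤ z := fun U y hy => by
    obtain ⟨⟨x, b⟩, hb, hbmin⟩ :=
      (U.filter (·.1 = a)).exists_min_image Prod.snd ⟨(a, y), by simp [hy]⟩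
    obtain ⟨hb, hx : x = a⟩ := Finset.mem_filter.mp hb
    subst x
    exact ⟨b, hb, fun z hz => hbmin (_, z) (Finset.mem_filter.mpr ⟨hz, rfl⟩)⟩
  obtain ⟨b, hb, hbS⟩ := hminCol S hp
  obtain ⟨b', hb', hbT⟩ := hminCol T hq
  rcases lt_trichotomy b b' with hlt | rfl | hgt
  · exact hS.false_of_disjoint_of_lt hT hST hrow hcol hb hb' hmin haT hbT hlt
  · exact Finset.disjoint_left.mp hST hb hb'
  · exact hT.false_of_disjoint_of_lt hS hST.symm hrow.symm hcol.symm hb' hb haT hmin hbS hgt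

theorem eq_of_isStandard_of_mapDomain_eq {d e : α × α →₀ ℕ}
    (hd : IsStandard (d.support : Set (α × α))) (he : IsStandard (e.support : Set (α × α)))
    (hfst : d.mapDomain Prod.fst = e.mapDomain Prod.fst)
    (hsnd : d.mapDomain Prod.snd = e.mapDomain Prod.snd) : d = e := by
  classical
  set g := d ⊓ e
  have hdg : g + (d - g) = d := add_tsub_cancel_of_le inf_le_left
  have heg : g + (e - g) = e := add_tsub_cancel_of_le inf_le_right
  have himage : ∀ f : α × α → α, d.mapDomain f = e.mapDomain f →
      (d - g).support.image f = (e - g).support.image f := fun f h => by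
    rw [← hdg, ← heg, Finsupp.mapDomain_add, Finsupp.mapDomain_add] at h
    simp only [← Finsupp.mapDomain_support_of_subsingletonAddUnits, add_left_cancel h]
  have hdisj : Disjoint (d - g).support (e - g).support := by
    rw [Finset.disjoint_left]
    intro p
    simp only [g, Finsupp.mem_support_iff, Finsupp.coe_tsub, Pi.sub_apply, Finsupp.inf_apply]
    omega
  have hempty := IsStandard.eq_empty_of_disjoint (hd.mono (by exact_mod_cast Finsupp.support_tsub))
    (he.mono (by exact_mod_cast Finsupp.support_tsub)) hdisj (himage _ hfst) (himage _ hsnd)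
  have hempty' := himage _ hfst
  rw [hempty, Finset.image_empty, eq_comm, Finset.image_eq_empty] at hempty'
  rw [← hdg, ← heg, Finsupp.support_eq_empty.mp hempty, Finsupp.support_eq_empty.mp hempty']

end Standard

section Segre

variable {K α β : Type*}

noncomputable def segreExponent (d : α × β →₀ ℕ) : α ⊕ β →₀ ℕ :=
  Finsupp.sumElim (d.mapDomain Prod.fst) (d.mapDomain Prod.snd)

theorem segreExponent_add (d e : α × β →₀ ℕ) :
    segreExponent (d + e) = segreExponent d + segreExponent e := by
  ext (_ | _) <;> simp [segreExponent, Finsupp.mapDomain_add]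

theorem segreExponent_single (p : α × β) (k : ℕ) :
    segreExponent (Finsupp.single p k)
      = Finsupp.single (Sum.inl p.1) k + Finsupp.single (Sum.inr p.2) k := by
  simp [segreExponent, Finsupp.mapDomain_single]

theorem mapDomain_eq_of_segreExponent_eq {d e : α × β →₀ ℕ}
    (h : segreExponent d = segreExponent e) :
    d.mapDomain Prod.fst = e.mapDomain Prod.fst ∧ d.mapDomain Prod.snd = e.mapDomain Prod.snd :=
  ⟨Finsupp.ext fun i => DFunLike.congr_fun h (Sum.inl i),
    Finsupp.ext fun j => DFunLike.congr_fun h (Sum.inr j)⟩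

variable (K α β) in
noncomputable def segreMap [CommSemiring K] :
    MvPolynomial (α × β) K →ₐ[K] MvPolynomial (α ⊕ β) K :=
  aeval fun p => X (Sum.inl p.1) * X (Sum.inr p.2)

variable [CommSemiring K]

theorem segreMap_monomial (d : α × β →₀ ℕ) (c : K) :
    segreMap K α β (monomial d c) = monomial (segreExponent d) c := by
  induction d using Finsupp.induction_linear generalizing c with
  | zero => simp [segreMap, segreExponent]
  | add d e hd he =>
    rw [← mul_one c, ← monomial_mul, map_mul, hd, he, monomial_mul, segreExponent_add]
  | single p k =>
    rw [segreMap, aeval_monomial, Finsupp.prod_single_index (by simp), segreExponent_single,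
      mul_pow, X_pow_eq_monomial, X_pow_eq_monomial, monomial_mul, one_mul, algebraMap_eq,
      C_mul_monomial, mul_one]

theorem eq_zero_of_segreMap_eq_zero {r : MvPolynomial (α × β) K}
    (hinj : Set.InjOn segreExponent (r.support : Set (α × β →₀ ℕ)))
    (hr : segreMap K α β r = 0) : r = 0 := by
  classical
  ext e
  rw [coeff_zero]
  by_contra he
  have hcoeff : coeff (segreExponent e) (segreMap K α β r) = coeff e r := by
    conv_lhs => rw [r.as_sum, map_sum]
    simp only [segreMap_monomial, coeff_sum, coeff_monomial]
    rw [Finset.sum_eq_single e (fun e' he' hne => if_neg fun h => hne (hinj he' ?_ h))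
      (fun h => absurd (mem_support_iff.mpr he) h), if_pos rfl]
    exact mem_support_iff.mpr he
  rw [hr, coeff_zero] at hcoeff
  exact he hcoeff.symm

end Segre

section Minors

theorem X_mul_X_eq_monomial_mon2 {σ R : Type*} [CommSemiring R] (p q : σ) :
    (X p * X q : MvPolynomial σ R) = monomial (mon2 p q) 1 := by
  rw [X, X, monomial_mul, one_mul, mon2]

theorem mon2_le_of_mem_support {σ : Type*} {d : σ →₀ ℕ} {p q : σ} (hpq : p ≠ q)
    (hp : p ∈ d.support) (hq : q ∈ d.support) : mon2 p q ≤ d := by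
  classical
  intro x
  rw [Finsupp.mem_support_iff] at hp hq
  simp only [mon2, Finsupp.add_apply, Finsupp.single_apply]
  split_ifs <;> subst_vars <;> first | exact absurd rfl hpq | omega

variable {α : Type*} [LinearOrder α]

noncomputable def minor2LeadingExp (i h j k : α) : α × α →₀ ℕ :=
  if i = j ∨ h = k then mon2 (i, k) (h, j) else mon2 (i, j) (h, k)

theorem isStandard_support_of_forall_not_le {d : α × α →₀ ℕ}
    (hd : ∀ i h j k, i < h → j < k → ¬ minor2LeadingExp i h j k ≤ d) :
    IsStandard (d.support : Set (α × α)) := by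
  have hne {a b c e : α} (hac : a < c) : (a, b) ≠ (c, e) := fun h => hac.ne (congrArg Prod.fst h)
  refine ⟨fun a b c e hab hce hac hbe => ?_, fun a b c e hab hce hac heb => ?_⟩
  · by_contra hdiag
    refine hd a c b e hac hbe ?_
    rw [minor2LeadingExp, if_neg hdiag]
    exact mon2_le_of_mem_support (hne hac) hab hce
  · by_contra hdiag
    refine hd a c e b hac heb ?_
    rw [minor2LeadingExp, if_pos (by tauto)]
    exact mon2_le_of_mem_support (hne hac) hab hce

variable {K : Type*} [Field K] {n : ℕ}

theorem segreIdeal_le_ker : segreIdeal K n ≤ RingHom.ker (segreMap K (Fin n) (Fin n)) := by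
  rw [segreIdeal, Ideal.span_le]
  rintro _ ⟨i, h, j, k, -, -, rfl⟩
  simp only [SetLike.mem_coe, RingHom.mem_ker, minor2, segreMap, map_sub, map_mul, aeval_X]
  ring

theorem eq_zero_of_mem_segreIdeal {r : MvPolynomial (Fin n × Fin n) K} (hr : r ∈ segreIdeal K n)
    (hstd : ∀ d ∈ r.support, IsStandard (d.support : Set (Fin n × Fin n))) : r = 0 :=
  eq_zero_of_segreMap_eq_zero
    (fun d hd e he h => eq_of_isStandard_of_mapDomain_eq (hstd d hd) (hstd e he)
      (mapDomain_eq_of_segreExponent_eq h).1 (mapDomain_eq_of_segreExponent_eq h).2)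
    (segreIdeal_le_ker hr)

theorem Hideal_eq_span_degree_minor2 {m : MonomialOrder (Fin n × Fin n)}
    (hdeg : ∀ i h j k : Fin n, i < h → j < k →
      m.degree (minor2 K n i h j k) = minor2LeadingExp i h j k) :
    Hideal K n = Ideal.span ((fun b => monomial (m.degree b) 1) ''
      {f | ∃ i h j k : Fin n, i < h ∧ j < k ∧ f = minor2 K n i h j k}) := by
  rw [Hideal]
  congr 1
  ext g
  simp only [Set.mem_ofPred_eq, Set.mem_image]
  constructor
  · rintro ⟨i, h, j, k, hih, hjk, hg⟩
    refine ⟨_, ⟨i, h, j, k, hih, hjk, rfl⟩, ?_⟩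
    rw [hdeg i h j k hih hjk, minor2LeadingExp]
    rcases hg with ⟨hc, rfl⟩ | ⟨hc, rfl⟩
    · rw [if_pos hc, X_mul_X_eq_monomial_mon2]
    · rw [if_neg (by tauto), X_mul_X_eq_monomial_mon2]
  · rintro ⟨_, ⟨i, h, j, k, hih, hjk, rfl⟩, rfl⟩
    refine ⟨i, h, j, k, hih, hjk, ?_⟩
    rw [hdeg i h j k hih hjk, minor2LeadingExp]
    by_cases hc : i = j ∨ h = k
    · exact Or.inl ⟨hc, by rw [if_pos hc, X_mul_X_eq_monomial_mon2]⟩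
    · exact Or.inr ⟨not_or.mp hc, by rw [if_neg hc, X_mul_X_eq_monomial_mon2]⟩

end Minors

theorem initial_segreIdeal_eq_Hideal_general (K : Type*) [Field K] (n : ℕ)
    (m : MonomialOrder (Fin n × Fin n))
    (hlead : ∀ i h j k : Fin n, i < h → j < k →
      ((i = j ∨ h = k) →
        IsLeadingMonomial m (minor2 K n i h j k) (mon2 (i, k) (h, j))) ∧
      ((i ≠ j ∧ h ≠ k) →
        IsLeadingMonomial m (minor2 K n i h j k) (mon2 (i, j) (h, k)))) :
    initialIdeal m (segreIdeal K n) = Hideal K n := by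
  have hminor (i h j k : Fin n) (hih : i < h) (hjk : j < k) :
      minor2 K n i h j k ≠ 0 ∧ m.degree (minor2 K n i h j k) = minor2LeadingExp i h j k := by
    rw [← m.isLeadingMonomial_iff, minor2LeadingExp]
    split_ifs with hc
    exacts [(hlead i h j k hih hjk).1 hc, (hlead i h j k hih hjk).2 (not_or.mp hc)]
  rw [segreIdeal, m.initialIdeal_span_eq_of_reduced_eq_zero,
    Hideal_eq_span_degree_minor2 fun i h j k hih hjk => (hminor i h j k hih hjk).2]
  · rintro _ ⟨i, h, j, k, hih, hjk, rfl⟩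
    exact isUnit_iff_ne_zero.mpr (m.leadingCoeff_ne_zero_iff.mpr (hminor i h j k hih hjk).1)
  · refine fun r hr hred => eq_zero_of_mem_segreIdeal hr fun d hd =>
      isStandard_support_of_forall_not_le fun i h j k hih hjk hle => ?_
    exact hred d hd _ ⟨i, h, j, k, hih, hjk, rfl⟩ ((hminor i h j k hih hjk).2 ▸ hle)

/-- If `≻` is a monomial order on `K[x_{ij}]` such that for all `i < h`, `j < k`
the leading monomial of the 2-minor `x_{ij}x_{hk} - x_{ik}x_{hj}` is
`x_{ik}x_{hj}` when `i = j` or `h = k`, and `x_{ij}x_{hk}` when `i ≠ j` and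
`h ≠ k`, then the initial ideal of `I(2,n)` equals `H(2,n)`. -/
theorem initial_segreIdeal_eq_Hideal (K : Type*) [Field K] (n : ℕ) (hn : 2 ≤ n)
    (m : MonomialOrder (Fin n × Fin n))
    (hlead : ∀ i h j k : Fin n, i < h → j < k →
      ((i = j ∨ h = k) →
        IsLeadingMonomial m (minor2 K n i h j k) (mon2 (i, k) (h, j))) ∧
      ((i ≠ j ∧ h ≠ k) →
        IsLeadingMonomial m (minor2 K n i h j k) (mon2 (i, j) (h, k)))) :
    initialIdeal m (segreIdeal K n) = Hideal K n :=
  initial_segreIdeal_eq_Hideal_general K n m hlead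
end

section
/- For every integer n ≥ 2, every maximal admissible subset of V_n has exactly n − 1 elements, and the number of maximal admissible subsets of V_n equals the binomial coefficient C(2n−2, n−1). -/
/-!
Admissible sets are staircase paths: the row indices and the column indices of `S` are disjoint,
and as the row grows the column weakly decreases, so any two cells share a row, share a column,
or lie strictly NE–SW of each other. Counting the rows of `S` below `a` and the columns of `S`
above `b` gives the position of `(a, b)` along the path, which is strictly increasing; hence
`#S ≤ #rows + #cols - 1 ≤ n - 1`. In a maximal path every value of `[1, n]` except the top
column is entered by some step, as a new row or as a new column, since otherwise a cell could be
added; so the path has exactly `n - 1` cells. Such a path is determined by its multiset of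
rows: the multiplicity of a row is its number of cells, and the columns it occupies follow from
the number of column steps made before it. Every multiset of `n - 1` elements of `[1, n]`
arises this way, and by stars and bars there are `C(2n - 2, n - 1)` of them.
-/

/-- Membership in `V_n = {(a,b) : 1 ≤ a,b ≤ n, a ≠ b}`. -/
def VnMem (n : ℕ) (p : ℕ × ℕ) : Prop :=
  1 ≤ p.1 ∧ p.1 ≤ n ∧ 1 ≤ p.2 ∧ p.2 ≤ n ∧ p.1 ≠ p.2

/-- A subset `S ⊆ V_n` is admissible if for all `1 ≤ i < h ≤ n` and
`1 ≤ j < k ≤ n`: (1) whenever `i = j` or `h = k`, not both `(i,k)` and `(h,j)`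
lie in `S`; and (2) whenever `i ≠ j` and `h ≠ k`, not both `(i,j)` and `(h,k)`
lie in `S`. -/
def SegreAdmissible (n : ℕ) (S : Finset (ℕ × ℕ)) : Prop :=
  (∀ p ∈ S, VnMem n p) ∧
  ∀ i h j k : ℕ, 1 ≤ i → i < h → h ≤ n → 1 ≤ j → j < k → k ≤ n →
    ((i = j ∨ h = k) → ¬((i, k) ∈ S ∧ (h, j) ∈ S)) ∧
    ((i ≠ j ∧ h ≠ k) → ¬((i, j) ∈ S ∧ (h, k) ∈ S))

/-- A maximal admissible subset of `V_n`. -/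
def MaxSegreAdmissible (n : ℕ) (S : Finset (ℕ × ℕ)) : Prop :=
  SegreAdmissible n S ∧ ∀ T, SegreAdmissible n T → S ⊆ T → S = T

open Finset

section Rank

variable {α : Type*} [LinearOrder α] {s : Finset α} {a b : α}

lemma card_filter_lt_lt_card_filter_lt (ha : a ∈ s) (hab : a < b) :
    #{x ∈ s | x < a} < #{x ∈ s | x < b} :=
  card_lt_card <| (ssubset_iff_of_subset (monotone_filter_right s fun _ _ hx => hx.trans hab)).2
    ⟨a, by simp [ha, hab]⟩

lemma card_filter_lt_lt_card (ha : a ∈ s) : #{x ∈ s | x < a} < #s :=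
  card_lt_card <| filter_ssubset.2 ⟨a, ha, lt_irrefl a⟩

lemma card_filter_gt_anti (hab : a ≤ b) : #{x ∈ s | b < x} ≤ #{x ∈ s | a < x} :=
  card_le_card <| monotone_filter_right s fun _ _ hx => hab.trans_lt hx

lemma card_filter_gt_lt_card_filter_gt (hb : b ∈ s) (hab : a < b) :
    #{x ∈ s | b < x} < #{x ∈ s | a < x} :=
  card_lt_card <| (ssubset_iff_of_subset (monotone_filter_right s fun _ _ hx => hab.trans hx)).2
    ⟨b, by simp [hb, hab]⟩

lemma card_filter_gt_lt_card (hb : b ∈ s) : #{x ∈ s | b < x} < #s :=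
  card_lt_card <| filter_ssubset.2 ⟨b, hb, lt_irrefl b⟩

lemma injOn_card_filter_gt (s : Finset α) : Set.InjOn (fun b => #{x ∈ s | b < x}) s := by
  intro a ha b hb hab
  by_contra hne
  rcases lt_or_gt_of_ne hne with h | h
  · exact (card_filter_gt_lt_card_filter_gt hb h).ne' hab
  · exact (card_filter_gt_lt_card_filter_gt ha h).ne hab

lemma image_card_filter_gt (s : Finset α) : s.image (fun b => #{x ∈ s | b < x}) = range #s :=
  eq_of_subset_of_card_le
    (fun k hk => by
      obtain ⟨b, hb, rfl⟩ := mem_image.1 hk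
      exact mem_range.2 (card_filter_gt_lt_card hb))
    (by rw [card_image_of_injOn (injOn_card_filter_gt s), card_range])

lemma card_filter_card_filter_gt (s : Finset α) (P : ℕ → Prop) [DecidablePred P] :
    #{b ∈ s | P #{x ∈ s | b < x}} = #{k ∈ range #s | P k} := by
  rw [← image_card_filter_gt s, filter_image,
    card_image_of_injOn ((injOn_card_filter_gt s).mono (filter_subset _ _))]

end Rank

lemma Multiset.sum_filter_count_eq_countP {α : Type*} [DecidableEq α] (M : Multiset α)
    (P : α → Prop) [DecidablePred P] : ∑ x ∈ M.toFinset with P x, M.count x = M.countP P :=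
  Quotient.inductionOn M fun l => by simpa using Finset.sum_filter_count_eq_countP P l

lemma Multiset.countP_le_eq_countP_lt_add_count {α : Type*} [LinearOrder α] (M : Multiset α)
    (a : α) : M.countP (· ≤ a) = M.countP (· < a) + M.count a := by
  induction M using Multiset.induction with
  | empty => simp
  | cons x M ih =>
    simp only [Multiset.countP_cons, Multiset.count_cons, ih]
    grind

lemma Multiset.forall_mem_map_val {α : Type*} {s : Finset α} (m : Multiset s) :
    ∀ x ∈ m.map Subtype.val, x ∈ s := by
  intro x hx
  obtain ⟨y, -, rfl⟩ := Multiset.mem_map.1 hx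
  exact y.2

section Staircase

structure IsStaircase (n : ℕ) (S : Finset (ℕ × ℕ)) : Prop where
  fst_mem : ∀ p ∈ S, p.1 ∈ Icc 1 n
  snd_mem : ∀ p ∈ S, p.2 ∈ Icc 1 n
  fst_ne_snd : ∀ p ∈ S, ∀ q ∈ S, p.1 ≠ q.2
  snd_le_of_fst_lt : ∀ p ∈ S, ∀ q ∈ S, p.1 < q.1 → q.2 ≤ p.2

variable {n : ℕ} {S : Finset (ℕ × ℕ)}

lemma segreAdmissible_iff_isStaircase : SegreAdmissible n S ↔ IsStaircase n S := by
  constructor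
  · rintro ⟨hV, hS⟩
    have hanti : ∀ p ∈ S, ∀ q ∈ S, p.1 < q.1 → q.2 ≤ p.2 := by
      intro p hp q hq hpq
      by_contra! h
      obtain ⟨hp1, -, hp3, -, hp5⟩ := hV p hp
      obtain ⟨-, hq2, -, hq4, hq5⟩ := hV q hq
      exact (hS p.1 q.1 p.2 q.2 hp1 hpq hq2 hp3 h hq4).2 ⟨hp5, hq5⟩ ⟨hp, hq⟩
    have hcross : ∀ p ∈ S, ∀ q ∈ S, p.1 < q.1 → p.1 ≠ q.2 ∧ q.1 ≠ p.2 := by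
      intro p hp q hq hpq
      obtain ⟨hp1, -, -, hp4, hp5⟩ := hV p hp
      obtain ⟨-, hq2, hq3, -, hq5⟩ := hV q hq
      rcases (hanti p hp q hq hpq).lt_or_eq with h | h
      · have := (hS p.1 q.1 q.2 p.2 hp1 hpq hq2 hq3 h hp4).1
        exact ⟨fun e => this (.inl e) ⟨hp, hq⟩, fun e => this (.inr e) ⟨hp, hq⟩⟩
      · exact ⟨h ▸ hp5, h ▸ hq5⟩
    refine ⟨fun p hp => ?_, fun p hp => ?_, fun p hp q hq => ?_, hanti⟩
    · exact mem_Icc.2 ⟨(hV p hp).1, (hV p hp).2.1⟩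
    · exact mem_Icc.2 ⟨(hV p hp).2.2.1, (hV p hp).2.2.2.1⟩
    rcases lt_trichotomy p.1 q.1 with h | h | h
    · exact (hcross p hp q hq h).1
    · exact h ▸ (hV q hq).2.2.2.2
    · exact (hcross q hq p hp h).2
  · intro h
    refine ⟨fun p hp => ?_, fun i k j l _ hik _ _ hjl _ => ⟨?_, ?_⟩⟩
    · obtain ⟨h1, h2⟩ := mem_Icc.1 (h.fst_mem p hp)
      obtain ⟨h3, h4⟩ := mem_Icc.1 (h.snd_mem p hp)
      exact ⟨h1, h2, h3, h4, h.fst_ne_snd p hp p hp⟩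
    · rintro (rfl | rfl) ⟨h1, h2⟩
      · exact h.fst_ne_snd _ h1 _ h2 rfl
      · exact h.fst_ne_snd _ h2 _ h1 rfl
    · rintro - ⟨h1, h2⟩
      exact absurd (h.snd_le_of_fst_lt _ h1 _ h2 hik) (not_le.2 hjl)

def rows (S : Finset (ℕ × ℕ)) : Finset ℕ := S.image Prod.fst

def cols (S : Finset (ℕ × ℕ)) : Finset ℕ := S.image Prod.snd

def pathIndex (S : Finset (ℕ × ℕ)) (p : ℕ × ℕ) : ℕ :=
  #{x ∈ rows S | x < p.1} + #{y ∈ cols S | p.2 < y}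

lemma fst_mem_rows {p : ℕ × ℕ} (hp : p ∈ S) : p.1 ∈ rows S := mem_image_of_mem _ hp

lemma snd_mem_cols {p : ℕ × ℕ} (hp : p ∈ S) : p.2 ∈ cols S := mem_image_of_mem _ hp

lemma pathIndex_lt {p : ℕ × ℕ} (hp : p ∈ S) :
    pathIndex S p < #(rows S) + #(cols S) - 1 := by
  have := card_filter_lt_lt_card (fst_mem_rows hp)
  have := card_filter_gt_lt_card (snd_mem_cols hp)
  unfold pathIndex
  omega

namespace IsStaircase

lemma empty : IsStaircase n ∅ := ⟨by simp, by simp, by simp, by simp⟩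

lemma rows_subset (h : IsStaircase n S) : rows S ⊆ Icc 1 n := image_subset_iff.2 h.fst_mem

lemma cols_subset (h : IsStaircase n S) : cols S ⊆ Icc 1 n := image_subset_iff.2 h.snd_mem

lemma disjoint_rows_cols (h : IsStaircase n S) : Disjoint (rows S) (cols S) := by
  simp only [rows, cols, disjoint_left, mem_image]
  rintro _ ⟨p, hp, rfl⟩ ⟨q, hq, hpq⟩
  exact h.fst_ne_snd p hp q hq hpq.symm

lemma card_rows_add_card_cols_le (h : IsStaircase n S) : #(rows S) + #(cols S) ≤ n := by
  simpa [← card_union_of_disjoint h.disjoint_rows_cols] using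
    card_le_card (union_subset h.rows_subset h.cols_subset)

lemma pathIndex_lt_pathIndex (h : IsStaircase n S) {p q : ℕ × ℕ} (hp : p ∈ S) (hq : q ∈ S)
    (hpq : p.1 < q.1 ∨ p.1 = q.1 ∧ q.2 < p.2) :
    pathIndex S p < pathIndex S q := by
  unfold pathIndex
  rcases hpq with hlt | ⟨heq, hlt⟩
  · have := card_filter_lt_lt_card_filter_lt (fst_mem_rows hp) hlt
    have := card_filter_gt_anti (s := cols S) (h.snd_le_of_fst_lt p hp q hq hlt)
    omega
  · have := card_filter_gt_lt_card_filter_gt (snd_mem_cols hp) hlt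
    rw [heq]
    omega

lemma injOn_pathIndex (h : IsStaircase n S) : Set.InjOn (pathIndex S) S := by
  intro p hp q hq hpq
  rcases lt_trichotomy p.1 q.1 with h1 | h1 | h1
  · exact absurd hpq (h.pathIndex_lt_pathIndex hp hq (.inl h1)).ne
  · rcases lt_trichotomy p.2 q.2 with h2 | h2 | h2
    · exact absurd hpq (h.pathIndex_lt_pathIndex hq hp (.inr ⟨h1.symm, h2⟩)).ne'
    · exact Prod.ext h1 h2
    · exact absurd hpq (h.pathIndex_lt_pathIndex hp hq (.inr ⟨h1, h2⟩)).ne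
  · exact absurd hpq (h.pathIndex_lt_pathIndex hq hp (.inl h1)).ne'

lemma card_le_card_rows_add_card_cols (h : IsStaircase n S) :
    #S ≤ #(rows S) + #(cols S) - 1 := by
  simpa using card_le_card_of_injOn _ (fun p hp => mem_range.2 (pathIndex_lt hp)) h.injOn_pathIndex

lemma card_le (h : IsStaircase n S) : #S ≤ n - 1 :=
  h.card_le_card_rows_add_card_cols.trans (Nat.sub_le_sub_right h.card_rows_add_card_cols_le 1)

lemma insert (h : IsStaircase n S) {a b : ℕ} (ha : a ∈ Icc 1 n) (hb : b ∈ Icc 1 n) (hab : a ≠ b)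
    (ha' : a ∉ cols S) (hb' : b ∉ rows S) (hbefore : ∀ p ∈ S, p.1 < a → b ≤ p.2)
    (hafter : ∀ p ∈ S, a < p.1 → p.2 ≤ b) : IsStaircase n (insert (a, b) S) where
  fst_mem := forall_mem_insert _ _ _ |>.2 ⟨ha, h.fst_mem⟩
  snd_mem := forall_mem_insert _ _ _ |>.2 ⟨hb, h.snd_mem⟩
  fst_ne_snd := by
    simp only [forall_mem_insert]
    exact ⟨⟨hab, fun q hq e => ha' (e ▸ snd_mem_cols hq)⟩,
      fun p hp => ⟨fun e => hb' (e ▸ fst_mem_rows hp), h.fst_ne_snd p hp⟩⟩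
  snd_le_of_fst_lt := by
    simp only [forall_mem_insert]
    exact ⟨⟨fun h => absurd h (lt_irrefl a), hafter⟩,
      fun p hp => ⟨hbefore p hp, h.snd_le_of_fst_lt p hp⟩⟩

lemma exists_col_between (h : IsStaircase n S) (hne : S.Nonempty) (x : ℕ) :
    ∃ c ∈ cols S, (∀ p ∈ S, p.1 < x → c ≤ p.2) ∧ (∀ p ∈ S, x ≤ p.1 → p.2 ≤ c) := by
  by_cases hbefore : ∃ p ∈ S, p.1 < x
  · obtain ⟨q, hq, hmin⟩ := exists_min_image {p ∈ S | p.1 < x} Prod.snd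
      (by simpa [Finset.Nonempty] using hbefore)
    rw [mem_filter] at hq
    exact ⟨q.2, snd_mem_cols hq.1, fun p hp hpx => hmin p (mem_filter.2 ⟨hp, hpx⟩),
      fun p hp hxp => h.snd_le_of_fst_lt q hq.1 p hp (hq.2.trans_le hxp)⟩
  · push Not at hbefore
    obtain ⟨q, hq, hmax⟩ := exists_max_image S Prod.snd hne
    exact ⟨q.2, snd_mem_cols hq, fun p hp hpx => absurd hpx (not_lt.2 (hbefore p hp)),
      fun p hp _ => hmax p hp⟩

end IsStaircase

-- Every cell but the first is reached from its predecessor by a step into a new row (it is then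
-- the cell of largest column in that row) or into a new column: the label is that row or column.
open Classical in
noncomputable def entryLabel (S : Finset (ℕ × ℕ)) (p : ℕ × ℕ) : ℕ :=
  if ∀ q ∈ S, q.1 = p.1 → q.2 ≤ p.2 then p.1 else p.2

namespace MaxSegreAdmissible

lemma isStaircase (hS : MaxSegreAdmissible n S) : IsStaircase n S :=
  segreAdmissible_iff_isStaircase.1 hS.1

lemma mem_of_isStaircase_insert (hS : MaxSegreAdmissible n S) {v : ℕ × ℕ}
    (hv : IsStaircase n (insert v S)) : v ∈ S := by
  rw [hS.2 _ (segreAdmissible_iff_isStaircase.2 hv) (subset_insert v S)]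
  exact mem_insert_self v S

lemma exists_mem_forall_snd_le (hS : MaxSegreAdmissible n S) (hne : S.Nonempty) {x : ℕ}
    (hx : x ∈ Icc 1 n) (hxc : x ∉ cols S) : ∃ c, (x, c) ∈ S ∧ ∀ q ∈ S, q.1 = x → q.2 ≤ c := by
  have h := hS.isStaircase
  obtain ⟨c, hc, hbefore, hafter⟩ := h.exists_col_between hne x
  have hins := h.insert hx (h.cols_subset hc) (fun e => hxc (e ▸ hc)) hxc
    (disjoint_right.1 h.disjoint_rows_cols hc) hbefore (fun q hq hxq => hafter q hq hxq.le)
  exact ⟨c, hS.mem_of_isStaircase_insert hins, fun q hq hqx => hafter q hq hqx.ge⟩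

lemma exists_mem_snd_lt (hS : MaxSegreAdmissible n S) {y t : ℕ} (hy : y ∈ cols S)
    (ht : t ∈ cols S) (hyt : y < t) : ∃ r, (r, y) ∈ S ∧ ∃ q ∈ S, q.1 = r ∧ y < q.2 := by
  have h := hS.isStaircase
  obtain ⟨q, hq, hmax⟩ := exists_max_image {p ∈ S | y < p.2} Prod.fst <| by
    obtain ⟨p, hp, rfl⟩ := mem_image.1 ht
    exact ⟨p, mem_filter.2 ⟨hp, hyt⟩⟩
  rw [mem_filter] at hq
  have hafter : ∀ p ∈ S, q.1 < p.1 → p.2 ≤ y := fun p hp hqp => by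
    by_contra! hyp
    exact absurd (hmax p (mem_filter.2 ⟨hp, hyp⟩)) (not_le.2 hqp)
  have hins := h.insert (h.fst_mem q hq.1) (h.cols_subset hy)
    (fun e => disjoint_left.1 h.disjoint_rows_cols (fst_mem_rows hq.1) (e ▸ hy))
    (disjoint_left.1 h.disjoint_rows_cols (fst_mem_rows hq.1))
    (disjoint_right.1 h.disjoint_rows_cols hy)
    (fun p hp hpq => hq.2.le.trans (h.snd_le_of_fst_lt p hp q hq.1 hpq)) hafter
  exact ⟨q.1, hS.mem_of_isStaircase_insert hins, q, hq.1, rfl, hq.2⟩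

lemma surjOn_entryLabel (hS : MaxSegreAdmissible n S) {t : ℕ × ℕ} (ht : t ∈ S)
    (htmax : ∀ p ∈ S, p.2 ≤ t.2) : Set.SurjOn (entryLabel S) S ((Icc 1 n).erase t.2) := by
  intro z hz
  obtain ⟨hzt, hz⟩ := mem_erase.1 hz
  by_cases hzc : z ∈ cols S
  · obtain ⟨p, hp, rfl⟩ := mem_image.1 hzc
    obtain ⟨r, hr, q, hq, rfl, hzq⟩ :=
      hS.exists_mem_snd_lt hzc (snd_mem_cols ht) ((htmax p hp).lt_of_ne hzt)
    refine ⟨_, hr, if_neg ?_⟩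
    push Not
    exact ⟨q, hq, rfl, hzq⟩
  · obtain ⟨c, hc, hmax⟩ := hS.exists_mem_forall_snd_le ⟨t, ht⟩ hz hzc
    exact ⟨_, hc, if_pos hmax⟩

lemma card_eq (hS : MaxSegreAdmissible n S) : #S = n - 1 := by
  refine le_antisymm hS.isStaircase.card_le ?_
  rcases S.eq_empty_or_nonempty with rfl | hne
  · by_contra! hn
    rw [card_empty] at hn
    have h12 := (IsStaircase.empty (n := n)).insert (a := 1) (b := 2)
      (mem_Icc.2 ⟨le_rfl, by omega⟩) (mem_Icc.2 ⟨by omega, by omega⟩) (by decide)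
      (by simp [cols]) (by simp [rows]) (by simp) (by simp)
    simpa using hS.mem_of_isStaircase_insert h12
  · obtain ⟨t, ht, htmax⟩ := exists_max_image S Prod.snd hne
    calc n - 1 = #((Icc 1 n).erase t.2) := by
          rw [card_erase_of_mem (hS.isStaircase.snd_mem t ht), Nat.card_Icc]; omega
      _ ≤ #S := card_le_card_of_surjOn _ (hS.surjOn_entryLabel ht htmax)

end MaxSegreAdmissible

lemma maxSegreAdmissible_iff : MaxSegreAdmissible n S ↔ IsStaircase n S ∧ #S = n - 1 := by
  refine ⟨fun hS => ⟨hS.isStaircase, hS.card_eq⟩, fun ⟨h, hc⟩ =>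
    ⟨segreAdmissible_iff_isStaircase.2 h, fun T hT hST => eq_of_subset_of_card_le hST ?_⟩⟩
  rw [hc]
  exact (segreAdmissible_iff_isStaircase.1 hT).card_le

def colStepsBefore (M : Multiset ℕ) (a : ℕ) : ℕ := ∑ x ∈ M.toFinset with x < a, (M.count x - 1)

lemma countP_lt_eq_colStepsBefore_add (M : Multiset ℕ) (a : ℕ) :
    M.countP (· < a) = colStepsBefore M a + #{x ∈ M.toFinset | x < a} := by
  rw [← M.sum_filter_count_eq_countP, colStepsBefore, card_eq_sum_ones, ← sum_add_distrib]
  refine sum_congr rfl fun x hx => (Nat.sub_add_cancel ?_).symm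
  exact Multiset.one_le_count_iff_mem.2 (Multiset.mem_toFinset.1 (mem_filter.1 hx).1)

lemma colStepsBefore_add_count_le {M : Multiset ℕ} {a b : ℕ} (ha : a ∈ M) (hab : a < b) :
    colStepsBefore M a + M.count a ≤ colStepsBefore M b + 1 := by
  have hsub : insert a {x ∈ M.toFinset | x < a} ⊆ {x ∈ M.toFinset | x < b} :=
    insert_subset (mem_filter.2 ⟨Multiset.mem_toFinset.2 ha, hab⟩)
      (monotone_filter_right _ fun _ _ hx => hx.trans hab)
  have := sum_le_sum_of_subset (f := fun x => M.count x - 1) hsub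
  rw [sum_insert (by simp)] at this
  have := Multiset.one_le_count_iff_mem.2 ha
  unfold colStepsBefore
  omega

def rowMultiset (S : Finset (ℕ × ℕ)) : Multiset ℕ := S.val.map Prod.fst

lemma toFinset_rowMultiset : (rowMultiset S).toFinset = rows S := rfl

lemma card_rowMultiset : Multiset.card (rowMultiset S) = #S := Multiset.card_map _ _

lemma countP_rowMultiset (P : ℕ → Prop) [DecidablePred P] :
    (rowMultiset S).countP P = #{q ∈ S | P q.1} :=
  Multiset.countP_map _ _ _

-- Row `a` occupies the `M.count a` columns that follow the `colStepsBefore M a` columns already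
-- passed, columns being taken from the top.
def staircaseOfRows (n : ℕ) (M : Multiset ℕ) : Finset (ℕ × ℕ) :=
  {p ∈ M.toFinset ×ˢ (Icc 1 n \ M.toFinset) |
    colStepsBefore M p.1 ≤ #{y ∈ Icc 1 n \ M.toFinset | p.2 < y} ∧
      #{y ∈ Icc 1 n \ M.toFinset | p.2 < y} < colStepsBefore M p.1 + M.count p.1}

namespace IsStaircase

lemma forall_mem_rowMultiset (h : IsStaircase n S) : ∀ x ∈ rowMultiset S, x ∈ Icc 1 n := by
  simpa [rowMultiset] using fun p hp => h.fst_mem p hp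

lemma cols_eq_sdiff (h : IsStaircase n S) (hc : #S = n - 1) (hne : S.Nonempty) :
    cols S = Icc 1 n \ rows S := by
  have := h.card_le_card_rows_add_card_cols
  have := h.card_rows_add_card_cols_le
  have := hne.card_pos
  refine eq_of_subset_of_card_le (fun y hy => mem_sdiff.2 ⟨h.cols_subset hy,
    disjoint_right.1 h.disjoint_rows_cols hy⟩) ?_
  rw [card_sdiff_of_subset h.rows_subset, Nat.card_Icc]
  omega

lemma card_filter_fst_lt_le_pathIndex (h : IsStaircase n S) {p : ℕ × ℕ} (hp : p ∈ S) :
    #{q ∈ S | q.1 < p.1} ≤ pathIndex S p := by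
  simpa using card_le_card_of_injOn _
    (fun q hq => mem_range.2 (h.pathIndex_lt_pathIndex (mem_filter.1 hq).1 hp
      (.inl (mem_filter.1 hq).2)))
    (h.injOn_pathIndex.mono (filter_subset _ _))

lemma pathIndex_lt_card_filter_fst_le (h : IsStaircase n S) (hc : #S = n - 1) {p : ℕ × ℕ}
    (hp : p ∈ S) : pathIndex S p < #{q ∈ S | q.1 ≤ p.1} := by
  have hbound : ∀ q ∈ S, pathIndex S q < n - 1 := fun q hq =>
    (pathIndex_lt hq).trans_le (Nat.sub_le_sub_right h.card_rows_add_card_cols_le 1)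
  have hlater := card_le_card_of_injOn (s := {q ∈ S | ¬ q.1 ≤ p.1})
    (t := Ioo (pathIndex S p) (n - 1)) _
    (fun q hq => mem_Ioo.2 ⟨h.pathIndex_lt_pathIndex hp (mem_filter.1 hq).1
      (.inl (not_le.1 (mem_filter.1 hq).2)), hbound q (mem_filter.1 hq).1⟩)
    (h.injOn_pathIndex.mono (filter_subset _ _))
  have := card_filter_add_card_filter_not (s := S) (p := fun q => q.1 ≤ p.1)
  have := hbound p hp
  rw [Nat.card_Ioo] at hlater
  omega

lemma subset_staircaseOfRows (h : IsStaircase n S) (hc : #S = n - 1) :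
    S ⊆ staircaseOfRows n (rowMultiset S) := by
  intro p hp
  rw [staircaseOfRows, toFinset_rowMultiset, ← h.cols_eq_sdiff hc ⟨p, hp⟩, mem_filter,
    mem_product]
  refine ⟨⟨fst_mem_rows hp, snd_mem_cols hp⟩, ?_⟩
  have hlt := countP_lt_eq_colStepsBefore_add (rowMultiset S) p.1
  have hle := (rowMultiset S).countP_le_eq_countP_lt_add_count p.1
  simp only [countP_rowMultiset, toFinset_rowMultiset] at hlt hle
  -- `pathIndex S p` counts the cells before `p`: it lies between the numbers of cells in rows
  -- `< p.1` and in rows `≤ p.1`.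
  have := h.card_filter_fst_lt_le_pathIndex hp
  have := h.pathIndex_lt_card_filter_fst_le hc hp
  unfold pathIndex at *
  omega

end IsStaircase

section staircaseOfRows

variable {M : Multiset ℕ}

lemma mem_staircaseOfRows {p : ℕ × ℕ} : p ∈ staircaseOfRows n M ↔
    p.1 ∈ M ∧ (p.2 ∈ Icc 1 n ∧ p.2 ∉ M) ∧
      colStepsBefore M p.1 ≤ #{y ∈ Icc 1 n \ M.toFinset | p.2 < y} ∧
      #{y ∈ Icc 1 n \ M.toFinset | p.2 < y} < colStepsBefore M p.1 + M.count p.1 := by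
  simp only [staircaseOfRows, mem_filter, mem_product, mem_sdiff, Multiset.mem_toFinset]
  tauto

lemma isStaircase_staircaseOfRows (hM : ∀ x ∈ M, x ∈ Icc 1 n) :
    IsStaircase n (staircaseOfRows n M) where
  fst_mem p hp := hM _ (mem_staircaseOfRows.1 hp).1
  snd_mem p hp := (mem_staircaseOfRows.1 hp).2.1.1
  fst_ne_snd p hp q hq e := (mem_staircaseOfRows.1 hq).2.1.2 (e ▸ (mem_staircaseOfRows.1 hp).1)
  snd_le_of_fst_lt p hp q hq hpq := by
    obtain ⟨hpM, -, -, hp⟩ := mem_staircaseOfRows.1 hp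
    obtain ⟨-, hqC, hq, -⟩ := mem_staircaseOfRows.1 hq
    by_contra! hlt
    have := card_filter_gt_lt_card_filter_gt
      (mem_sdiff.2 ⟨hqC.1, fun h => hqC.2 (Multiset.mem_toFinset.1 h)⟩) hlt
    have := colStepsBefore_add_count_le hpM hpq
    omega

lemma colStepsBefore_add_count_le_card (hM : ∀ x ∈ M, x ∈ Icc 1 n)
    (hcard : Multiset.card M = n - 1) {a : ℕ} (ha : a ∈ M) :
    colStepsBefore M a + M.count a ≤ #(Icc 1 n \ M.toFinset) := by
  have hlt : ∀ x ∈ M, x < n + 1 := fun x hx => Nat.lt_succ_of_le (mem_Icc.1 (hM x hx)).2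
  have hsteps := colStepsBefore_add_count_le ha (hlt a ha)
  have htotal := countP_lt_eq_colStepsBefore_add M (n + 1)
  rw [Multiset.countP_eq_card.2 hlt,
    filter_true_of_mem fun x hx => hlt x (Multiset.mem_toFinset.1 hx)] at htotal
  rw [card_sdiff_of_subset fun x hx => hM x (Multiset.mem_toFinset.1 hx), Nat.card_Icc]
  have := M.toFinset_card_le
  have := Multiset.one_le_count_iff_mem.2 ha
  have := M.count_le_card a
  omega

lemma card_filter_staircaseOfRows_fst_eq (hM : ∀ x ∈ M, x ∈ Icc 1 n)
    (hcard : Multiset.card M = n - 1) (a : ℕ) :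
    #{p ∈ staircaseOfRows n M | p.1 = a} = M.count a := by
  by_cases ha : a ∈ M
  swap
  · rw [Multiset.count_eq_zero.2 ha, card_eq_zero, filter_eq_empty_iff]
    exact fun p hp hpa => ha (hpa ▸ (mem_staircaseOfRows.1 hp).1)
  have hbound := colStepsBefore_add_count_le_card hM hcard ha
  set C := Icc 1 n \ M.toFinset
  set e := colStepsBefore M a
  have hfiber : {p ∈ staircaseOfRows n M | p.1 = a} =
      {b ∈ C | e ≤ #{y ∈ C | b < y} ∧ #{y ∈ C | b < y} < e + M.count a}.map
        ⟨(a, ·), Prod.mk_right_injective a⟩ := by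
    ext ⟨x, b⟩
    simp only [mem_filter, mem_staircaseOfRows, mem_map, Function.Embedding.coeFn_mk,
      Prod.mk.injEq, C, e, mem_sdiff, Multiset.mem_toFinset]
    constructor
    · rintro ⟨⟨-, hb, hlo, hhi⟩, rfl⟩
      exact ⟨b, ⟨hb, hlo, hhi⟩, rfl, rfl⟩
    · rintro ⟨b, ⟨hb, hlo, hhi⟩, rfl, rfl⟩
      exact ⟨⟨ha, hb, hlo, hhi⟩, rfl⟩
  have hrange : {k ∈ range #C | e ≤ k ∧ k < e + M.count a} = Ico e (e + M.count a) := by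
    ext k
    simp only [mem_filter, mem_range, mem_Ico]
    omega
  rw [hfiber, card_map, card_filter_card_filter_gt C (fun k => e ≤ k ∧ k < e + M.count a), hrange,
    Nat.card_Ico]
  omega

lemma rowMultiset_staircaseOfRows (hM : ∀ x ∈ M, x ∈ Icc 1 n)
    (hcard : Multiset.card M = n - 1) : rowMultiset (staircaseOfRows n M) = M := by
  ext a
  rw [rowMultiset, Multiset.count_map, ← card_filter_staircaseOfRows_fst_eq hM hcard a, card_def,
    filter_val]
  simp only [eq_comm]

lemma card_staircaseOfRows (hM : ∀ x ∈ M, x ∈ Icc 1 n) (hcard : Multiset.card M = n - 1) :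
    #(staircaseOfRows n M) = n - 1 := by
  rw [← card_rowMultiset, rowMultiset_staircaseOfRows hM hcard, hcard]

end staircaseOfRows

lemma IsStaircase.staircaseOfRows_rowMultiset (h : IsStaircase n S) (hc : #S = n - 1) :
    staircaseOfRows n (rowMultiset S) = S := by
  refine (eq_of_subset_of_card_le (h.subset_staircaseOfRows hc) ?_).symm
  rw [card_staircaseOfRows h.forall_mem_rowMultiset (card_rowMultiset.trans hc), hc]

def staircaseOfSym (n : ℕ) (m : Sym (Icc 1 n) (n - 1)) : Finset (ℕ × ℕ) :=
  staircaseOfRows n ((m : Multiset (Icc 1 n)).map Subtype.val)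

lemma rowMultiset_staircaseOfSym (m : Sym (Icc 1 n) (n - 1)) :
    rowMultiset (staircaseOfSym n m) = (m : Multiset (Icc 1 n)).map Subtype.val :=
  rowMultiset_staircaseOfRows (Multiset.forall_mem_map_val _) (by simp)

lemma staircaseOfSym_injective : Function.Injective (staircaseOfSym n) := fun m₁ m₂ heq =>
  Sym.coe_injective <| Multiset.map_injective Subtype.val_injective <| by
    simpa only [rowMultiset_staircaseOfSym] using congrArg rowMultiset heq

lemma range_staircaseOfSym : Set.range (staircaseOfSym n) = {S | MaxSegreAdmissible n S} := by
  ext S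
  rw [Set.mem_ofPred_eq, maxSegreAdmissible_iff]
  constructor
  · rintro ⟨m, rfl⟩
    exact ⟨isStaircase_staircaseOfRows (Multiset.forall_mem_map_val _),
      card_staircaseOfRows (Multiset.forall_mem_map_val _) (by simp)⟩
  · rintro ⟨h, hc⟩
    have hcard := card_rowMultiset.trans hc
    lift rowMultiset S to Multiset (Icc 1 n) using h.forall_mem_rowMultiset with M hM
    refine ⟨⟨M, by simpa [← hM] using hcard⟩, ?_⟩
    show staircaseOfRows n (M.map Subtype.val) = S
    rw [hM, h.staircaseOfRows_rowMultiset hc]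

end Staircase

theorem card_maxSegreAdmissible_general (n : ℕ) :
    (∀ S, MaxSegreAdmissible n S → S.card = n - 1) ∧
    {S : Finset (ℕ × ℕ) | MaxSegreAdmissible n S}.ncard
      = Nat.choose (2 * n - 2) (n - 1) := by
  refine ⟨fun S hS => hS.card_eq, ?_⟩
  rw [← range_staircaseOfSym, Set.ncard_range_of_injective staircaseOfSym_injective,
    Nat.card_eq_fintype_card, Sym.card_sym_eq_choose, Fintype.card_coe, Nat.card_Icc]
  congr 1
  omega

/-- Every maximal admissible subset of `V_n` has exactly `n - 1` elements, and
the number of maximal admissible subsets of `V_n` is `C(2n-2, n-1)`. -/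
theorem card_maxSegreAdmissible (n : ℕ) (hn : 2 ≤ n) :
    (∀ S, MaxSegreAdmissible n S → S.card = n - 1) ∧
    {S : Finset (ℕ × ℕ) | MaxSegreAdmissible n S}.ncard
      = Nat.choose (2 * n - 2) (n - 1) :=
  card_maxSegreAdmissible_general n
end

section
/- For every integer n ≥ 2, every maximal admissible subset S of V_n, and every element x ∈ S, there are exactly two maximal admissible subsets of V_n that contain S ∖ {x}. -/
def Compat (y w : ℕ × ℕ) : Prop :=
  y.1 ≠ w.2 ∧ w.1 ≠ y.2 ∧ (y.1 < w.1 → w.2 ≤ y.2) ∧ (w.1 < y.1 → y.2 ≤ w.2)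

def Adm (n : ℕ) (S : Finset (ℕ × ℕ)) : Prop :=
  (∀ p ∈ S, VnMem n p) ∧ ∀ p ∈ S, ∀ q ∈ S, Compat p q

lemma compat_comm {y w : ℕ × ℕ} (h : Compat y w) : Compat w y :=
  ⟨h.2.1, h.1, h.2.2.2, h.2.2.1⟩

lemma adm_iff (n : ℕ) (S : Finset (ℕ × ℕ)) : SegreAdmissible n S ↔ Adm n S := by
  constructor
  · rintro ⟨hV, hrel⟩
    have hcross : ∀ p ∈ S, ∀ q ∈ S, p.1 ≠ q.2 := by
      rintro ⟨a, b⟩ hp ⟨c, d⟩ hq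
      obtain ⟨ha1, ha2, hb1, hb2, hab⟩ := hV _ hp
      obtain ⟨hc1, hc2, hd1, hd2, hcd⟩ := hV _ hq
      simp only at ha1 ha2 hb1 hb2 hab hc1 hc2 hd1 hd2 hcd ⊢
      intro had
      have hq' : (c, a) ∈ S := by rwa [← had] at hq
      have hcd' : c ≠ a := by omega
      rcases Nat.lt_or_ge a b with hb | hb
      · rcases Nat.lt_or_ge a c with hc | hc
        · exact (hrel a c a b ha1 hc hc2 ha1 hb hb2).1 (Or.inl rfl) ⟨hp, hq'⟩
        · have hc' : c < a := lt_of_le_of_ne hc hcd'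
          exact (hrel c a a b hc1 hc' ha2 ha1 hb hb2).2 ⟨hcd', hab⟩ ⟨hq', hp⟩
      · have hb' : b < a := lt_of_le_of_ne hb hab.symm
        rcases Nat.lt_or_ge a c with hc | hc
        · exact (hrel a c b a ha1 hc hc2 hb1 hb' ha2).2 ⟨hab, hcd'⟩ ⟨hp, hq'⟩
        · have hc' : c < a := lt_of_le_of_ne hc hcd'
          exact (hrel c a b a hc1 hc' ha2 hb1 hb' ha2).1 (Or.inr rfl) ⟨hq', hp⟩
    have hchain : ∀ p ∈ S, ∀ q ∈ S, p.1 < q.1 → q.2 ≤ p.2 := by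
      rintro ⟨a, b⟩ hp ⟨c, d⟩ hq hac
      obtain ⟨ha1, ha2, hb1, hb2, hab⟩ := hV _ hp
      obtain ⟨hc1, hc2, hd1, hd2, hcd⟩ := hV _ hq
      simp only at ha1 ha2 hb1 hb2 hab hc1 hc2 hd1 hd2 hcd hac ⊢
      by_contra hbd
      push_neg at hbd
      exact (hrel a c b d ha1 hac hc2 hb1 hbd hd2).2 ⟨hab, hcd⟩ ⟨hp, hq⟩
    exact ⟨hV, fun p hp q hq => ⟨hcross p hp q hq, hcross q hq p hp,
      hchain p hp q hq, hchain q hq p hp⟩⟩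
  · rintro ⟨hV, hC⟩
    refine ⟨hV, ?_⟩
    intro i h j k _ hih _ _ hjk _
    constructor
    · rintro (rfl | rfl) ⟨h1, h2⟩
      · exact (hC _ h1 _ h2).1 rfl
      · exact (hC _ h2 _ h1).1 rfl
    · rintro ⟨hij, hhk⟩ ⟨h1, h2⟩
      have := (hC _ h1 _ h2).2.2.1 hih
      omega

lemma adm_subset {n : ℕ} {S T : Finset (ℕ × ℕ)} (h : Adm n S) (hTS : T ⊆ S) : Adm n T :=
  ⟨fun p hp => h.1 p (hTS hp), fun p hp q hq => h.2 p (hTS hp) q (hTS hq)⟩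

lemma compat_self {n : ℕ} {y : ℕ × ℕ} (hy : VnMem n y) : Compat y y :=
  ⟨hy.2.2.2.2, hy.2.2.2.2, fun h => absurd h (lt_irrefl _), fun h => absurd h (lt_irrefl _)⟩

lemma adm_insert_iff {n : ℕ} {S : Finset (ℕ × ℕ)} {y : ℕ × ℕ} :
    Adm n (insert y S) ↔ Adm n S ∧ VnMem n y ∧ ∀ w ∈ S, Compat y w := by
  constructor
  · intro h
    exact ⟨adm_subset h (Finset.subset_insert _ _), h.1 y (Finset.mem_insert_self _ _),
      fun w hw => h.2 y (Finset.mem_insert_self _ _) w (Finset.mem_insert_of_mem hw)⟩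
  · rintro ⟨hS, hy, hcomp⟩
    refine ⟨?_, ?_⟩
    · intro p hp
      rcases Finset.mem_insert.1 hp with rfl | hp
      · exact hy
      · exact hS.1 p hp
    · intro p hp q hq
      rcases Finset.mem_insert.1 hp with hp' | hp' <;> rcases Finset.mem_insert.1 hq with hq' | hq'
      · subst hp'; subst hq'; exact compat_self hy
      · subst hp'; exact hcomp q hq'
      · subst hq'; exact compat_comm (hcomp p hp')
      · exact hS.2 p hp' q hq'

/-- The set of row and column indices used by `S`. -/
def idx (S : Finset (ℕ × ℕ)) : Finset ℕ := S.image Prod.fst ∪ S.image Prod.snd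

lemma mem_idx {S : Finset (ℕ × ℕ)} {m : ℕ} :
    m ∈ idx S ↔ (∃ w ∈ S, w.1 = m) ∨ (∃ w ∈ S, w.2 = m) := by
  simp [idx]

lemma idx_mono {S T : Finset (ℕ × ℕ)} (h : S ⊆ T) : idx S ⊆ idx T := by
  intro m hm
  rw [mem_idx] at hm ⊢
  rcases hm with ⟨w, hw, h1⟩ | ⟨w, hw, h1⟩
  · exact Or.inl ⟨w, h hw, h1⟩
  · exact Or.inr ⟨w, h hw, h1⟩

lemma idx_subset_Icc {n : ℕ} {S : Finset (ℕ × ℕ)} (h : Adm n S) :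
    idx S ⊆ Finset.Icc 1 n := by
  intro m hm
  rw [mem_idx] at hm
  rcases hm with ⟨w, hw, h1⟩ | ⟨w, hw, h1⟩ <;>
    · obtain ⟨a1, a2, a3, a4, a5⟩ := h.1 w hw
      rw [Finset.mem_Icc]; omega

/-- A chain has a maximum element. -/
lemma adm_max {n : ℕ} {S : Finset (ℕ × ℕ)} (h : Adm n S) (hne : S.Nonempty) :
    ∃ m ∈ S, ∀ p ∈ S, p.1 ≤ m.1 ∧ m.2 ≤ p.2 := by
  obtain ⟨m, hm, hmax⟩ := S.exists_max_image (fun p => p.1 * (n + 2) + (n + 2 - p.2)) hne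
  refine ⟨m, hm, fun p hp => ?_⟩
  have hkey := hmax p hp
  obtain ⟨a1, a2, a3, a4, a5⟩ := h.1 p hp
  obtain ⟨b1, b2, b3, b4, b5⟩ := h.1 m hm
  have hc := h.2 p hp m hm
  rcases Nat.lt_trichotomy p.1 m.1 with hlt | heq | hgt
  · exact ⟨le_of_lt hlt, hc.2.2.1 hlt⟩
  · constructor
    · omega
    · rw [heq] at hkey; omega
  · have hmul : (m.1 + 1) * (n + 2) ≤ p.1 * (n + 2) :=
      Nat.mul_le_mul_right _ (by omega)
    have hexp : (m.1 + 1) * (n + 2) = m.1 * (n + 2) + (n + 2) := by ring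
    have h1 : n + 2 - m.2 ≤ n + 1 := by omega
    linarith

lemma card_lt_idx {n : ℕ} : ∀ S : Finset (ℕ × ℕ), Adm n S → S.Nonempty →
    S.card < (idx S).card := by
  intro S
  induction S using Finset.strongInduction with
  | _ S ih =>
    intro hS hne
    obtain ⟨m, hm, hmax⟩ := adm_max hS hne
    set S' := S.erase m with hS'def
    have hsub : S' ⊆ S := Finset.erase_subset _ _
    have hS'adm : Adm n S' := adm_subset hS hsub
    have hcardS : S.card = S'.card + 1 := by
      rw [hS'def, Finset.card_erase_of_mem hm]
      have : 1 ≤ S.card := Finset.card_pos.mpr hne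
      omega
    -- key claim : m.1 ∉ idx S' ∨ m.2 ∉ idx S'
    have hkey : m.1 ∉ idx S' ∨ m.2 ∉ idx S' := by
      by_contra hcon
      push_neg at hcon
      obtain ⟨h1, h2⟩ := hcon
      rw [mem_idx] at h1 h2
      have hV := hS.1 m hm
      -- m.1 cannot be a column of S'
      have h1' : ∃ w ∈ S', w.1 = m.1 := by
        rcases h1 with h1 | ⟨w, hw, hweq⟩
        · exact h1
        · exact absurd hweq.symm ((hS.2 m hm w (hsub hw)).1)
      have h2' : ∃ w ∈ S', w.2 = m.2 := by
        rcases h2 with ⟨w, hw, hweq⟩ | h2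
        · exact absurd hweq ((hS.2 w (hsub hw) m hm).1)
        · exact h2
      obtain ⟨w, hw, hw1⟩ := h1'
      obtain ⟨w', hw', hw'1⟩ := h2'
      have hwne : w ≠ m := Finset.ne_of_mem_erase hw
      have hw'ne : w' ≠ m := Finset.ne_of_mem_erase hw'
      have hmw := hmax w (hsub hw)
      have hmw' := hmax w' (hsub hw')
      -- w.2 > m.2 and w'.1 < m.1
      have hw2 : m.2 < w.2 := by
        rcases Nat.lt_or_ge m.2 w.2 with h | h
        · exact h
        · exfalso; apply hwne; apply Prod.ext hw1; omega
      have hw'2 : w'.1 < m.1 := by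
        rcases Nat.lt_or_ge w'.1 m.1 with h | h
        · exact h
        · exfalso; apply hw'ne; apply Prod.ext (by omega) hw'1
      have hcc := (hS'adm.2 w' hw' w hw).2.2.1 (by omega)
      omega
    -- use claim
    rcases S'.eq_empty_or_nonempty with hemp | hne'
    · have hSm : S = {m} := by
        rcases (Finset.erase_eq_empty_iff S m).mp hemp with h | h
        · exact absurd h (Finset.nonempty_iff_ne_empty.mp hne)
        · exact h
      have hV := hS.1 m hm
      subst hSm
      have hidx : idx {m} = {m.1, m.2} := by
        ext x; simp [idx]
      rw [hidx, Finset.card_pair hV.2.2.2.2, Finset.card_singleton]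
      omega
    · have hlt := ih S' (Finset.erase_ssubset hm) hS'adm hne'
      have hone : ∃ a, a ∈ idx S ∧ a ∉ idx S' := by
        rcases hkey with h | h
        · exact ⟨m.1, mem_idx.mpr (Or.inl ⟨m, hm, rfl⟩), h⟩
        · exact ⟨m.2, mem_idx.mpr (Or.inr ⟨m, hm, rfl⟩), h⟩
      obtain ⟨a, haS, haS'⟩ := hone
      have hins : insert a (idx S') ⊆ idx S := by
        intro b hb
        rcases Finset.mem_insert.1 hb with rfl | hb
        · exact haS
        · exact idx_mono hsub hb
      have : (idx S').card + 1 ≤ (idx S).card := by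
        have := Finset.card_le_card hins
        rwa [Finset.card_insert_of_notMem haS'] at this
      omega

lemma adm_card_le {n : ℕ} {S : Finset (ℕ × ℕ)} (h : Adm n S) : S.card ≤ n - 1 := by
  rcases S.eq_empty_or_nonempty with rfl | hne
  · simp
  · have h1 := card_lt_idx S h hne
    have h2 := Finset.card_le_card (idx_subset_Icc h)
    rw [Nat.card_Icc] at h2
    omega

/-- If an index `m` is unused, it can be inserted as a new row. -/
lemma row_insert {n : ℕ} {S : Finset (ℕ × ℕ)} (hS : Adm n S) (hne : S.Nonempty)
    {m : ℕ} (hm1 : 1 ≤ m) (hm2 : m ≤ n) (hm : m ∉ idx S) :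
    ∃ d, Adm n (insert (m, d) S) ∧ (m, d) ∉ S := by
  have hrow : ∀ w ∈ S, w.1 ≠ m := fun w hw h =>
    hm (mem_idx.mpr (Or.inl ⟨w, hw, h⟩))
  have hcol : ∀ w ∈ S, w.2 ≠ m := fun w hw h =>
    hm (mem_idx.mpr (Or.inr ⟨w, hw, h⟩))
  by_cases hF : (S.filter (fun p => p.1 < m)).Nonempty
  · obtain ⟨w₀, hw₀, hmin⟩ := Finset.exists_min_image _ Prod.snd hF
    rw [Finset.mem_filter] at hw₀
    obtain ⟨hw₀S, hw₀lt⟩ := hw₀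
    refine ⟨w₀.2, ?_, fun h => (hrow _ h rfl)⟩
    rw [adm_insert_iff]
    refine ⟨hS, ?_, ?_⟩
    · obtain ⟨a1, a2, a3, a4, a5⟩ := hS.1 w₀ hw₀S
      exact ⟨hm1, hm2, a3, a4, fun h => hcol w₀ hw₀S h.symm⟩
    · intro w hw
      refine ⟨fun h => hcol w hw h.symm, (hS.2 w hw w₀ hw₀S).1, ?_, ?_⟩
      · -- m < w.1 → w.2 ≤ w₀.2
        intro hlt
        exact (hS.2 w₀ hw₀S w hw).2.2.1 (by omega)
      · -- w.1 < m → w₀.2 ≤ w.2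
        intro hlt
        exact hmin w (Finset.mem_filter.mpr ⟨hw, hlt⟩)
  · -- every element has first coordinate > m
    have hall : ∀ w ∈ S, m < w.1 := by
      intro w hw
      have h1 : ¬ (w.1 < m) := fun h => hF ⟨w, Finset.mem_filter.mpr ⟨hw, h⟩⟩
      have := hrow w hw
      omega
    obtain ⟨w₀, hw₀, hmax⟩ := Finset.exists_max_image _ Prod.snd hne
    refine ⟨w₀.2, ?_, fun h => (hrow _ h rfl)⟩
    rw [adm_insert_iff]
    refine ⟨hS, ?_, ?_⟩
    · obtain ⟨a1, a2, a3, a4, a5⟩ := hS.1 w₀ hw₀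
      exact ⟨hm1, hm2, a3, a4, fun h => hcol w₀ hw₀ h.symm⟩
    · intro w hw
      exact ⟨fun h => hcol w hw h.symm, (hS.2 w hw w₀ hw₀).1,
        fun _ => hmax w hw, fun h => absurd (hall w hw) (by omega)⟩

/-- If an index `m` is unused, it can be inserted as a new column. -/
lemma col_insert {n : ℕ} {S : Finset (ℕ × ℕ)} (hS : Adm n S) (hne : S.Nonempty)
    {m : ℕ} (hm1 : 1 ≤ m) (hm2 : m ≤ n) (hm : m ∉ idx S) :
    ∃ a, Adm n (insert (a, m) S) ∧ (a, m) ∉ S := by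
  have hrow : ∀ w ∈ S, w.1 ≠ m := fun w hw h =>
    hm (mem_idx.mpr (Or.inl ⟨w, hw, h⟩))
  have hcol : ∀ w ∈ S, w.2 ≠ m := fun w hw h =>
    hm (mem_idx.mpr (Or.inr ⟨w, hw, h⟩))
  by_cases hF : (S.filter (fun p => m < p.2)).Nonempty
  · obtain ⟨w₀, hw₀, hmax⟩ := Finset.exists_max_image _ Prod.fst hF
    rw [Finset.mem_filter] at hw₀
    obtain ⟨hw₀S, hw₀lt⟩ := hw₀
    refine ⟨w₀.1, ?_, fun h => (hcol _ h rfl)⟩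
    rw [adm_insert_iff]
    refine ⟨hS, ?_, ?_⟩
    · obtain ⟨a1, a2, a3, a4, a5⟩ := hS.1 w₀ hw₀S
      exact ⟨a1, a2, hm1, hm2, fun h => hrow w₀ hw₀S h⟩
    · intro w hw
      refine ⟨(hS.2 w₀ hw₀S w hw).1, fun h => hrow w hw h, ?_, ?_⟩
      · -- w₀.1 < w.1 → w.2 ≤ m
        intro hlt
        have := (hS.2 w₀ hw₀S w hw).2.2.1 hlt
        have h2 : ¬ (m < w.2) := by
          intro h3
          have := hmax w (Finset.mem_filter.mpr ⟨hw, h3⟩)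
          omega
        have := hcol w hw
        omega
      · -- w.1 < w₀.1 → m ≤ w.2
        intro hlt
        have h2 := (hS.2 w hw w₀ hw₀S).2.2.1 hlt
        omega
  · -- every element has second coordinate < m
    have hall : ∀ w ∈ S, w.2 < m := by
      intro w hw
      have h1 : ¬ (m < w.2) := fun h => hF ⟨w, Finset.mem_filter.mpr ⟨hw, h⟩⟩
      have := hcol w hw
      omega
    obtain ⟨w₀, hw₀, hmin⟩ := Finset.exists_min_image _ Prod.fst hne
    refine ⟨w₀.1, ?_, fun h => (hcol _ h rfl)⟩
    rw [adm_insert_iff]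
    refine ⟨hS, ?_, ?_⟩
    · obtain ⟨a1, a2, a3, a4, a5⟩ := hS.1 w₀ hw₀
      exact ⟨a1, a2, hm1, hm2, fun h => hrow w₀ hw₀ h⟩
    · intro w hw
      exact ⟨(hS.2 w₀ hw₀ w hw).1, fun h => hrow w hw h,
        fun _ => le_of_lt (hall w hw), fun h => absurd (hmin w hw) (by omega)⟩

/-- Corner insertion. -/
lemma corner_insert {n : ℕ} {S : Finset (ℕ × ℕ)} (hS : Adm n S)
    {u v : ℕ × ℕ} (hu : u ∈ S) (hv : v ∈ S) (h1 : u.1 < v.1) (h2 : v.2 < u.2)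
    (hbet : ∀ w ∈ S, u.1 < w.1 → w.2 ≤ v.2) :
    Adm n (insert (u.1, v.2) S) := by
  rw [adm_insert_iff]
  obtain ⟨a1, a2, a3, a4, a5⟩ := hS.1 u hu
  obtain ⟨b1, b2, b3, b4, b5⟩ := hS.1 v hv
  refine ⟨hS, ⟨a1, a2, b3, b4, (hS.2 u hu v hv).1⟩, ?_⟩
  intro w hw
  refine ⟨(hS.2 u hu w hw).1, (hS.2 w hw v hv).1, fun h => hbet w hw h, ?_⟩
  intro h
  have := (hS.2 w hw u hu).2.2.1 h
  omega

/-- If the index count exceeds the card by more than 1, there is a double step. -/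
lemma double_step {n : ℕ} : ∀ S : Finset (ℕ × ℕ), Adm n S → S.Nonempty →
    (idx S).card ≤ S.card + 1 ∨
    ∃ u ∈ S, ∃ v ∈ S, u.1 < v.1 ∧ v.2 < u.2 ∧ (u.1, v.2) ∉ S ∧
      ∀ w ∈ S, u.1 < w.1 → w.2 ≤ v.2 := by
  intro S
  induction S using Finset.strongInduction with
  | _ S ih =>
    intro hS hne
    obtain ⟨m, hm, hmax⟩ := adm_max hS hne
    set S' := S.erase m with hS'def
    have hsub : S' ⊆ S := Finset.erase_subset _ _
    have hS'adm : Adm n S' := adm_subset hS hsub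
    have hcardS : S.card = S'.card + 1 := by
      rw [hS'def, Finset.card_erase_of_mem hm]
      have : 1 ≤ S.card := Finset.card_pos.mpr hne
      omega
    rcases S'.eq_empty_or_nonempty with hemp | hne'
    · left
      have hSm : S = {m} := by
        rcases (Finset.erase_eq_empty_iff S m).mp hemp with h | h
        · exact absurd h (Finset.nonempty_iff_ne_empty.mp hne)
        · exact h
      subst hSm
      have hidx : idx {m} = {m.1, m.2} := by ext x; simp [idx]
      rw [hidx, Finset.card_singleton]
      exact le_trans (Finset.card_le_card (by intro x hx; exact hx)) (by
        have := Finset.card_insert_le m.1 ({m.2} : Finset ℕ)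
        simpa using this)
    · obtain ⟨m', hm', hmax'⟩ := adm_max hS'adm hne'
      have hm'S : m' ∈ S := hsub hm'
      have hm'ne : m' ≠ m := Finset.ne_of_mem_erase hm'
      have hc1 : m'.1 ≤ m.1 := (hmax m' hm'S).1
      have hc2 : m.2 ≤ m'.2 := (hmax m' hm'S).2
      by_cases hdouble : m'.1 < m.1 ∧ m.2 < m'.2
      · right
        refine ⟨m', hm'S, m, hm, hdouble.1, hdouble.2, ?_, ?_⟩
        · intro hcon
          have hcne : (m'.1, m.2) ≠ m := by
            intro h
            have h1 : m'.1 = m.1 := by rw [← h]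
            omega
          have hcS' : (m'.1, m.2) ∈ S' := Finset.mem_erase.mpr ⟨hcne, hcon⟩
          have := (hmax' _ hcS').2
          simp only at this
          omega
        · intro w hw hlt
          by_cases hwm : w = m
          · subst hwm; rfl
          · have hwS' : w ∈ S' := Finset.mem_erase.mpr ⟨hwm, hw⟩
            have := (hmax' w hwS').1
            omega
      · -- single step: m'.1 = m.1 ∨ m'.2 = m.2
        have hsingle : m'.1 = m.1 ∨ m'.2 = m.2 := by omega
        rcases ih S' (Finset.erase_ssubset hm) hS'adm hne' with hle | ⟨u, hu, v, hv, g1, g2, g3, g4⟩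
        · left
          have hidxsub : idx S ⊆ insert m.1 (insert m.2 (idx S')) := by
            intro b hb
            rw [mem_idx] at hb
            rcases hb with ⟨w, hw, h1⟩ | ⟨w, hw, h1⟩
            · by_cases hwm : w = m
              · subst hwm; subst h1; exact Finset.mem_insert_self _ _
              · exact Finset.mem_insert_of_mem (Finset.mem_insert_of_mem
                  (mem_idx.mpr (Or.inl ⟨w, Finset.mem_erase.mpr ⟨hwm, hw⟩, h1⟩)))
            · by_cases hwm : w = m
              · subst hwm; subst h1
                exact Finset.mem_insert_of_mem (Finset.mem_insert_self _ _)
              · exact Finset.mem_insert_of_mem (Finset.mem_insert_of_mem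
                  (mem_idx.mpr (Or.inr ⟨w, Finset.mem_erase.mpr ⟨hwm, hw⟩, h1⟩)))
          -- one of m.1, m.2 is already in idx S'
          have hone : m.1 ∈ idx S' ∨ m.2 ∈ idx S' := by
            rcases hsingle with h | h
            · exact Or.inl (mem_idx.mpr (Or.inl ⟨m', hm', h⟩))
            · exact Or.inr (mem_idx.mpr (Or.inr ⟨m', hm', h⟩))
          have hcard2 : (idx S).card ≤ (idx S').card + 1 := by
            rcases hone with h | h
            · have : idx S ⊆ insert m.2 (idx S') := by
                intro b hb
                rcases Finset.mem_insert.1 (hidxsub hb) with rfl | hb'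
                · exact Finset.mem_insert_of_mem h
                · exact hb'
              calc (idx S).card ≤ (insert m.2 (idx S')).card := Finset.card_le_card this
                _ ≤ (idx S').card + 1 := Finset.card_insert_le _ _
            · have : idx S ⊆ insert m.1 (idx S') := by
                intro b hb
                rcases Finset.mem_insert.1 (hidxsub hb) with rfl | hb'
                · exact Finset.mem_insert_self _ _
                · rcases Finset.mem_insert.1 hb' with rfl | hb''
                  · exact Finset.mem_insert_of_mem h
                  · exact Finset.mem_insert_of_mem hb''
              calc (idx S).card ≤ (insert m.1 (idx S')).card := Finset.card_le_card this
                _ ≤ (idx S').card + 1 := Finset.card_insert_le _ _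
          omega
        · right
          refine ⟨u, hsub hu, v, hsub hv, g1, g2, ?_, ?_⟩
          · intro hcon
            by_cases hcm : (u.1, v.2) = m
            · -- impossible : v.1 ≤ m.1 = u.1 < v.1
              have h1 : u.1 = m.1 := by rw [← hcm]
              have := (hmax v (hsub hv)).1
              omega
            · exact g3 (Finset.mem_erase.mpr ⟨hcm, hcon⟩)
          · intro w hw hlt
            by_cases hwm : w = m
            · subst hwm
              exact (hmax v (hsub hv)).2
            · exact g4 w (Finset.mem_erase.mpr ⟨hwm, hw⟩) hlt

/-- Admissible sets of size n-1 are maximal (given via card comparison). -/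
lemma card_max_of_adm {n : ℕ} {S T : Finset (ℕ × ℕ)} (hT : Adm n T) (hST : S ⊆ T)
    (hcard : n - 1 ≤ S.card) : S = T :=
  Finset.eq_of_subset_of_card_le hST (le_trans (adm_card_le hT) hcard)

/-- A maximal admissible set has exactly n-1 elements. -/
lemma max_card {n : ℕ} (hn : 2 ≤ n) {S : Finset (ℕ × ℕ)} (hS : Adm n S)
    (hmax : ∀ T, Adm n T → S ⊆ T → S = T) : S.card = n - 1 := by
  have hle := adm_card_le hS
  by_contra hne
  have hlt : S.card < n - 1 := by omega
  -- find an extension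
  have hext : ∃ y, y ∉ S ∧ Adm n (insert y S) := by
    rcases S.eq_empty_or_nonempty with rfl | hSne
    · refine ⟨(1, 2), by simp, ?_⟩
      rw [adm_insert_iff]
      exact ⟨⟨by simp, by simp⟩, ⟨le_refl _, by omega, by omega, by omega, by omega⟩,
        by simp⟩
    · by_cases hfull : Finset.Icc 1 n ⊆ idx S
      · -- idx S = Icc 1 n, use double_step
        have hidx : idx S = Finset.Icc 1 n :=
          Finset.Subset.antisymm (idx_subset_Icc hS) hfull
        have hidxcard : (idx S).card = n := by rw [hidx, Nat.card_Icc]; omega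
        rcases double_step S hS hSne with h | ⟨u, hu, v, hv, g1, g2, g3, g4⟩
        · omega
        · exact ⟨(u.1, v.2), g3, corner_insert hS hu hv g1 g2 g4⟩
      · obtain ⟨m, hmIcc, hmidx⟩ := Finset.not_subset.mp hfull
        rw [Finset.mem_Icc] at hmIcc
        obtain ⟨d, hd, hdS⟩ := row_insert hS hSne hmIcc.1 hmIcc.2 hmidx
        exact ⟨(m, d), hdS, hd⟩
  obtain ⟨y, hyS, hyadm⟩ := hext
  have := hmax _ hyadm (Finset.subset_insert _ _)
  exact hyS (this ▸ Finset.mem_insert_self y S)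

/-- Two distinct compatible completions of a set of size n-2 are impossible. -/
lemma two_incompat {n : ℕ} (hn : 2 ≤ n) {S' : Finset (ℕ × ℕ)} {y y' : ℕ × ℕ}
    (hcard : S'.card = n - 2) (hy : y ∉ S') (hy' : y' ∉ S') (hne : y ≠ y')
    (hA : Adm n (insert y S')) (hA' : Adm n (insert y' S')) (hcomp : Compat y y') :
    False := by
  have hD : Adm n (insert y (insert y' S')) := by
    rw [adm_insert_iff]
    refine ⟨hA', (adm_insert_iff.mp hA).2.1, ?_⟩
    intro w hw
    rcases Finset.mem_insert.1 hw with rfl | hw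
    · exact hcomp
    · exact (adm_insert_iff.mp hA).2.2 w hw
  have hcardD : (insert y (insert y' S')).card = n := by
    rw [Finset.card_insert_of_notMem, Finset.card_insert_of_notMem hy']
    · omega
    · intro h
      rcases Finset.mem_insert.1 h with h | h
      · exact hne h
      · exact hy h
  have := adm_card_le hD
  omega

/-- Key lemma: there is exactly one completion of `S.erase x` besides `x` itself. -/
lemma key_lemma {n : ℕ} (hn : 2 ≤ n) {S : Finset (ℕ × ℕ)} (hS : Adm n S)
    (hcard : S.card = n - 1) {x : ℕ × ℕ} (hx : x ∈ S) :
    ∃ y₂, y₂ ≠ x ∧ y₂ ∉ S.erase x ∧ Adm n (insert y₂ (S.erase x)) ∧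
      ∀ y, y ∉ S.erase x → Adm n (insert y (S.erase x)) → y = x ∨ y = y₂ := by
  set S' := S.erase x with hS'def
  have hsub : S' ⊆ S := Finset.erase_subset _ _
  have hS' : Adm n S' := adm_subset hS hsub
  have hxS' : x ∉ S' := Finset.notMem_erase _ _
  have hinsx : insert x S' = S := Finset.insert_erase hx
  have hScard1 : 1 ≤ S.card := Finset.card_pos.mpr ⟨x, hx⟩
  have hcard' : S'.card = n - 2 := by
    rw [hS'def, Finset.card_erase_of_mem hx]; omega
  have hVx := hS.1 x hx
  have hxadm : Adm n (insert x S') := by rw [hinsx]; exact hS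
  rcases Nat.lt_or_ge n 3 with hn2 | hn3
  · -- n = 2
    have hn2' : n = 2 := by omega
    subst hn2'
    have hS'emp : S' = ∅ := Finset.card_eq_zero.mp (by omega)
    have hxcase : x = (1, 2) ∨ x = (2, 1) := by
      obtain ⟨c, d⟩ := x
      obtain ⟨e1, e2, e3, e4, e5⟩ := hVx
      simp only at e1 e2 e3 e4 e5
      rcases (by omega : (c = 1 ∧ d = 2) ∨ (c = 2 ∧ d = 1)) with ⟨rfl, rfl⟩ | ⟨rfl, rfl⟩
      · exact Or.inl rfl
      · exact Or.inr rfl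
    have hbothadm : ∀ z : ℕ × ℕ, z = (1,2) ∨ z = (2,1) → Adm 2 (insert z S') := by
      rintro z (rfl | rfl) <;>
      · rw [hS'emp, adm_insert_iff]
        refine ⟨⟨by simp, by simp⟩, ?_, by simp⟩
        simp [VnMem]
    have huniq : ∀ y : ℕ × ℕ, Adm 2 (insert y S') → y = (1,2) ∨ y = (2,1) := by
      intro y hy
      have hVy := (adm_insert_iff.mp hy).2.1
      obtain ⟨c, d⟩ := y
      obtain ⟨e1, e2, e3, e4, e5⟩ := hVy
      simp only at e1 e2 e3 e4 e5
      rcases (by omega : (c = 1 ∧ d = 2) ∨ (c = 2 ∧ d = 1)) with ⟨rfl, rfl⟩ | ⟨rfl, rfl⟩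
      · exact Or.inl rfl
      · exact Or.inr rfl
    rcases hxcase with rfl | rfl
    · refine ⟨(2,1), by simp, by simp [hS'emp], hbothadm _ (Or.inr rfl), ?_⟩
      intro y hy1 hy2
      rcases huniq y hy2 with rfl | rfl
      · exact Or.inl rfl
      · exact Or.inr rfl
    · refine ⟨(1,2), by simp, by simp [hS'emp], hbothadm _ (Or.inl rfl), ?_⟩
      intro y hy1 hy2
      rcases huniq y hy2 with rfl | rfl
      · exact Or.inr rfl
      · exact Or.inl rfl
  · -- n ≥ 3
    have hne' : S'.Nonempty := Finset.card_pos.mp (by omega)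
    by_cases hfull : Finset.Icc 1 n ⊆ idx S'
    · -- CASE II : all indices used by S'
      have hprow : ∃ w ∈ S', w.1 = x.1 := by
        have h0 := hfull (by rw [Finset.mem_Icc]; exact ⟨hVx.1, hVx.2.1⟩)
        rw [mem_idx] at h0
        rcases h0 with h | ⟨w, hw, hweq⟩
        · exact h
        · exact absurd hweq (Ne.symm (hS.2 x hx w (hsub hw)).1)
      have hqcol : ∃ w ∈ S', w.2 = x.2 := by
        have h0 := hfull (by rw [Finset.mem_Icc]; exact ⟨hVx.2.2.1, hVx.2.2.2.1⟩)
        rw [mem_idx] at h0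
        rcases h0 with ⟨w, hw, hweq⟩ | h
        · exact absurd hweq (hS.2 w (hsub hw) x hx).1
        · exact h
      have hFPne : (S'.filter (fun w => w.1 = x.1)).Nonempty := by
        obtain ⟨w, hw, he⟩ := hprow
        exact ⟨w, Finset.mem_filter.mpr ⟨hw, he⟩⟩
      have hFQne : (S'.filter (fun w => w.2 = x.2)).Nonempty := by
        obtain ⟨w, hw, he⟩ := hqcol
        exact ⟨w, Finset.mem_filter.mpr ⟨hw, he⟩⟩
      have hFPnotq : ∀ w ∈ S', w.1 = x.1 → w.2 ≠ x.2 := by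
        intro w hw h1 h2
        exact hxS' (by rwa [← Prod.ext h1 h2])
      have hFQnotp : ∀ w ∈ S', w.2 = x.2 → w.1 ≠ x.1 := by
        intro w hw h1 h2
        exact hxS' (by rwa [← Prod.ext h2 h1])
      have hFQne2 := hFQne
      obtain ⟨w₁, hw₁⟩ := hFQne2
      rw [Finset.mem_filter] at hw₁
      obtain ⟨hw₁S', hw₁q⟩ := hw₁
      rcases lt_or_gt_of_ne (hFQnotp w₁ hw₁S' hw₁q) with hor | hor
      · -- ORIENTATION B : the column-x.2 witness has row < x.1
        have hRowP : ∀ w ∈ S', w.1 = x.1 → w.2 < x.2 := by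
          intro w hw h1
          have hne2 := hFPnotq w hw h1
          have hchain := (hS'.2 w₁ hw₁S' w hw).2.2.1 (by omega)
          omega
        have hColQ : ∀ w ∈ S', w.2 = x.2 → w.1 < x.1 := by
          intro w hw h1
          have hne1 := hFQnotp w hw h1
          by_contra hcon
          push_neg at hcon
          obtain ⟨wp, hwpS', hwp1⟩ := hprow
          have h2 := (hS'.2 wp hwpS' w hw).2.2.1 (by omega)
          have h3 := hRowP wp hwpS' hwp1
          omega
        obtain ⟨u, huFP, humax⟩ := Finset.exists_max_image _ Prod.snd hFPne
        obtain ⟨v, hvFQ, hvmax⟩ := Finset.exists_max_image _ Prod.fst hFQne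
        rw [Finset.mem_filter] at huFP hvFQ
        obtain ⟨huS', hu1⟩ := huFP
        obtain ⟨hvS', hv2⟩ := hvFQ
        have humax' : ∀ w ∈ S', w.1 = x.1 → w.2 ≤ u.2 := fun w hw h =>
          humax w (Finset.mem_filter.mpr ⟨hw, h⟩)
        have hvmax' : ∀ w ∈ S', w.2 = x.2 → w.1 ≤ v.1 := fun w hw h =>
          hvmax w (Finset.mem_filter.mpr ⟨hw, h⟩)
        have hub : u.2 < x.2 := hRowP u huS' hu1
        have hva : v.1 < x.1 := hColQ v hvS' hv2
        have hdich : ∀ w ∈ S', (w.1 ≤ v.1 ∧ x.2 ≤ w.2) ∨ (x.1 ≤ w.1 ∧ w.2 ≤ u.2) := by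
          intro w hwS'
          rcases Nat.lt_trichotomy w.1 x.1 with h | h | h
          · left
            have hq2 := (hS.2 w (hsub hwS') x hx).2.2.1 h
            refine ⟨?_, hq2⟩
            rcases Nat.lt_or_ge x.2 w.2 with h2 | h2
            · by_contra hcon
              push_neg at hcon
              have := (hS'.2 v hvS' w hwS').2.2.1 hcon
              omega
            · exact hvmax' w hwS' (by omega)
          · right
            exact ⟨le_of_eq h.symm, humax' w hwS' h⟩
          · right
            have := (hS'.2 u huS' w hwS').2.2.1 (by omega)
            exact ⟨le_of_lt h, this⟩
        have hVu := hS'.1 u huS'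
        have hVv := hS'.1 v hvS'
        have hy₂V : VnMem n (v.1, u.2) :=
          ⟨hVv.1, hVv.2.1, hVu.2.2.1, hVu.2.2.2.1, (hS'.2 v hvS' u huS').1⟩
        have hy₂compat : ∀ w ∈ S', Compat (v.1, u.2) w := by
          intro w hwS'
          refine ⟨(hS'.2 v hvS' w hwS').1, (hS'.2 w hwS' u huS').1, ?_, ?_⟩
          · intro h
            have h' : v.1 < w.1 := h
            show w.2 ≤ u.2
            rcases hdich w hwS' with ⟨h1, h2⟩ | ⟨h1, h2⟩ <;> omega
          · intro h
            have h' : w.1 < v.1 := h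
            show u.2 ≤ w.2
            rcases hdich w hwS' with ⟨h1, h2⟩ | ⟨h1, h2⟩ <;> omega
        have hy₂S' : (v.1, u.2) ∉ S' := by
          intro hcon
          rcases hdich _ hcon with ⟨h1, h2⟩ | ⟨h1, h2⟩
          · have h2' : x.2 ≤ u.2 := h2
            omega
          · have h1' : x.1 ≤ v.1 := h1
            omega
        have hy₂adm : Adm n (insert (v.1, u.2) S') := adm_insert_iff.mpr ⟨hS', hy₂V, hy₂compat⟩
        have hy₂nex : (v.1, u.2) ≠ x := by
          intro h
          have : v.1 = x.1 := by rw [← h]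
          omega
        refine ⟨(v.1, u.2), hy₂nex, hy₂S', hy₂adm, ?_⟩
        intro y hyS' hyadm
        by_contra hcon
        push_neg at hcon
        obtain ⟨hynex, hyney₂⟩ := hcon
        have hVy := (adm_insert_iff.mp hyadm).2.1
        have hycomp := (adm_insert_iff.mp hyadm).2.2
        have hα : ∃ w ∈ S', w.1 = y.1 := by
          have h1 : y.1 ∈ idx S' := hfull (by rw [Finset.mem_Icc]; exact ⟨hVy.1, hVy.2.1⟩)
          rw [mem_idx] at h1
          rcases h1 with h | ⟨w, hw, hweq⟩
          · exact h
          · exact absurd hweq (Ne.symm (hycomp w hw).1)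
        have hβ : ∃ w ∈ S', w.2 = y.2 := by
          have h1 : y.2 ∈ idx S' := hfull (by rw [Finset.mem_Icc]; exact ⟨hVy.2.2.1, hVy.2.2.2.1⟩)
          rw [mem_idx] at h1
          rcases h1 with ⟨w, hw, hweq⟩ | h
          · exact absurd hweq (hycomp w hw).2.1
          · exact h
        obtain ⟨wα, hwαS', hwα1⟩ := hα
        obtain ⟨wβ, hwβS', hwβ2⟩ := hβ
        have hncx : ¬ Compat y x := fun hc =>
          two_incompat hn hcard' hyS' hxS' hynex hyadm hxadm hc
        have hncy₂ : ¬ Compat y (v.1, u.2) := fun hc =>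
          two_incompat hn hcard' hyS' hy₂S' hyney₂ hyadm hy₂adm hc
        have hcx1 : y.1 ≠ x.2 := by rw [← hwα1]; exact (hS.2 wα (hsub hwαS') x hx).1
        have hcx2 : x.1 ≠ y.2 := by rw [← hwβ2]; exact (hS.2 x hx wβ (hsub hwβS')).1
        have hcase1 : (y.1 < x.1 ∧ y.2 < x.2) ∨ (x.1 < y.1 ∧ x.2 < y.2) := by
          by_contra hno
          push_neg at hno
          exact hncx ⟨hcx1, hcx2, hno.1, hno.2⟩
        have hcy1 : y.1 ≠ u.2 := by rw [← hwα1]; exact (hS'.2 wα hwαS' u huS').1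
        have hcy2 : v.1 ≠ y.2 := by rw [← hwβ2]; exact (hS'.2 v hvS' wβ hwβS').1
        have hcase2 : (y.1 < v.1 ∧ y.2 < u.2) ∨ (v.1 < y.1 ∧ u.2 < y.2) := by
          by_contra hno
          push_neg at hno
          exact hncy₂ ⟨hcy1, hcy2, hno.1, hno.2⟩
        rcases hcase1 with ⟨h1, h2⟩ | ⟨h1, h2⟩
        · rcases hcase2 with ⟨g1, g2⟩ | ⟨g1, g2⟩
          · have := (hycomp v hvS').2.2.1 g1
            omega
          · have ha1 := (hS.2 wα (hsub hwαS') x hx).2.2.1 (by omega)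
            have ha2 := (hS'.2 v hvS' wα hwαS').2.2.1 (by omega)
            have := hvmax' wα hwαS' (by omega)
            omega
        · have := (hycomp u huS').2.2.2 (by omega)
          omega
      · -- ORIENTATION A : the column-x.2 witness has row > x.1
        have hRowP : ∀ w ∈ S', w.1 = x.1 → x.2 < w.2 := by
          intro w hw h1
          have hne2 := hFPnotq w hw h1
          have hchain := (hS'.2 w hw w₁ hw₁S').2.2.1 (by omega)
          omega
        have hColQ : ∀ w ∈ S', w.2 = x.2 → x.1 < w.1 := by
          intro w hw h1
          have hne1 := hFQnotp w hw h1
          by_contra hcon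
          push_neg at hcon
          obtain ⟨wp, hwpS', hwp1⟩ := hprow
          have h2 := (hS'.2 w hw wp hwpS').2.2.1 (by omega)
          have h3 := hRowP wp hwpS' hwp1
          omega
        obtain ⟨u, huFP, humin⟩ := Finset.exists_min_image _ Prod.snd hFPne
        obtain ⟨v, hvFQ, hvmin⟩ := Finset.exists_min_image _ Prod.fst hFQne
        rw [Finset.mem_filter] at huFP hvFQ
        obtain ⟨huS', hu1⟩ := huFP
        obtain ⟨hvS', hv2⟩ := hvFQ
        have humin' : ∀ w ∈ S', w.1 = x.1 → u.2 ≤ w.2 := fun w hw h =>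
          humin w (Finset.mem_filter.mpr ⟨hw, h⟩)
        have hvmin' : ∀ w ∈ S', w.2 = x.2 → v.1 ≤ w.1 := fun w hw h =>
          hvmin w (Finset.mem_filter.mpr ⟨hw, h⟩)
        have hub : x.2 < u.2 := hRowP u huS' hu1
        have hva : x.1 < v.1 := hColQ v hvS' hv2
        have hdich : ∀ w ∈ S', (w.1 ≤ x.1 ∧ u.2 ≤ w.2) ∨ (v.1 ≤ w.1 ∧ w.2 ≤ x.2) := by
          intro w hwS'
          rcases Nat.lt_trichotomy w.1 x.1 with h | h | h
          · left
            have := (hS'.2 w hwS' u huS').2.2.1 (by omega)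
            exact ⟨le_of_lt h, this⟩
          · left
            exact ⟨le_of_eq h, humin' w hwS' h⟩
          · right
            have hq2 := (hS.2 x hx w (hsub hwS')).2.2.1 h
            refine ⟨?_, hq2⟩
            rcases Nat.lt_or_ge w.2 x.2 with h2 | h2
            · by_contra hcon
              push_neg at hcon
              have := (hS'.2 w hwS' v hvS').2.2.1 hcon
              omega
            · exact hvmin' w hwS' (by omega)
        have hVu := hS'.1 u huS'
        have hVv := hS'.1 v hvS'
        have hy₂V : VnMem n (v.1, u.2) :=
          ⟨hVv.1, hVv.2.1, hVu.2.2.1, hVu.2.2.2.1, (hS'.2 v hvS' u huS').1⟩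
        have hy₂compat : ∀ w ∈ S', Compat (v.1, u.2) w := by
          intro w hwS'
          refine ⟨(hS'.2 v hvS' w hwS').1, (hS'.2 w hwS' u huS').1, ?_, ?_⟩
          · intro h
            have h' : v.1 < w.1 := h
            show w.2 ≤ u.2
            rcases hdich w hwS' with ⟨h1, h2⟩ | ⟨h1, h2⟩ <;> omega
          · intro h
            have h' : w.1 < v.1 := h
            show u.2 ≤ w.2
            rcases hdich w hwS' with ⟨h1, h2⟩ | ⟨h1, h2⟩ <;> omega
        have hy₂S' : (v.1, u.2) ∉ S' := by
          intro hcon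
          rcases hdich _ hcon with ⟨h1, h2⟩ | ⟨h1, h2⟩
          · have h1' : v.1 ≤ x.1 := h1
            omega
          · have h2' : u.2 ≤ x.2 := h2
            omega
        have hy₂adm : Adm n (insert (v.1, u.2) S') := adm_insert_iff.mpr ⟨hS', hy₂V, hy₂compat⟩
        have hy₂nex : (v.1, u.2) ≠ x := by
          intro h
          have : v.1 = x.1 := by rw [← h]
          omega
        refine ⟨(v.1, u.2), hy₂nex, hy₂S', hy₂adm, ?_⟩
        intro y hyS' hyadm
        by_contra hcon
        push_neg at hcon
        obtain ⟨hynex, hyney₂⟩ := hcon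
        have hVy := (adm_insert_iff.mp hyadm).2.1
        have hycomp := (adm_insert_iff.mp hyadm).2.2
        have hα : ∃ w ∈ S', w.1 = y.1 := by
          have h1 : y.1 ∈ idx S' := hfull (by rw [Finset.mem_Icc]; exact ⟨hVy.1, hVy.2.1⟩)
          rw [mem_idx] at h1
          rcases h1 with h | ⟨w, hw, hweq⟩
          · exact h
          · exact absurd hweq (Ne.symm (hycomp w hw).1)
        have hβ : ∃ w ∈ S', w.2 = y.2 := by
          have h1 : y.2 ∈ idx S' := hfull (by rw [Finset.mem_Icc]; exact ⟨hVy.2.2.1, hVy.2.2.2.1⟩)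
          rw [mem_idx] at h1
          rcases h1 with ⟨w, hw, hweq⟩ | h
          · exact absurd hweq (hycomp w hw).2.1
          · exact h
        obtain ⟨wα, hwαS', hwα1⟩ := hα
        obtain ⟨wβ, hwβS', hwβ2⟩ := hβ
        have hncx : ¬ Compat y x := fun hc =>
          two_incompat hn hcard' hyS' hxS' hynex hyadm hxadm hc
        have hncy₂ : ¬ Compat y (v.1, u.2) := fun hc =>
          two_incompat hn hcard' hyS' hy₂S' hyney₂ hyadm hy₂adm hc
        have hcx1 : y.1 ≠ x.2 := by rw [← hwα1]; exact (hS.2 wα (hsub hwαS') x hx).1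
        have hcx2 : x.1 ≠ y.2 := by rw [← hwβ2]; exact (hS.2 x hx wβ (hsub hwβS')).1
        have hcase1 : (y.1 < x.1 ∧ y.2 < x.2) ∨ (x.1 < y.1 ∧ x.2 < y.2) := by
          by_contra hno
          push_neg at hno
          exact hncx ⟨hcx1, hcx2, hno.1, hno.2⟩
        have hcy1 : y.1 ≠ u.2 := by rw [← hwα1]; exact (hS'.2 wα hwαS' u huS').1
        have hcy2 : v.1 ≠ y.2 := by rw [← hwβ2]; exact (hS'.2 v hvS' wβ hwβS').1
        have hcase2 : (y.1 < v.1 ∧ y.2 < u.2) ∨ (v.1 < y.1 ∧ u.2 < y.2) := by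
          by_contra hno
          push_neg at hno
          exact hncy₂ ⟨hcy1, hcy2, hno.1, hno.2⟩
        rcases hcase1 with ⟨h1, h2⟩ | ⟨h1, h2⟩
        · have := (hycomp u huS').2.2.1 (by omega)
          omega
        · rcases hcase2 with ⟨g1, g2⟩ | ⟨g1, g2⟩
          · have ha1 := (hS.2 x hx wα (hsub hwαS')).2.2.1 (by omega)
            have ha2 := (hS'.2 wα hwαS' v hvS').2.2.1 (by omega)
            have := hvmin' wα hwαS' (by omega)
            omega
          · have := (hycomp v hvS').2.2.2 (by omega)
            omega
    · -- CASE I : one index m missing from idx S'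
      obtain ⟨m, hmIcc, hmidx⟩ := Finset.not_subset.mp hfull
      rw [Finset.mem_Icc] at hmIcc
      obtain ⟨d, hdadm, hdS⟩ := row_insert hS' hne' hmIcc.1 hmIcc.2 hmidx
      obtain ⟨a, haadm, haS⟩ := col_insert hS' hne' hmIcc.1 hmIcc.2 hmidx
      -- any completion uses index m
      have htype : ∀ y, y ∉ S' → Adm n (insert y S') → y.1 = m ∨ y.2 = m := by
        intro y hyS' hyadm
        have hTcard : (insert y S').card = n - 1 := by
          rw [Finset.card_insert_of_notMem hyS']; omega
        have hTne : (insert y S').Nonempty := ⟨y, Finset.mem_insert_self _ _⟩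
        have h1 := card_lt_idx _ hyadm hTne
        have h2 := Finset.card_le_card (idx_subset_Icc hyadm)
        rw [Nat.card_Icc] at h2
        have hTidx : idx (insert y S') = Finset.Icc 1 n := by
          apply Finset.eq_of_subset_of_card_le (idx_subset_Icc hyadm)
          rw [Nat.card_Icc]; omega
        have hmT : m ∈ idx (insert y S') := by
          rw [hTidx, Finset.mem_Icc]; omega
        rw [mem_idx] at hmT
        rcases hmT with ⟨w, hw, h1'⟩ | ⟨w, hw, h1'⟩
        · rcases Finset.mem_insert.1 hw with rfl | hw'
          · exact Or.inl h1'
          · exact absurd (mem_idx.mpr (Or.inl ⟨w, hw', h1'⟩)) hmidx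
        · rcases Finset.mem_insert.1 hw with rfl | hw'
          · exact Or.inr h1'
          · exact absurd (mem_idx.mpr (Or.inr ⟨w, hw', h1'⟩)) hmidx
      -- uniqueness within each type
      have huniq_row : ∀ y y', y ∉ S' → y' ∉ S' → Adm n (insert y S') →
          Adm n (insert y' S') → y.1 = m → y'.1 = m → y = y' := by
        intro y y' hy hy' hA hA' h1 h2
        by_contra hne
        have hVy := (adm_insert_iff.mp hA).2.1
        have hVy' := (adm_insert_iff.mp hA').2.1
        refine two_incompat hn hcard' hy hy' hne hA hA' ?_
        refine ⟨?_, ?_, fun h => absurd h (by omega), fun h => absurd h (by omega)⟩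
        · rw [h1]; intro h; exact hVy'.2.2.2.2 (h2.trans h)
        · rw [h2]; intro h; exact hVy.2.2.2.2 (h1.trans h)
      have huniq_col : ∀ y y', y ∉ S' → y' ∉ S' → Adm n (insert y S') →
          Adm n (insert y' S') → y.2 = m → y'.2 = m → y = y' := by
        intro y y' hy hy' hA hA' h1 h2
        by_contra hne
        have hVy := (adm_insert_iff.mp hA).2.1
        have hVy' := (adm_insert_iff.mp hA').2.1
        refine two_incompat hn hcard' hy hy' hne hA hA' ?_
        refine ⟨?_, ?_, fun _ => by omega, fun _ => by omega⟩
        · rw [h2]; intro h; exact hVy.2.2.2.2 (h.trans h1.symm)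
        · rw [h1]; intro h; exact hVy'.2.2.2.2 (h.trans h2.symm)
      rcases htype x hxS' hxadm with hx1 | hx2
      · -- x is the row-type completion; the other is (a, m)
        refine ⟨(a, m), ?_, haS, haadm, ?_⟩
        · intro h
          rw [← h] at hx1
          have hVa := (adm_insert_iff.mp haadm).2.1
          exact hVa.2.2.2.2 hx1
        · intro y hy hyadm
          rcases htype y hy hyadm with h | h
          · exact Or.inl (huniq_row y x hy hxS' hyadm hxadm h hx1)
          · exact Or.inr (huniq_col y (a, m) hy haS hyadm haadm h rfl)
      · -- x is the col-type completion; the other is (m, d)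
        refine ⟨(m, d), ?_, hdS, hdadm, ?_⟩
        · intro h
          rw [← h] at hx2
          have hVd := (adm_insert_iff.mp hdadm).2.1
          exact hVd.2.2.2.2 hx2.symm
        · intro y hy hyadm
          rcases htype y hy hyadm with h | h
          · exact Or.inr (huniq_row y (m, d) hy hdS hyadm hdadm h rfl)
          · exact Or.inl (huniq_col y x hy hxS' hyadm hxadm h hx2)


/-- For every maximal admissible subset `S` of `V_n` and every `x ∈ S`, there
are exactly two maximal admissible subsets of `V_n` containing `S \ {x}`. -/
theorem two_maxSegreAdmissible_containing_erase (n : ℕ) (hn : 2 ≤ n)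
    (S : Finset (ℕ × ℕ)) (hS : MaxSegreAdmissible n S) (x : ℕ × ℕ) (hx : x ∈ S) :
    {T : Finset (ℕ × ℕ) | MaxSegreAdmissible n T ∧ S.erase x ⊆ T}.ncard = 2 := by
  have hadm : Adm n S := (adm_iff n S).mp hS.1
  have hmax : ∀ T, Adm n T → S ⊆ T → S = T := fun T hT hsub =>
    hS.2 T ((adm_iff n T).mpr hT) hsub
  have hcard : S.card = n - 1 := max_card hn hadm hmax
  obtain ⟨y₂, hy₂ne, hy₂S', hy₂adm, huniq⟩ := key_lemma hn hadm hcard hx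
  have hfacet : ∀ T : Finset (ℕ × ℕ), Adm n T → T.card = n - 1 → MaxSegreAdmissible n T := by
    intro T hT hc
    refine ⟨(adm_iff n T).mpr hT, ?_⟩
    intro T' hT' hsub
    exact card_max_of_adm ((adm_iff n T').mp hT') hsub (le_of_eq hc.symm)
  have hT₂card : (insert y₂ (S.erase x)).card = n - 1 := by
    rw [Finset.card_insert_of_notMem hy₂S', Finset.card_erase_of_mem hx]
    have : 1 ≤ S.card := Finset.card_pos.mpr ⟨x, hx⟩
    omega
  have hset : {T : Finset (ℕ × ℕ) | MaxSegreAdmissible n T ∧ S.erase x ⊆ T} =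
      {S, insert y₂ (S.erase x)} := by
    ext T
    simp only [Set.mem_setOf_eq, Set.mem_insert_iff, Set.mem_singleton_iff]
    constructor
    · rintro ⟨hTmax, hTsub⟩
      have hTadm : Adm n T := (adm_iff n T).mp hTmax.1
      have hTcard : T.card = n - 1 :=
        max_card hn hTadm (fun T' h1 h2 => hTmax.2 T' ((adm_iff n T').mpr h1) h2)
      have hecard : (S.erase x).card = n - 2 := by
        rw [Finset.card_erase_of_mem hx]; omega
      have hdcard : (T \ S.erase x).card = 1 := by
        rw [Finset.card_sdiff_of_subset hTsub]; omega
      obtain ⟨y, hy⟩ := Finset.card_eq_one.mp hdcard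
      have hymem : y ∈ T \ S.erase x := hy ▸ Finset.mem_singleton_self y
      have hyT : y ∈ T := (Finset.mem_sdiff.mp hymem).1
      have hynot : y ∉ S.erase x := (Finset.mem_sdiff.mp hymem).2
      have hTeq : T = insert y (S.erase x) := by
        apply Finset.Subset.antisymm
        · intro z hz
          by_cases hzS : z ∈ S.erase x
          · exact Finset.mem_insert_of_mem hzS
          · have hz' : z ∈ T \ S.erase x := Finset.mem_sdiff.mpr ⟨hz, hzS⟩
            rw [hy, Finset.mem_singleton] at hz'
            exact hz' ▸ Finset.mem_insert_self _ _
        · intro z hz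
          rcases Finset.mem_insert.1 hz with rfl | hz
          · exact hyT
          · exact hTsub hz
      rcases huniq y hynot (hTeq ▸ hTadm) with rfl | rfl
      · left; rw [hTeq, Finset.insert_erase hx]
      · right; exact hTeq
    · rintro (rfl | rfl)
      · exact ⟨hS, Finset.erase_subset _ _⟩
      · exact ⟨hfacet _ hy₂adm hT₂card, Finset.subset_insert _ _⟩
  rw [hset]
  apply Set.ncard_pair
  intro h
  have h1 : y₂ ∈ S := h ▸ Finset.mem_insert_self _ _
  exact hy₂S' (Finset.mem_erase.mpr ⟨hy₂ne, h1⟩)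
end

section
/- For an integer n ≥ 2, a subset S ⊆ V_n is a maximal admissible subset of V_n if and only if there exists a nonempty proper subset R ⊊ {1,…,n} such that S ⊆ R × ({1,…,n} ∖ R) and S is a maximal diagonal-free subset of R × ({1,…,n} ∖ R); moreover, in this case R equals the set of first coordinates of elements of S and {1,…,n} ∖ R equals the set of second coordinates of elements of S. -/
/-- A set of pairs is diagonal-free if it contains no two elements
`(i,j)`, `(h,k)` with `i < h` and `j < k`. -/
def DiagFree (S : Finset (ℕ × ℕ)) : Prop :=
  ∀ p ∈ S, ∀ q ∈ S, p.1 < q.1 → p.2 < q.2 → False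

/-- `S` is a maximal diagonal-free subset of the grid `G`. -/
def MaxDiagFreeIn (G S : Finset (ℕ × ℕ)) : Prop :=
  S ⊆ G ∧ DiagFree S ∧ ∀ T ⊆ G, DiagFree T → S ⊆ T → S = T

def ChainFree (S : Finset (ℕ × ℕ)) : Prop :=
  ∀ p ∈ S, ∀ q ∈ S, p.2 ≠ q.1

lemma segreAdmissible_iff (n : ℕ) (S : Finset (ℕ × ℕ)) :
    SegreAdmissible n S ↔ (∀ p ∈ S, VnMem n p) ∧ DiagFree S ∧ ChainFree S := by
  constructor
  · rintro ⟨hV, h⟩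
    refine ⟨hV, ?_, ?_⟩
    · rintro ⟨a, b⟩ hp ⟨c, d⟩ hq h1 h2
      obtain ⟨ha1, han, hb1, hbn, hab⟩ := hV _ hp
      obtain ⟨hc1, hcn, hd1, hdn, hcd⟩ := hV _ hq
      exact (h a c b d ha1 h1 hcn hb1 h2 hdn).2 ⟨hab, hcd⟩ ⟨hp, hq⟩
    · rintro ⟨a, m⟩ hp ⟨m', b⟩ hq heq
      simp only at heq
      subst heq
      obtain ⟨ha1, han, hm1, hmn, ham⟩ := hV _ hp
      obtain ⟨_, _, hb1, hbn, hmb⟩ := hV _ hq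
      rcases lt_or_gt_of_ne ham with ham' | ham' <;>
        rcases lt_or_gt_of_ne hmb with hmb' | hmb'
      · -- a < m, m < b : diagonal (a,m),(m,b)
        exact (h a m m b ha1 ham' hmn hm1 hmb' hbn).2 ⟨ham, hmb⟩ ⟨hp, hq⟩
      · -- a < m, b < m : clause (1) with h = k = m
        exact (h a m b m ha1 ham' hmn hb1 hmb' hmn).1 (Or.inr rfl) ⟨hp, hq⟩
      · -- m < a, m < b : clause (1) with i = j = m
        exact (h m a m b hm1 ham' han hm1 hmb' hbn).1 (Or.inl rfl) ⟨hq, hp⟩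
      · -- m < a, b < m : diagonal (m,b),(a,m)
        exact (h m a b m hm1 ham' han hb1 hmb' hmn).2 ⟨hmb, ham⟩ ⟨hq, hp⟩
  · rintro ⟨hV, hd, hc⟩
    refine ⟨hV, ?_⟩
    intro i h j k hi1 hih hhn hj1 hjk hkn
    constructor
    · rintro heq ⟨hik, hhj⟩
      rcases heq with rfl | rfl
      · exact hc (h, i) hhj (i, k) hik rfl
      · exact hc (i, h) hik (h, j) hhj rfl
    · rintro ⟨hne1, hne2⟩ ⟨hij, hhk⟩
      exact hd (i, j) hij (h, k) hhk hih hjk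

lemma extend_row (S : Finset (ℕ × ℕ)) (hd : DiagFree S) (r c0 : ℕ) :
    ∃ c, ((∀ p ∈ S, p.1 = r) ∧ c = c0 ∨ c ∈ S.image Prod.snd) ∧
      DiagFree (insert (r, c) S) := by
  by_cases hgt : ∃ p ∈ S, r < p.1
  · set T := S.filter (fun p => r < p.1) with hT
    have hTne : T.Nonempty := by
      obtain ⟨p, hp, hrp⟩ := hgt
      exact ⟨p, Finset.mem_filter.mpr ⟨hp, hrp⟩⟩
    have hTne' : (T.image Prod.snd).Nonempty := hTne.image _
    set c := (T.image Prod.snd).max' hTne' with hc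
    obtain ⟨t, ht, htc⟩ := Finset.mem_image.mp ((T.image Prod.snd).max'_mem hTne')
    have htS : t ∈ S := (Finset.mem_filter.mp ht).1
    have htr : r < t.1 := (Finset.mem_filter.mp ht).2
    refine ⟨c, Or.inr (Finset.mem_image.mpr ⟨t, htS, htc⟩), ?_⟩
    intro p hp q hq h1 h2
    rcases Finset.mem_insert.mp hp with rfl | hpS <;>
      rcases Finset.mem_insert.mp hq with rfl | hqS
    · exact lt_irrefl _ h1
    · have hqT : q ∈ T := Finset.mem_filter.mpr ⟨hqS, h1⟩
      have : q.2 ≤ c := Finset.le_max' _ _ (Finset.mem_image.mpr ⟨q, hqT, rfl⟩)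
      exact absurd h2 (not_lt.mpr this)
    · exact hd p hpS t htS (h1.trans htr) (htc ▸ h2)
    · exact hd p hpS q hqS h1 h2
  · by_cases hlt : ∃ p ∈ S, p.1 < r
    · set T := S.filter (fun p => p.1 < r) with hT
      have hTne : T.Nonempty := by
        obtain ⟨p, hp, hrp⟩ := hlt
        exact ⟨p, Finset.mem_filter.mpr ⟨hp, hrp⟩⟩
      have hTne' : (T.image Prod.snd).Nonempty := hTne.image _
      set c := (T.image Prod.snd).min' hTne' with hc
      obtain ⟨t, ht, htc⟩ := Finset.mem_image.mp ((T.image Prod.snd).min'_mem hTne')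
      have htS : t ∈ S := (Finset.mem_filter.mp ht).1
      refine ⟨c, Or.inr (Finset.mem_image.mpr ⟨t, htS, htc⟩), ?_⟩
      intro p hp q hq h1 h2
      rcases Finset.mem_insert.mp hp with rfl | hpS <;>
        rcases Finset.mem_insert.mp hq with rfl | hqS
      · exact lt_irrefl _ h1
      · exact hgt ⟨q, hqS, h1⟩
      · have hpT : p ∈ T := Finset.mem_filter.mpr ⟨hpS, h1⟩
        have : c ≤ p.2 := Finset.min'_le _ _ (Finset.mem_image.mpr ⟨p, hpT, rfl⟩)
        exact absurd h2 (not_lt.mpr this)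
      · exact hd p hpS q hqS h1 h2
    · refine ⟨c0, Or.inl ⟨fun p hp => le_antisymm ?_ ?_, rfl⟩, ?_⟩
      · exact not_lt.mp fun h => hgt ⟨p, hp, h⟩
      · exact not_lt.mp fun h => hlt ⟨p, hp, h⟩
      · intro p hp q hq h1 h2
        rcases Finset.mem_insert.mp hp with rfl | hpS <;>
          rcases Finset.mem_insert.mp hq with rfl | hqS
        · exact lt_irrefl _ h1
        · exact hgt ⟨q, hqS, h1⟩
        · exact hlt ⟨p, hpS, h1⟩
        · exact hd p hpS q hqS h1 h2

lemma extend_col (S : Finset (ℕ × ℕ)) (hd : DiagFree S) (c r0 : ℕ) :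
    ∃ r, ((∀ p ∈ S, p.2 = c) ∧ r = r0 ∨ r ∈ S.image Prod.fst) ∧
      DiagFree (insert (r, c) S) := by
  by_cases hgt : ∃ p ∈ S, c < p.2
  · set T := S.filter (fun p => c < p.2) with hT
    have hTne : T.Nonempty := by
      obtain ⟨p, hp, hrp⟩ := hgt
      exact ⟨p, Finset.mem_filter.mpr ⟨hp, hrp⟩⟩
    have hTne' : (T.image Prod.fst).Nonempty := hTne.image _
    set r := (T.image Prod.fst).max' hTne' with hr
    obtain ⟨t, ht, htr⟩ := Finset.mem_image.mp ((T.image Prod.fst).max'_mem hTne')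
    have htS : t ∈ S := (Finset.mem_filter.mp ht).1
    have htc : c < t.2 := (Finset.mem_filter.mp ht).2
    refine ⟨r, Or.inr (Finset.mem_image.mpr ⟨t, htS, htr⟩), ?_⟩
    intro p hp q hq h1 h2
    rcases Finset.mem_insert.mp hp with rfl | hpS <;>
      rcases Finset.mem_insert.mp hq with rfl | hqS
    · exact lt_irrefl _ h1
    · have hqT : q ∈ T := Finset.mem_filter.mpr ⟨hqS, h2⟩
      have : q.1 ≤ r := Finset.le_max' _ _ (Finset.mem_image.mpr ⟨q, hqT, rfl⟩)
      exact absurd h1 (not_lt.mpr this)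
    · exact hd p hpS t htS (htr ▸ h1) (h2.trans htc)
    · exact hd p hpS q hqS h1 h2
  · by_cases hlt : ∃ p ∈ S, p.2 < c
    · set T := S.filter (fun p => p.2 < c) with hT
      have hTne : T.Nonempty := by
        obtain ⟨p, hp, hrp⟩ := hlt
        exact ⟨p, Finset.mem_filter.mpr ⟨hp, hrp⟩⟩
      have hTne' : (T.image Prod.fst).Nonempty := hTne.image _
      set r := (T.image Prod.fst).min' hTne' with hr
      obtain ⟨t, ht, htr⟩ := Finset.mem_image.mp ((T.image Prod.fst).min'_mem hTne')
      have htS : t ∈ S := (Finset.mem_filter.mp ht).1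
      refine ⟨r, Or.inr (Finset.mem_image.mpr ⟨t, htS, htr⟩), ?_⟩
      intro p hp q hq h1 h2
      rcases Finset.mem_insert.mp hp with rfl | hpS <;>
        rcases Finset.mem_insert.mp hq with rfl | hqS
      · exact lt_irrefl _ h1
      · exact hgt ⟨q, hqS, h2⟩
      · have hpT : p ∈ T := Finset.mem_filter.mpr ⟨hpS, h2⟩
        have : r ≤ p.1 := Finset.min'_le _ _ (Finset.mem_image.mpr ⟨p, hpT, rfl⟩)
        exact absurd h1 (not_lt.mpr this)
      · exact hd p hpS q hqS h1 h2
    · refine ⟨r0, Or.inl ⟨fun p hp => le_antisymm ?_ ?_, rfl⟩, ?_⟩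
      · exact not_lt.mp fun h => hgt ⟨p, hp, h⟩
      · exact not_lt.mp fun h => hlt ⟨p, hp, h⟩
      · intro p hp q hq h1 h2
        rcases Finset.mem_insert.mp hp with rfl | hpS <;>
          rcases Finset.mem_insert.mp hq with rfl | hqS
        · exact lt_irrefl _ h1
        · exact hgt ⟨q, hqS, h2⟩
        · exact hlt ⟨p, hpS, h2⟩
        · exact hd p hpS q hqS h1 h2

lemma imagesEq (n : ℕ) (S : Finset (ℕ × ℕ)) (R : Finset ℕ)
    (hRne : R.Nonempty) (hRsub : R ⊆ Finset.Icc 1 n) (hRneq : R ≠ Finset.Icc 1 n)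
    (hSsub : S ⊆ R ×ˢ (Finset.Icc 1 n \ R))
    (hmax : MaxDiagFreeIn (R ×ˢ (Finset.Icc 1 n \ R)) S) :
    R = S.image Prod.fst ∧ Finset.Icc 1 n \ R = S.image Prod.snd := by
  obtain ⟨hsub, hd, hm⟩ := hmax
  have hCne : (Finset.Icc 1 n \ R).Nonempty := by
    rw [Finset.sdiff_nonempty]
    intro h
    exact hRneq (Finset.Subset.antisymm hRsub h)
  obtain ⟨c0, hc0⟩ := hCne
  obtain ⟨r0, hr0⟩ := hRne
  have hA : S.image Prod.fst ⊆ R := by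
    intro a ha
    obtain ⟨p, hp, rfl⟩ := Finset.mem_image.mp ha
    exact (Finset.mem_product.mp (hSsub hp)).1
  have hB : S.image Prod.snd ⊆ Finset.Icc 1 n \ R := by
    intro b hb
    obtain ⟨p, hp, rfl⟩ := Finset.mem_image.mp hb
    exact (Finset.mem_product.mp (hSsub hp)).2
  constructor
  · refine Finset.Subset.antisymm (fun r hr => ?_) hA
    obtain ⟨c, hc, hdf⟩ := extend_row S hd r c0
    have hcC : c ∈ Finset.Icc 1 n \ R := by
      rcases hc with ⟨_, rfl⟩ | hc
      · exact hc0
      · exact hB hc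
    have heq : S = insert (r, c) S := by
      refine hm _ ?_ hdf (Finset.subset_insert _ _)
      exact Finset.insert_subset (Finset.mem_product.mpr ⟨hr, hcC⟩) hsub
    exact Finset.mem_image.mpr ⟨(r, c), heq ▸ Finset.mem_insert_self _ _, rfl⟩
  · refine Finset.Subset.antisymm (fun c hcC => ?_) hB
    obtain ⟨r, hrm, hdf⟩ := extend_col S hd c r0
    have hrR : r ∈ R := by
      rcases hrm with ⟨_, rfl⟩ | hrm
      · exact hr0
      · exact hA hrm
    have heq : S = insert (r, c) S := by
      refine hm _ ?_ hdf (Finset.subset_insert _ _)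
      exact Finset.insert_subset (Finset.mem_product.mpr ⟨hrR, hcC⟩) hsub
    exact Finset.mem_image.mpr ⟨(r, c), heq ▸ Finset.mem_insert_self _ _, rfl⟩

/-- A subset `S ⊆ V_n` is a maximal admissible subset of `V_n` iff there is a
nonempty proper subset `R ⊊ {1,…,n}` with `S ⊆ R × ({1,…,n} \ R)` and `S` a
maximal diagonal-free subset of `R × ({1,…,n} \ R)`; moreover, in this case
`R` is the set of first coordinates of `S` and `{1,…,n} \ R` is the set of
second coordinates of `S`. -/
theorem maxSegreAdmissible_iff_maxDiagFree (n : ℕ) (hn : 2 ≤ n)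
    (S : Finset (ℕ × ℕ)) (hS : ∀ p ∈ S, VnMem n p) :
    (MaxSegreAdmissible n S ↔
      ∃ R : Finset ℕ, R.Nonempty ∧ R ⊆ Finset.Icc 1 n ∧ R ≠ Finset.Icc 1 n ∧
        S ⊆ R ×ˢ (Finset.Icc 1 n \ R) ∧
        MaxDiagFreeIn (R ×ˢ (Finset.Icc 1 n \ R)) S) ∧
    (∀ R : Finset ℕ, R.Nonempty → R ⊆ Finset.Icc 1 n → R ≠ Finset.Icc 1 n →
      S ⊆ R ×ˢ (Finset.Icc 1 n \ R) →
      MaxDiagFreeIn (R ×ˢ (Finset.Icc 1 n \ R)) S →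
      R = S.image Prod.fst ∧ Finset.Icc 1 n \ R = S.image Prod.snd) := by
  refine ⟨?_, fun R h1 h2 h3 h4 h5 => imagesEq n S R h1 h2 h3 h4 h5⟩
  constructor
  · rintro ⟨hadm, hmaxS⟩
    rw [segreAdmissible_iff] at hadm
    obtain ⟨hV, hd, hc⟩ := hadm
    -- first and second coordinate images
    set A := S.image Prod.fst with hAdef
    set B := S.image Prod.snd with hBdef
    have hAI : A ⊆ Finset.Icc 1 n := by
      intro a ha
      obtain ⟨p, hp, rfl⟩ := Finset.mem_image.mp ha
      obtain ⟨h1, h2, _⟩ := hV p hp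
      exact Finset.mem_Icc.mpr ⟨h1, h2⟩
    have hBI : B ⊆ Finset.Icc 1 n := by
      intro b hb
      obtain ⟨p, hp, rfl⟩ := Finset.mem_image.mp hb
      obtain ⟨_, _, h3, h4, _⟩ := hV p hp
      exact Finset.mem_Icc.mpr ⟨h3, h4⟩
    have hdisj : ∀ a ∈ A, a ∉ B := by
      intro a ha hb
      obtain ⟨p, hp, hp'⟩ := Finset.mem_image.mp ha
      obtain ⟨q, hq, hq'⟩ := Finset.mem_image.mp hb
      exact hc q hq p hp (hq'.trans hp'.symm)
    -- S is nonempty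
    have hSne : S.Nonempty := by
      rw [Finset.nonempty_iff_ne_empty]
      intro hSe
      have hadm12 : SegreAdmissible n (insert ((1 : ℕ), (2 : ℕ)) S) := by
        rw [segreAdmissible_iff, hSe]
        refine ⟨?_, ?_, ?_⟩
        · intro p hp
          simp only [Finset.mem_insert, Finset.notMem_empty, or_false] at hp
          subst hp
          exact ⟨le_refl 1, by omega, by omega, hn, by omega⟩
        · intro p hp q hq h1 h2
          simp only [Finset.mem_insert, Finset.notMem_empty, or_false] at hp hq
          subst hp; subst hq
          exact lt_irrefl _ h1
        · intro p hp q hq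
          simp only [Finset.mem_insert, Finset.notMem_empty, or_false] at hp hq
          subst hp; subst hq
          simp
      have := hmaxS _ hadm12 (by rw [hSe]; exact Finset.empty_subset _)
      rw [hSe] at this
      exact (Finset.insert_ne_empty _ _) this.symm
    -- every m in Icc 1 n is in A or B
    have hcover : ∀ m ∈ Finset.Icc 1 n, m ∉ A → m ∈ B := by
      intro m hmI hmA
      by_contra hmB
      obtain ⟨c, hcm, hdf⟩ := extend_row S hd m 0
      have hcB : c ∈ B := by
        rcases hcm with ⟨hall, _⟩ | hcm
        · obtain ⟨p, hp⟩ := hSne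
          exact absurd (Finset.mem_image.mpr ⟨p, hp, hall p hp⟩) hmA
        · exact hcm
      have hcI := hBI hcB
      have hmc : m ≠ c := fun h => hmB (h ▸ hcB)
      have hadm' : SegreAdmissible n (insert (m, c) S) := by
        rw [segreAdmissible_iff]
        refine ⟨?_, hdf, ?_⟩
        · intro p hp
          rcases Finset.mem_insert.mp hp with rfl | hp
          · obtain ⟨h1, h2⟩ := Finset.mem_Icc.mp hmI
            obtain ⟨h3, h4⟩ := Finset.mem_Icc.mp hcI
            exact ⟨h1, h2, h3, h4, hmc⟩
          · exact hV p hp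
        · intro p hp q hq
          rcases Finset.mem_insert.mp hp with rfl | hpS <;>
            rcases Finset.mem_insert.mp hq with rfl | hqS
          · exact fun h => hmc h.symm
          · intro h
            exact hdisj q.1 (Finset.mem_image.mpr ⟨q, hqS, rfl⟩) (h ▸ hcB)
          · intro h
            exact hmB (Finset.mem_image.mpr ⟨p, hpS, h⟩)
          · exact hc p hpS q hqS
      have heq := hmaxS _ hadm' (Finset.subset_insert _ _)
      exact hmA (Finset.mem_image.mpr ⟨(m, c), heq ▸ Finset.mem_insert_self _ _, rfl⟩)
    have hBeq : B = Finset.Icc 1 n \ A := by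
      apply Finset.Subset.antisymm
      · intro b hb
        exact Finset.mem_sdiff.mpr ⟨hBI hb, fun ha => hdisj b ha hb⟩
      · intro m hm
        obtain ⟨hmI, hmA⟩ := Finset.mem_sdiff.mp hm
        exact hcover m hmI hmA
    have hAne : A.Nonempty := hSne.image _
    have hBne : B.Nonempty := hSne.image _
    have hAneq : A ≠ Finset.Icc 1 n := by
      intro h
      obtain ⟨b, hb⟩ := hBne
      exact hdisj b (h ▸ hBI hb) hb
    have hSsub : S ⊆ A ×ˢ (Finset.Icc 1 n \ A) := by
      intro p hp
      refine Finset.mem_product.mpr ⟨Finset.mem_image.mpr ⟨p, hp, rfl⟩, ?_⟩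
      rw [← hBeq]
      exact Finset.mem_image.mpr ⟨p, hp, rfl⟩
    refine ⟨A, hAne, hAI, hAneq, hSsub, hSsub, hd, ?_⟩
    intro T hT hdT hST
    refine hmaxS T ?_ hST
    rw [segreAdmissible_iff]
    refine ⟨?_, hdT, ?_⟩
    · intro p hp
      obtain ⟨hp1, hp2⟩ := Finset.mem_product.mp (hT hp)
      obtain ⟨h1, h2⟩ := Finset.mem_Icc.mp (hAI hp1)
      obtain ⟨hI2, hA2⟩ := Finset.mem_sdiff.mp hp2
      obtain ⟨h3, h4⟩ := Finset.mem_Icc.mp hI2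
      exact ⟨h1, h2, h3, h4, fun h => hA2 (h ▸ hp1)⟩
    · intro p hp q hq h
      obtain ⟨_, hp2⟩ := Finset.mem_product.mp (hT hp)
      obtain ⟨hq1, _⟩ := Finset.mem_product.mp (hT hq)
      exact (Finset.mem_sdiff.mp hp2).2 (h ▸ hq1)
  · rintro ⟨R, hRne, hRsub, hRneq, hSsub, hmax⟩
    obtain ⟨hReq, hCeq⟩ := imagesEq n S R hRne hRsub hRneq hSsub hmax
    obtain ⟨hsub, hd, hm⟩ := hmax
    have hmemR : ∀ p ∈ S, p.1 ∈ R ∧ p.2 ∈ Finset.Icc 1 n \ R := fun p hp =>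
      Finset.mem_product.mp (hSsub hp)
    constructor
    · rw [segreAdmissible_iff]
      refine ⟨hS, hd, ?_⟩
      intro p hp q hq h
      obtain ⟨_, hp2⟩ := hmemR p hp
      obtain ⟨hq1, _⟩ := hmemR q hq
      exact (Finset.mem_sdiff.mp hp2).2 (h ▸ hq1)
    · intro T hTadm hST
      rw [segreAdmissible_iff] at hTadm
      obtain ⟨hVT, hdT, hcT⟩ := hTadm
      refine hm T ?_ hdT hST
      intro p hp
      obtain ⟨h1, h2, h3, h4, h5⟩ := hVT p hp
      refine Finset.mem_product.mpr ⟨?_, ?_⟩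
      · by_contra hp1
        have : p.1 ∈ Finset.Icc 1 n \ R :=
          Finset.mem_sdiff.mpr ⟨Finset.mem_Icc.mpr ⟨h1, h2⟩, hp1⟩
        rw [hCeq] at this
        obtain ⟨q, hq, hq'⟩ := Finset.mem_image.mp this
        exact hcT q (hST hq) p hp hq'
      · refine Finset.mem_sdiff.mpr ⟨Finset.mem_Icc.mpr ⟨h3, h4⟩, ?_⟩
        intro hp2
        rw [hReq] at hp2
        obtain ⟨q, hq, hq'⟩ := Finset.mem_image.mp hp2
        exact hcT p hp q (hST hq) hq'.symm
end

section
/- Let a, b ≥ 1 be integers, let P be a maximal diagonal-free subset of the grid {1,…,a} × {1,…,b}, and let x ∈ P. If every index i ∈ {1,…,a} occurs as the first coordinate of some element of P ∖ {x} and every index j ∈ {1,…,b} occurs as the second coordinate of some element of P ∖ {x}, then exactly two maximal diagonal-free subsets of the grid contain P ∖ {x}; otherwise, P is the unique maximal diagonal-free subset of the grid containing P ∖ {x}. -/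
lemma df_apply {S : Finset (ℕ × ℕ)} (h : DiagFree S) {p1 p2 q1 q2 : ℕ}
    (hp : (p1, p2) ∈ S) (hq : (q1, q2) ∈ S) (h1 : p1 < q1) (h2 : p2 < q2) : False :=
  h (p1, p2) hp (q1, q2) hq h1 h2

lemma df_mono {S T : Finset (ℕ × ℕ)} (hST : S ⊆ T) (hT : DiagFree T) : DiagFree S :=
  fun p hp q hq h1 h2 => hT p (hST hp) q (hST hq) h1 h2

lemma df_insert {S : Finset (ℕ × ℕ)} {g1 g2 : ℕ} (hS : DiagFree S)
    (h1 : ∀ p1 p2, (p1, p2) ∈ S → p1 < g1 → p2 < g2 → False)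
    (h2 : ∀ p1 p2, (p1, p2) ∈ S → g1 < p1 → g2 < p2 → False) :
    DiagFree (insert (g1, g2) S) := by
  rintro ⟨a1, a2⟩ ha ⟨b1, b2⟩ hb hab1 hab2
  rcases Finset.mem_insert.mp ha with h | ha <;>
    rcases Finset.mem_insert.mp hb with h' | hb <;>
      simp only [Prod.mk.injEq] at *
  · omega
  · exact h2 b1 b2 hb (by omega) (by omega)
  · exact h1 a1 a2 ha (by omega) (by omega)
  · exact hS _ ha _ hb hab1 hab2

lemma mem_grid {a b i j : ℕ} :
    (i, j) ∈ Finset.Icc 1 a ×ˢ Finset.Icc 1 b ↔ 1 ≤ i ∧ i ≤ a ∧ 1 ≤ j ∧ j ≤ b := by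
  simp [Finset.mem_product, Finset.mem_Icc]; omega

lemma maxDiagFreeIn_iff {G S : Finset (ℕ × ℕ)} :
    MaxDiagFreeIn G S ↔ S ⊆ G ∧ DiagFree S ∧ ∀ g ∈ G, DiagFree (insert g S) → g ∈ S := by
  constructor
  · rintro ⟨hSG, hDF, hmax⟩
    refine ⟨hSG, hDF, fun g hg hdf => ?_⟩
    have h := hmax (insert g S) (Finset.insert_subset hg hSG) hdf (Finset.subset_insert _ _)
    rw [h]; exact Finset.mem_insert_self _ _
  · rintro ⟨hSG, hDF, hsat⟩
    refine ⟨hSG, hDF, fun T hTG hTdf hST => ?_⟩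
    refine Finset.Subset.antisymm hST fun t ht => ?_
    have hsub : insert t S ⊆ T := Finset.insert_subset ht hST
    exact hsat t (hTG ht) (fun p hp q hq h1 h2 => hTdf p (hsub hp) q (hsub hq) h1 h2)

lemma row_support {a b : ℕ} (hb : 1 ≤ b) {S : Finset (ℕ × ℕ)}
    (hS : MaxDiagFreeIn (Finset.Icc 1 a ×ˢ Finset.Icc 1 b) S)
    {i : ℕ} (hi1 : 1 ≤ i) (hi2 : i ≤ a) : ∃ j, (i, j) ∈ S := by
  obtain ⟨hSG, hDF, hsat⟩ := maxDiagFreeIn_iff.mp hS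
  have hG : ∀ p ∈ S, 1 ≤ p.1 ∧ p.1 ≤ a ∧ 1 ≤ p.2 ∧ p.2 ≤ b := by
    rintro ⟨p1, p2⟩ hp
    exact mem_grid.mp (hSG hp)
  by_cases hne : (S.filter (fun p => i < p.1)).Nonempty
  · obtain ⟨t, ht, htmax⟩ := Finset.exists_max_image _ (fun p => p.2) hne
    obtain ⟨t1, t2⟩ := t
    rw [Finset.mem_filter] at ht
    have htG := hG _ ht.1
    refine ⟨t2, hsat _ (mem_grid.mpr (by simp at htG ht ⊢; omega)) (df_insert hDF ?_ ?_)⟩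
    · intro p1 p2 hp h1 h2
      exact df_apply hDF hp ht.1 (by simp at ht; omega) h2
    · intro p1 p2 hp h1 h2
      have := htmax _ (Finset.mem_filter.mpr ⟨hp, h1⟩)
      simp at this; omega
  · refine ⟨1, hsat _ (mem_grid.mpr (by omega)) (df_insert hDF ?_ ?_)⟩
    · intro p1 p2 hp h1 h2
      have := hG _ hp; simp at this; omega
    · intro p1 p2 hp h1 h2
      exact hne ⟨(p1, p2), Finset.mem_filter.mpr ⟨hp, h1⟩⟩

lemma col_support {a b : ℕ} (ha : 1 ≤ a) {S : Finset (ℕ × ℕ)}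
    (hS : MaxDiagFreeIn (Finset.Icc 1 a ×ˢ Finset.Icc 1 b) S)
    {j : ℕ} (hj1 : 1 ≤ j) (hj2 : j ≤ b) : ∃ i, (i, j) ∈ S := by
  obtain ⟨hSG, hDF, hsat⟩ := maxDiagFreeIn_iff.mp hS
  have hG : ∀ p ∈ S, 1 ≤ p.1 ∧ p.1 ≤ a ∧ 1 ≤ p.2 ∧ p.2 ≤ b := by
    rintro ⟨p1, p2⟩ hp
    exact mem_grid.mp (hSG hp)
  by_cases hne : (S.filter (fun p => j < p.2)).Nonempty
  · obtain ⟨t, ht, htmax⟩ := Finset.exists_max_image _ (fun p => p.1) hne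
    obtain ⟨t1, t2⟩ := t
    rw [Finset.mem_filter] at ht
    have htG := hG _ ht.1
    refine ⟨t1, hsat _ (mem_grid.mpr (by simp at htG ht ⊢; omega)) (df_insert hDF ?_ ?_)⟩
    · intro p1 p2 hp h1 h2
      exact df_apply hDF hp ht.1 h1 (by simp at ht; omega)
    · intro p1 p2 hp h1 h2
      have := htmax _ (Finset.mem_filter.mpr ⟨hp, h2⟩)
      simp at this; omega
  · refine ⟨1, hsat _ (mem_grid.mpr (by omega)) (df_insert hDF ?_ ?_)⟩
    · intro p1 p2 hp h1 h2
      have := hG _ hp; simp at this; omega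
    · intro p1 p2 hp h1 h2
      exact hne ⟨(p1, p2), Finset.mem_filter.mpr ⟨hp, h2⟩⟩

lemma corner {a b : ℕ} {P : Finset (ℕ × ℕ)}
    (hP : MaxDiagFreeIn (Finset.Icc 1 a ×ˢ Finset.Icc 1 b) P)
    {i j : ℕ} (hx : (i, j) ∈ P)
    (hrow : ∃ j', (i, j') ∈ P.erase (i, j))
    (hcol : ∃ i', (i', j) ∈ P.erase (i, j)) :
    ((i, j + 1) ∈ P ∧ (i + 1, j) ∈ P) ∨
      ((i, j - 1) ∈ P ∧ (i - 1, j) ∈ P ∧ 2 ≤ i ∧ 2 ≤ j) := by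
  obtain ⟨hSG, hDF, hsat⟩ := maxDiagFreeIn_iff.mp hP
  have hG : ∀ p ∈ P, 1 ≤ p.1 ∧ p.1 ≤ a ∧ 1 ≤ p.2 ∧ p.2 ≤ b := by
    rintro ⟨p1, p2⟩ hp
    exact mem_grid.mp (hSG hp)
  obtain ⟨j', hj'⟩ := hrow
  obtain ⟨i', hi'⟩ := hcol
  simp only [Finset.mem_erase, ne_eq, Prod.mk.injEq, not_and] at hj' hi'
  obtain ⟨hj'ne, hj'P⟩ := hj'
  obtain ⟨hi'ne, hi'P⟩ := hi'
  have hxB := hG _ hx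
  have hj'B := hG _ hj'P
  have hi'B := hG _ hi'P
  simp only at hxB hj'B hi'B
  have hj'j : j' ≠ j := fun h => hj'ne trivial h
  have hi'i : i' ≠ i := by intro h; exact hi'ne h trivial
  rcases lt_or_gt_of_ne hj'j with hlt | hgt
  · -- j' < j : lower-left corner
    right
    have hii' : i' < i := by
      rcases lt_or_gt_of_ne hi'i with h | h
      · exact h
      · exact absurd (df_apply hDF hj'P hi'P h hlt) (by simp)
    have h2i : 2 ≤ i := by omega
    have h2j : 2 ≤ j := by omega
    refine ⟨?_, ?_, h2i, h2j⟩
    · refine hsat _ (mem_grid.mpr (by omega)) (df_insert hDF ?_ ?_)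
      · intro p1 p2 hp h1 h2
        exact df_apply hDF hp hx h1 (by omega)
      · intro p1 p2 hp h1 h2
        exact df_apply hDF hj'P hp h1 (by omega)
    · refine hsat _ (mem_grid.mpr (by omega)) (df_insert hDF ?_ ?_)
      · intro p1 p2 hp h1 h2
        exact df_apply hDF hp hx (by omega) h2
      · intro p1 p2 hp h1 h2
        rcases Nat.lt_or_ge i p1 with h | h
        · exact df_apply hDF hx hp h h2
        · exact df_apply hDF hi'P hp (by omega) h2
  · -- j < j' : upper-right corner
    left
    have hii' : i < i' := by
      rcases lt_or_gt_of_ne hi'i with h | h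
      · exact absurd (df_apply hDF hi'P hj'P h hgt) (by simp)
      · exact h
    constructor
    · refine hsat _ (mem_grid.mpr (by omega)) (df_insert hDF ?_ ?_)
      · intro p1 p2 hp h1 h2
        exact df_apply hDF hp hj'P h1 (by omega)
      · intro p1 p2 hp h1 h2
        exact df_apply hDF hx hp (by omega) (by omega)
    · refine hsat _ (mem_grid.mpr (by omega)) (df_insert hDF ?_ ?_)
      · intro p1 p2 hp h1 h2
        rcases Nat.lt_or_ge p1 i with h | h
        · exact df_apply hDF hp hx h h2
        · exact df_apply hDF hp hi'P (by omega) h2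
      · intro p1 p2 hp h1 h2
        exact df_apply hDF hx hp (by omega) h2

lemma two_sols {G P Q' E : Finset (ℕ × ℕ)} (hP : MaxDiagFreeIn G P) (hQ' : MaxDiagFreeIn G Q')
    (hEP : E ⊆ P) (hEQ : E ⊆ Q') (hne : P ≠ Q')
    (hdich : ∀ Q, MaxDiagFreeIn G Q → E ⊆ Q → Q = P ∨ Q = Q') :
    {Q : Finset (ℕ × ℕ) | MaxDiagFreeIn G Q ∧ E ⊆ Q}.ncard = 2 := by
  have hset : {Q : Finset (ℕ × ℕ) | MaxDiagFreeIn G Q ∧ E ⊆ Q} = {P, Q'} := by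
    ext Q
    simp only [Set.mem_setOf_eq, Set.mem_insert_iff, Set.mem_singleton_iff]
    constructor
    · rintro ⟨h1, h2⟩; exact hdich Q h1 h2
    · rintro (rfl | rfl)
      exacts [⟨hP, hEP⟩, ⟨hQ', hEQ⟩]
  rw [hset, Set.ncard_pair hne]

/-- Removing a point `x` from a maximal diagonal-free subset `P` of the grid
`{1,…,a} × {1,…,b}`: if `P \ {x}` still has full support (every row index and
every column index occurs), then exactly two maximal diagonal-free subsets of
the grid contain `P \ {x}`; otherwise `P` is the unique maximal diagonal-free
subset of the grid containing `P \ {x}`. -/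
theorem maxDiagFree_erase_dichotomy (a b : ℕ) (ha : 1 ≤ a) (hb : 1 ≤ b)
    (P : Finset (ℕ × ℕ))
    (hP : MaxDiagFreeIn (Finset.Icc 1 a ×ˢ Finset.Icc 1 b) P)
    (x : ℕ × ℕ) (hx : x ∈ P) :
    (((∀ i ∈ Finset.Icc 1 a, ∃ j, (i, j) ∈ P.erase x) ∧
      (∀ j ∈ Finset.Icc 1 b, ∃ i, (i, j) ∈ P.erase x)) →
      {Q : Finset (ℕ × ℕ) |
        MaxDiagFreeIn (Finset.Icc 1 a ×ˢ Finset.Icc 1 b) Q ∧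
        P.erase x ⊆ Q}.ncard = 2) ∧
    ((¬ ((∀ i ∈ Finset.Icc 1 a, ∃ j, (i, j) ∈ P.erase x) ∧
      (∀ j ∈ Finset.Icc 1 b, ∃ i, (i, j) ∈ P.erase x))) →
      {Q : Finset (ℕ × ℕ) |
        MaxDiagFreeIn (Finset.Icc 1 a ×ˢ Finset.Icc 1 b) Q ∧
        P.erase x ⊆ Q} = {P}) := by
  obtain ⟨i, j⟩ := x
  obtain ⟨hPG, hDF, hPsat⟩ := maxDiagFreeIn_iff.mp hP
  have hxB := mem_grid.mp (hPG hx)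
  constructor
  · -- full support: exactly two extensions
    rintro ⟨hA, hB⟩
    have hrow := hA i (Finset.mem_Icc.mpr ⟨hxB.1, hxB.2.1⟩)
    have hcol := hB j (Finset.mem_Icc.mpr ⟨hxB.2.2.1, hxB.2.2.2⟩)
    have hDFE : DiagFree (P.erase (i, j)) := df_mono (Finset.erase_subset _ _) hDF
    rcases corner hP hx hrow hcol with ⟨hr, hc⟩ | ⟨hr, hc, h2i, h2j⟩
    · -- case A : y = (i+1, j+1)
      have hrB := mem_grid.mp (hPG hr)
      have hcB := mem_grid.mp (hPG hc)
      have hrE : (i, j + 1) ∈ P.erase (i, j) :=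
        Finset.mem_erase.mpr ⟨by simp, hr⟩
      have hcE : (i + 1, j) ∈ P.erase (i, j) :=
        Finset.mem_erase.mpr ⟨by simp, hc⟩
      have hynP : (i + 1, j + 1) ∉ P := fun h => df_apply hDF hx h (by omega) (by omega)
      have hQ'df : DiagFree (insert (i + 1, j + 1) (P.erase (i, j))) := by
        refine df_insert hDFE ?_ ?_
        · intro p1 p2 hp h1 h2
          rw [Finset.mem_erase] at hp
          rcases Nat.lt_or_ge p1 i with h | h
          · exact df_apply hDF hp.2 hr h (by omega)
          · have hp1 : p1 = i := by omega
            have hp2 : p2 ≠ j := fun h' => hp.1 (by rw [hp1, h'])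
            exact df_apply hDF hp.2 hc (by omega) (by omega)
        · intro p1 p2 hp h1 h2
          rw [Finset.mem_erase] at hp
          exact df_apply hDF hx hp.2 (by omega) (by omega)
      have hQ'G : insert (i + 1, j + 1) (P.erase (i, j)) ⊆ Finset.Icc 1 a ×ˢ Finset.Icc 1 b :=
        Finset.insert_subset (mem_grid.mpr (by omega)) ((Finset.erase_subset _ _).trans hPG)
      have hQ'max : MaxDiagFreeIn (Finset.Icc 1 a ×ˢ Finset.Icc 1 b)
          (insert (i + 1, j + 1) (P.erase (i, j))) := by
        refine maxDiagFreeIn_iff.mpr ⟨hQ'G, hQ'df, ?_⟩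
        rintro ⟨u, v⟩ hgG hdf
        by_cases hgy : ((u, v) : ℕ × ℕ) = (i + 1, j + 1)
        · rw [hgy]; exact Finset.mem_insert_self _ _
        by_cases hgP : ((u, v) : ℕ × ℕ) ∈ P
        · by_cases hgx : ((u, v) : ℕ × ℕ) = (i, j)
          · exact absurd (df_apply hdf (hgx ▸ Finset.mem_insert_self _ _)
              (Finset.mem_insert_of_mem (Finset.mem_insert_self _ _))
              (Nat.lt_succ_self i) (Nat.lt_succ_self j)) not_false
          · exact Finset.mem_insert_of_mem (Finset.mem_erase.mpr ⟨hgx, hgP⟩)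
        · exfalso
          apply hgP
          refine hPsat _ hgG (df_insert hDF ?_ ?_)
          · intro p1 p2 hp h1 h2
            by_cases hpx : ((p1, p2) : ℕ × ℕ) = (i, j)
            · rw [Prod.mk.injEq] at hpx
              rcases Nat.lt_or_ge (j + 1) v with h | h
              · exact df_apply hdf
                  (Finset.mem_insert_of_mem (Finset.mem_insert_of_mem hrE))
                  (Finset.mem_insert_self _ _) (by omega) h
              · have hv : v = j + 1 := by omega
                have hu : u ≠ i + 1 := fun h' => hgy (by rw [h', hv])
                exact df_apply hdf
                  (Finset.mem_insert_of_mem (Finset.mem_insert_of_mem hcE))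
                  (Finset.mem_insert_self _ _) (by omega) (by omega)
            · exact df_apply hdf
                (Finset.mem_insert_of_mem (Finset.mem_insert_of_mem
                  (Finset.mem_erase.mpr ⟨hpx, hp⟩)))
                (Finset.mem_insert_self _ _) h1 h2
          · intro p1 p2 hp h1 h2
            by_cases hpx : ((p1, p2) : ℕ × ℕ) = (i, j)
            · rw [Prod.mk.injEq] at hpx
              exact df_apply hdf (Finset.mem_insert_self _ _)
                (Finset.mem_insert_of_mem (Finset.mem_insert_of_mem hcE))
                (by omega) (by omega)
            · exact df_apply hdf (Finset.mem_insert_self _ _)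
                (Finset.mem_insert_of_mem (Finset.mem_insert_of_mem
                  (Finset.mem_erase.mpr ⟨hpx, hp⟩))) h1 h2
      have hne : P ≠ insert (i + 1, j + 1) (P.erase (i, j)) :=
        fun h => hynP (by rw [h]; exact Finset.mem_insert_self _ _)
      refine two_sols hP hQ'max (Finset.erase_subset _ _) (Finset.subset_insert _ _) hne ?_
      intro Q hQ hEQ
      obtain ⟨hQG, hQDF, hQsat⟩ := maxDiagFreeIn_iff.mp hQ
      by_cases hxQ : ((i, j) : ℕ × ℕ) ∈ Q
      · left
        have hPQ : P ⊆ Q := by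
          intro p hp
          by_cases hpx : p = (i, j)
          · rw [hpx]; exact hxQ
          · exact hEQ (Finset.mem_erase.mpr ⟨hpx, hp⟩)
        exact (hP.2.2 Q hQG hQDF hPQ).symm
      by_cases hyQ : ((i + 1, j + 1) : ℕ × ℕ) ∈ Q
      · right
        exact (hQ'max.2.2 Q hQG hQDF (Finset.insert_subset hyQ hEQ)).symm
      exfalso
      apply hxQ
      refine hQsat _ (mem_grid.mpr (by omega)) (df_insert hQDF ?_ ?_)
      · intro q1 q2 hq h1 h2
        exact df_apply hQDF hq (hEQ hrE) h1 (by omega)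
      · intro q1 q2 hq h1 h2
        rcases Nat.lt_or_ge (i + 1) q1 with h | h
        · exact df_apply hQDF (hEQ hcE) hq h h2
        · have hq1 : q1 = i + 1 := by omega
          rcases Nat.lt_or_ge (j + 1) q2 with h' | h'
          · exact df_apply hQDF (hEQ hrE) hq (by omega) h'
          · have hq2 : q2 = j + 1 := by omega
            exact hyQ (by rw [← hq1, ← hq2]; exact hq)
    · -- case B : y = (i - 1, j - 1)
      have hrB := mem_grid.mp (hPG hr)
      have hcB := mem_grid.mp (hPG hc)
      have hrE : (i, j - 1) ∈ P.erase (i, j) :=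
        Finset.mem_erase.mpr ⟨by simp [Prod.ext_iff]; omega, hr⟩
      have hcE : (i - 1, j) ∈ P.erase (i, j) :=
        Finset.mem_erase.mpr ⟨by simp [Prod.ext_iff]; omega, hc⟩
      have hynP : (i - 1, j - 1) ∉ P := fun h => df_apply hDF h hx (by omega) (by omega)
      have hQ'df : DiagFree (insert (i - 1, j - 1) (P.erase (i, j))) := by
        refine df_insert hDFE ?_ ?_
        · intro p1 p2 hp h1 h2
          rw [Finset.mem_erase] at hp
          exact df_apply hDF hp.2 hx (by omega) (by omega)
        · intro p1 p2 hp h1 h2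
          rw [Finset.mem_erase] at hp
          rcases Nat.lt_or_ge i p1 with h | h
          · exact df_apply hDF hr hp.2 (by omega) (by omega)
          · have hp1 : p1 = i := by omega
            have hp2 : p2 ≠ j := fun h' => hp.1 (by rw [hp1, h'])
            exact df_apply hDF hc hp.2 (by omega) (by omega)
      have hQ'G : insert (i - 1, j - 1) (P.erase (i, j)) ⊆ Finset.Icc 1 a ×ˢ Finset.Icc 1 b :=
        Finset.insert_subset (mem_grid.mpr (by omega)) ((Finset.erase_subset _ _).trans hPG)
      have hQ'max : MaxDiagFreeIn (Finset.Icc 1 a ×ˢ Finset.Icc 1 b)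
          (insert (i - 1, j - 1) (P.erase (i, j))) := by
        refine maxDiagFreeIn_iff.mpr ⟨hQ'G, hQ'df, ?_⟩
        rintro ⟨u, v⟩ hgG hdf
        by_cases hgy : ((u, v) : ℕ × ℕ) = (i - 1, j - 1)
        · rw [hgy]; exact Finset.mem_insert_self _ _
        by_cases hgP : ((u, v) : ℕ × ℕ) ∈ P
        · by_cases hgx : ((u, v) : ℕ × ℕ) = (i, j)
          · exact absurd (df_apply hdf
              (Finset.mem_insert_of_mem (Finset.mem_insert_self _ _))
              (by rw [← hgx]; exact Finset.mem_insert_self _ _)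
              (by omega) (by omega)) not_false
          · exact Finset.mem_insert_of_mem (Finset.mem_erase.mpr ⟨hgx, hgP⟩)
        · exfalso
          apply hgP
          refine hPsat _ hgG (df_insert hDF ?_ ?_)
          · intro p1 p2 hp h1 h2
            by_cases hpx : ((p1, p2) : ℕ × ℕ) = (i, j)
            · rw [Prod.mk.injEq] at hpx
              exact df_apply hdf
                (Finset.mem_insert_of_mem (Finset.mem_insert_of_mem hrE))
                (Finset.mem_insert_self _ _) (by omega) (by omega)
            · exact df_apply hdf
                (Finset.mem_insert_of_mem (Finset.mem_insert_of_mem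
                  (Finset.mem_erase.mpr ⟨hpx, hp⟩)))
                (Finset.mem_insert_self _ _) h1 h2
          · intro p1 p2 hp h1 h2
            by_cases hpx : ((p1, p2) : ℕ × ℕ) = (i, j)
            · rw [Prod.mk.injEq] at hpx
              rcases Nat.lt_or_ge u (i - 1) with h | h
              · exact df_apply hdf (Finset.mem_insert_self _ _)
                  (Finset.mem_insert_of_mem (Finset.mem_insert_of_mem hcE))
                  h (by omega)
              · have hu : u = i - 1 := by omega
                have hv : v ≠ j - 1 := fun h' => hgy (by rw [hu, h'])
                exact df_apply hdf (Finset.mem_insert_self _ _)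
                  (Finset.mem_insert_of_mem (Finset.mem_insert_of_mem hrE))
                  (by omega) (by omega)
            · exact df_apply hdf (Finset.mem_insert_self _ _)
                (Finset.mem_insert_of_mem (Finset.mem_insert_of_mem
                  (Finset.mem_erase.mpr ⟨hpx, hp⟩))) h1 h2
      have hne : P ≠ insert (i - 1, j - 1) (P.erase (i, j)) :=
        fun h => hynP (by rw [h]; exact Finset.mem_insert_self _ _)
      refine two_sols hP hQ'max (Finset.erase_subset _ _) (Finset.subset_insert _ _) hne ?_
      intro Q hQ hEQ
      obtain ⟨hQG, hQDF, hQsat⟩ := maxDiagFreeIn_iff.mp hQ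
      by_cases hxQ : ((i, j) : ℕ × ℕ) ∈ Q
      · left
        have hPQ : P ⊆ Q := by
          intro p hp
          by_cases hpx : p = (i, j)
          · rw [hpx]; exact hxQ
          · exact hEQ (Finset.mem_erase.mpr ⟨hpx, hp⟩)
        exact (hP.2.2 Q hQG hQDF hPQ).symm
      by_cases hyQ : ((i - 1, j - 1) : ℕ × ℕ) ∈ Q
      · right
        exact (hQ'max.2.2 Q hQG hQDF (Finset.insert_subset hyQ hEQ)).symm
      exfalso
      apply hxQ
      refine hQsat _ (mem_grid.mpr (by omega)) (df_insert hQDF ?_ ?_)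
      · intro q1 q2 hq h1 h2
        rcases Nat.lt_or_ge q1 (i - 1) with h | h
        · exact df_apply hQDF hq (hEQ hcE) h h2
        · have hq1 : q1 = i - 1 := by omega
          rcases Nat.lt_or_ge q2 (j - 1) with h' | h'
          · exact df_apply hQDF hq (hEQ hrE) (by omega) h'
          · have hq2 : q2 = j - 1 := by omega
            exact hyQ (by rw [← hq1, ← hq2]; exact hq)
      · intro q1 q2 hq h1 h2
        exact df_apply hQDF (hEQ hcE) hq (by omega) (by omega)
  · -- broken support: unique extension
    intro hns
    rcases not_and_or.mp hns with h | h
    · push_neg at h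
      obtain ⟨i0, hi0, hno⟩ := h
      rw [Finset.mem_Icc] at hi0
      obtain ⟨w, hw⟩ := row_support hb hP hi0.1 hi0.2
      have hwx : ((i0, w) : ℕ × ℕ) = (i, j) := by
        by_contra hne
        exact hno w (Finset.mem_erase.mpr ⟨hne, hw⟩)
      rw [Prod.mk.injEq] at hwx
      have key : ∀ v, (i0, v) ∈ P → v = j := by
        intro v hv
        by_contra hne'
        exact hno v (Finset.mem_erase.mpr
          ⟨fun h' => by rw [Prod.mk.injEq] at h'; exact hne' h'.2, hv⟩)
      apply Set.eq_singleton_iff_unique_mem.mpr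
      refine ⟨⟨hP, Finset.erase_subset _ _⟩, ?_⟩
      rintro Q ⟨hQ, hEQ⟩
      obtain ⟨hQG, hQDF, hQsat⟩ := maxDiagFreeIn_iff.mp hQ
      obtain ⟨v, hv⟩ := row_support hb hQ hi0.1 hi0.2
      have hvP : (i0, v) ∈ P := by
        refine hPsat _ (hQG hv) (df_insert hDF ?_ ?_)
        · intro p1 p2 hp h1 h2
          have hpx : ((p1, p2) : ℕ × ℕ) ≠ (i, j) := by
            intro h'
            rw [Prod.mk.injEq] at h'
            omega
          exact df_apply hQDF (hEQ (Finset.mem_erase.mpr ⟨hpx, hp⟩)) hv h1 h2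
        · intro p1 p2 hp h1 h2
          have hpx : ((p1, p2) : ℕ × ℕ) ≠ (i, j) := by
            intro h'
            rw [Prod.mk.injEq] at h'
            omega
          exact df_apply hQDF hv (hEQ (Finset.mem_erase.mpr ⟨hpx, hp⟩)) h1 h2
      have hvj : v = j := key v hvP
      have hxQ : ((i, j) : ℕ × ℕ) ∈ Q := by
        rw [hwx.1, hvj] at hv; exact hv
      have hPQ : P ⊆ Q := by
        intro p hp
        by_cases hpx : p = (i, j)
        · rw [hpx]; exact hxQ
        · exact hEQ (Finset.mem_erase.mpr ⟨hpx, hp⟩)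
      exact (hP.2.2 Q hQG hQDF hPQ).symm
    · push_neg at h
      obtain ⟨j0, hj0, hno⟩ := h
      rw [Finset.mem_Icc] at hj0
      obtain ⟨w, hw⟩ := col_support ha hP hj0.1 hj0.2
      have hwx : ((w, j0) : ℕ × ℕ) = (i, j) := by
        by_contra hne
        exact hno w (Finset.mem_erase.mpr ⟨hne, hw⟩)
      rw [Prod.mk.injEq] at hwx
      have key : ∀ u, (u, j0) ∈ P → u = i := by
        intro u hu
        by_contra hne'
        exact hno u (Finset.mem_erase.mpr
          ⟨fun h' => by rw [Prod.mk.injEq] at h'; exact hne' h'.1, hu⟩)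
      apply Set.eq_singleton_iff_unique_mem.mpr
      refine ⟨⟨hP, Finset.erase_subset _ _⟩, ?_⟩
      rintro Q ⟨hQ, hEQ⟩
      obtain ⟨hQG, hQDF, hQsat⟩ := maxDiagFreeIn_iff.mp hQ
      obtain ⟨u, hu⟩ := col_support ha hQ hj0.1 hj0.2
      have huP : (u, j0) ∈ P := by
        refine hPsat _ (hQG hu) (df_insert hDF ?_ ?_)
        · intro p1 p2 hp h1 h2
          have hpx : ((p1, p2) : ℕ × ℕ) ≠ (i, j) := by
            intro h'
            rw [Prod.mk.injEq] at h'
            omega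
          exact df_apply hQDF (hEQ (Finset.mem_erase.mpr ⟨hpx, hp⟩)) hu h1 h2
        · intro p1 p2 hp h1 h2
          have hpx : ((p1, p2) : ℕ × ℕ) ≠ (i, j) := by
            intro h'
            rw [Prod.mk.injEq] at h'
            omega
          exact df_apply hQDF hu (hEQ (Finset.mem_erase.mpr ⟨hpx, hp⟩)) h1 h2
      have hui : u = i := key u huP
      have hxQ : ((i, j) : ℕ × ℕ) ∈ Q := by
        rw [hwx.2, hui] at hu; exact hu
      have hPQ : P ⊆ Q := by
        intro p hp
        by_cases hpx : p = (i, j)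
        · rw [hpx]; exact hxQ
        · exact hEQ (Finset.mem_erase.mpr ⟨hpx, hp⟩)
      exact (hP.2.2 Q hQG hQDF hPQ).symm
end

section
/- Let K be a field, n = 2m an even integer with m ≥ 1, and let ≻ be any monomial order on R = K[x_{ij} : 1 ≤ i ≤ j ≤ n] such that for all 1 ≤ i < h ≤ n and 1 ≤ j < k ≤ n the ≻-leading monomial of the 2-minor X_{ij}X_{hk} − X_{ik}X_{hj} is the antidiagonal X_{ik}X_{hj} when i + j = n + 1 or h + k = n + 1, and is the main diagonal X_{ij}X_{hk} otherwise. Then the initial ideal in_≻(J(2,n)) equals K(2,n). -/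
open MvPolynomial

/-- Index set of the variables `x_{ij}`, `1 ≤ i ≤ j ≤ n`, of the polynomial
ring in the entries of the generic symmetric `n × n` matrix. -/
abbrev SymIdx (n : ℕ) := {p : Fin n × Fin n // p.1 ≤ p.2}

/-- The index of the variable `X_{ab} = x_{min(a,b), max(a,b)}`. -/
def symIdx {n : ℕ} (a b : Fin n) : SymIdx n := ⟨(min a b, max a b), min_le_max⟩

/-- The entry `X_{ab}` of the generic symmetric matrix as a polynomial. -/
noncomputable def Xsym (K : Type*) [Field K] {n : ℕ} (a b : Fin n) :
    MvPolynomial (SymIdx n) K :=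
  X (symIdx a b)

/-- The 2-minor `X_{ij} X_{hk} - X_{ik} X_{hj}` of the generic symmetric
matrix. -/
noncomputable def symMinor (K : Type*) [Field K] {n : ℕ} (i h j k : Fin n) :
    MvPolynomial (SymIdx n) K :=
  Xsym K i j * Xsym K h k - Xsym K i k * Xsym K h j

/-- The exponent vector of `X_{ab} X_{cd}`. -/
noncomputable def symMon {n : ℕ} (a b c d : Fin n) : SymIdx n →₀ ℕ :=
  Finsupp.single (symIdx a b) 1 + Finsupp.single (symIdx c d) 1

/-- In one-based indexing, `a + b = n + 1` (here `a b : Fin n` are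
zero-based). -/
def IsAnti (n : ℕ) (a b : Fin n) : Prop := ((a : ℕ) + 1) + ((b : ℕ) + 1) = n + 1

/-- The ideal `J(2,n)` generated by the 2-minors of the generic symmetric
`n × n` matrix. -/
noncomputable def symMinorsIdeal (K : Type*) [Field K] (n : ℕ) :
    Ideal (MvPolynomial (SymIdx n) K) :=
  Ideal.span {f : MvPolynomial (SymIdx n) K |
    ∃ i h j k : Fin n, i < h ∧ j < k ∧ f = symMinor K i h j k}

/-- The monomial ideal `K(2,n)`: generated by the monomials `x_{ij}x_{hk}`
with `i ≤ j`, `h ≤ k`, `i + j ≠ n + 1`, `h + k ≠ n + 1`, such that either (1)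
`a + b = n + 1` for some `a ∈ {i,j}` and `b ∈ {h,k}`, or (2) `i < h` and
`j < k`. -/
noncomputable def Kideal (K : Type*) [Field K] (n : ℕ) :
    Ideal (MvPolynomial (SymIdx n) K) :=
  Ideal.span {g : MvPolynomial (SymIdx n) K |
    ∃ i j h k : Fin n, ∃ _ : i ≤ j, ∃ _ : h ≤ k,
      ¬ IsAnti n i j ∧ ¬ IsAnti n h k ∧
      ((IsAnti n i h ∨ IsAnti n i k ∨ IsAnti n j h ∨ IsAnti n j k) ∨
        (i < h ∧ j < k)) ∧
      g = X (symIdx i j) * X (symIdx h k)}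

/- ### Auxiliary development -/


/-!
The minors form a Gröbner basis. Every generator `x_P x_Q` of `K(2,n)` is the leading monomial
of a 2-minor: of the minor with diagonal `x_P x_Q` when `P < Q` coordinatewise, and otherwise of
one whose antidiagonal is `x_P x_Q`, which exists because an index of `P` and one of `Q` sum to
`n + 1`. Conversely, read a monomial avoiding `K(2,n)` ("standard") as a multigraph on
`{1, …, n}`. It is determined by its vertex degrees: an edge `{a, n + 1 - a}` must occur in every
standard multigraph with the same degrees, since otherwise the edges there at `a` and at
`n + 1 - a` would form a generator; without such edges, the smallest and largest vertices are
joined by an edge. So the Veronese map `x_{ij} ↦ y_i y_j`, which kills `J(2,n)`, is injective on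
standard monomials, no nonzero element of `J(2,n)` is a combination of standard monomials, and
the division algorithm by the minors puts every leading monomial of `J(2,n)` into `K(2,n)`.
-/

section GroebnerCriterion

variable {σ K : Type*} [Field K] {m : MonomialOrder σ}

theorem IsLeadingMonomial.ne_zero {f : MvPolynomial σ K} {d : σ →₀ ℕ}
    (h : IsLeadingMonomial m f d) : f ≠ 0 := by
  rintro rfl
  exact Finsupp.notMem_support_iff.mpr rfl h.1

theorem IsLeadingMonomial.degree_eq {f : MvPolynomial σ K} {d : σ →₀ ℕ}
    (h : IsLeadingMonomial m f d) : m.degree f = d := by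
  by_contra hne
  exact (h.2 _ (m.degree_mem_support h.ne_zero) hne).not_ge (m.le_degree h.1)

theorem MonomialOrder.degree_le_of_mem_support_mul {b q : MvPolynomial σ K} {d : σ →₀ ℕ}
    (hd : d ∈ (b * q).support) (hle : m.toSyn (m.degree (b * q)) ≤ m.toSyn d) :
    m.degree b ≤ d := by
  have hbq : b * q ≠ 0 := by rintro h; simp [h] at hd
  have hdeg : m.degree (b * q) = d :=
    m.toSyn.injective (le_antisymm hle (m.le_degree hd))
  rw [← hdeg, m.degree_mul (left_ne_zero_of_mul hbq) (right_ne_zero_of_mul hbq)]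
  exact le_self_add

/-- Dividing by elements of `I` with leading monomials in `G` leaves a remainder in `I`
supported on monomials outside the monoideal generated by `G`; by `hstd` it vanishes, so the
leading monomial of `f` is that of some quotient term `b * q`, which `m.degree b` divides. -/
theorem exists_le_of_isLeadingMonomial {I : Ideal (MvPolynomial σ K)}
    {G : Set (σ →₀ ℕ)} (hG : ∀ g ∈ G, ∃ b ∈ I, IsLeadingMonomial m b g)
    (hstd : ∀ f ∈ I, (∀ c ∈ f.support, ∀ g ∈ G, ¬ g ≤ c) → f = 0)
    {f : MvPolynomial σ K} (hf : f ∈ I) {d : σ →₀ ℕ} (hd : IsLeadingMonomial m f d) :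
    ∃ g ∈ G, g ≤ d := by
  classical
  let B : Set (MvPolynomial σ K) := {b | b ∈ I ∧ b ≠ 0 ∧ m.degree b ∈ G}
  have hunit : ∀ b ∈ B, IsUnit (m.leadingCoeff b) := fun b hb =>
    (m.leadingCoeff_ne_zero_iff.mpr hb.2.1).isUnit
  obtain ⟨q, r, hfqr, hdeg, hr⟩ := m.div_set hunit f
  let s := Finsupp.linearCombination _ (fun b : B => (b : MvPolynomial σ K)) q
  have hs : s = ∑ b ∈ q.support, (b : MvPolynomial σ K) * q b := by
    simp only [s, Finsupp.linearCombination_apply, Finsupp.sum, smul_eq_mul, mul_comm]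
  have hsI : s ∈ I := hs ▸ Ideal.sum_mem _ fun b _ => Ideal.mul_mem_right _ _ b.2.1
  have hr0 : r = 0 := by
    have hrI : r ∈ I := by
      rw [show r = f - s by rw [hfqr]; ring]
      exact I.sub_mem hf hsI
    refine hstd r hrI fun c hc g hg hgc => ?_
    obtain ⟨b, hbI, hb⟩ := hG g hg
    exact hr c hc b ⟨hbI, hb.ne_zero, hb.degree_eq ▸ hg⟩ (hb.degree_eq ▸ hgc)
  have hcoeff : (∑ b ∈ q.support, (b : MvPolynomial σ K) * q b).coeff d ≠ 0 := by
    rw [← hs, ← add_zero s, ← hr0, ← hfqr]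
    exact mem_support_iff.mp hd.1
  rw [coeff_sum] at hcoeff
  obtain ⟨b, -, hb⟩ : ∃ b ∈ q.support, ((b : MvPolynomial σ K) * q b).coeff d ≠ 0 :=
    Finset.exists_ne_zero_of_sum_ne_zero hcoeff
  have hbG : m.degree (b : MvPolynomial σ K) ∈ G := b.2.2.2
  exact ⟨_, hbG, m.degree_le_of_mem_support_mul (mem_support_iff.mpr hb)
    (hd.degree_eq ▸ hdeg b)⟩

theorem initialIdeal_eq_span_of_forall_eq_zero {I : Ideal (MvPolynomial σ K)}
    {G : Set (σ →₀ ℕ)} (hG : ∀ g ∈ G, ∃ b ∈ I, IsLeadingMonomial m b g)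
    (hstd : ∀ f ∈ I, (∀ c ∈ f.support, ∀ g ∈ G, ¬ g ≤ c) → f = 0) :
    initialIdeal m I = Ideal.span ((fun g => monomial g (1 : K)) '' G) := by
  apply le_antisymm
  · rw [initialIdeal, Ideal.span_le]
    rintro _ ⟨f, hf, d, hd, rfl⟩
    obtain ⟨g, hg, hgd⟩ := exists_le_of_isLeadingMonomial hG hstd hf hd
    have hsplit : monomial d (1 : K) = monomial (d - g) 1 * monomial g 1 := by
      rw [monomial_mul, one_mul, tsub_add_cancel_of_le hgd]
    rw [hsplit]
    exact Ideal.mul_mem_left _ _ (Ideal.subset_span ⟨g, hg, rfl⟩)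
  · rw [Ideal.span_le]
    rintro _ ⟨g, hg, rfl⟩
    obtain ⟨b, hb, hbg⟩ := hG g hg
    exact Ideal.subset_span ⟨b, hb, g, hbg, rfl⟩

end GroebnerCriterion

section SymmetricIndices

variable {n : ℕ}

theorem IsAnti.symm {a b : Fin n} (h : IsAnti n a b) : IsAnti n b a := by
  unfold IsAnti at *; omega

theorem symIdx_comm (a b : Fin n) : symIdx a b = symIdx b a :=
  Subtype.ext (Prod.ext (min_comm a b) (max_comm a b))

theorem symIdx_of_le {a b : Fin n} (h : a ≤ b) : symIdx a b = ⟨(a, b), h⟩ :=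
  Subtype.ext (Prod.ext (min_eq_left h) (max_eq_right h))

theorem symIdx_fst_snd (P : SymIdx n) : symIdx P.1.1 P.1.2 = P := symIdx_of_le P.2

theorem symIdx_snd_fst (P : SymIdx n) : symIdx P.1.2 P.1.1 = P := by
  rw [symIdx_comm, symIdx_fst_snd]

theorem symMon_comm (a b c d : Fin n) : symMon a b c d = symMon c d a b :=
  add_comm _ _

def IsEndpoint (a : Fin n) (P : SymIdx n) : Prop := P.1.1 = a ∨ P.1.2 = a

theorem eq_of_isAnti_of_isEndpoint {P R : SymIdx n} {a : Fin n}
    (hP : IsAnti n P.1.1 P.1.2) (hR : IsAnti n R.1.1 R.1.2)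
    (haP : IsEndpoint a P) (haR : IsEndpoint a R) : R = P := by
  have hPle : (P.1.1 : ℕ) ≤ P.1.2 := P.2
  have hRle : (R.1.1 : ℕ) ≤ R.1.2 := R.2
  unfold IsAnti at hP hR
  refine Subtype.ext (Prod.ext (Fin.ext ?_) (Fin.ext ?_)) <;>
    rcases haP with rfl | rfl <;> rcases haR with h | h <;>
    have := congrArg Fin.val h <;> omega

end SymmetricIndices

section KGenerators

variable {n : ℕ}

def IsKPair (n : ℕ) (P Q : SymIdx n) : Prop :=
  ¬ IsAnti n P.1.1 P.1.2 ∧ ¬ IsAnti n Q.1.1 Q.1.2 ∧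
    ((IsAnti n P.1.1 Q.1.1 ∨ IsAnti n P.1.1 Q.1.2 ∨ IsAnti n P.1.2 Q.1.1 ∨
        IsAnti n P.1.2 Q.1.2) ∨ (P.1.1 < Q.1.1 ∧ P.1.2 < Q.1.2))

def kExponents (n : ℕ) : Set (SymIdx n →₀ ℕ) :=
  {d | ∃ P Q, IsKPair n P Q ∧ d = Finsupp.single P 1 + Finsupp.single Q 1}

theorem isKPair_of_isAnti {P Q : SymIdx n} {a b : Fin n}
    (hP : ¬ IsAnti n P.1.1 P.1.2) (hQ : ¬ IsAnti n Q.1.1 Q.1.2)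
    (ha : IsEndpoint a P) (hb : IsEndpoint b Q) (hab : IsAnti n a b) : IsKPair n P Q := by
  refine ⟨hP, hQ, Or.inl ?_⟩
  rcases ha with rfl | rfl <;> rcases hb with rfl | rfl <;> simp [hab]

/-- Since `n + 1` is odd, no index is antidiagonal to itself. -/
theorem IsKPair.ne (hn : Even n) {P Q : SymIdx n} (h : IsKPair n P Q) : P ≠ Q := by
  rintro rfl
  obtain ⟨hP, -, (h | h | h | h) | h⟩ := h
  · obtain ⟨k, rfl⟩ := hn; unfold IsAnti at h; omega
  · exact hP h
  · exact hP h.symm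
  · obtain ⟨k, rfl⟩ := hn; unfold IsAnti at h; omega
  · exact lt_irrefl _ h.1

theorem Kideal_eq_span (K : Type*) [Field K] (n : ℕ) :
    Kideal K n = Ideal.span ((fun g => monomial g (1 : K)) '' kExponents n) := by
  rw [Kideal]
  congr 1
  ext g
  constructor
  · rintro ⟨i, j, h, k, hij, hhk, hP, hQ, hPQ, rfl⟩
    refine ⟨_, ⟨⟨(i, j), hij⟩, ⟨(h, k), hhk⟩, ⟨hP, hQ, hPQ⟩, rfl⟩, ?_⟩
    simp only [symIdx_of_le hij, symIdx_of_le hhk, X, monomial_mul, mul_one]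
  · rintro ⟨_, ⟨P, Q, ⟨hP, hQ, hPQ⟩, rfl⟩, rfl⟩
    refine ⟨P.1.1, P.1.2, Q.1.1, Q.1.2, P.2, Q.2, hP, hQ, hPQ, ?_⟩
    simp only [symIdx_fst_snd, X, monomial_mul, mul_one]

end KGenerators

section StandardMonomials

variable {n : ℕ}

def IsStandard_s7 (n : ℕ) (u : SymIdx n →₀ ℕ) : Prop :=
  ∀ P ∈ u.support, ∀ Q ∈ u.support, ¬ IsKPair n P Q

theorem Finsupp.single_add_single_le {α : Type*} {u : α →₀ ℕ} {P Q : α} (hne : P ≠ Q)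
    (hP : P ∈ u.support) (hQ : Q ∈ u.support) :
    Finsupp.single P 1 + Finsupp.single Q 1 ≤ u := by
  classical
  rw [Finsupp.mem_support_iff] at hP hQ
  intro R
  simp only [Finsupp.add_apply, Finsupp.single_apply]
  split_ifs with h1 h2 h2
  · exact absurd (h1.trans h2.symm) hne
  all_goals subst_vars; omega

theorem isStandard_of_forall_not_le (hn : Even n) {u : SymIdx n →₀ ℕ}
    (hu : ∀ g ∈ kExponents n, ¬ g ≤ u) : IsStandard_s7 n u := fun P hP Q hQ hPQ =>
  hu _ ⟨P, Q, hPQ, rfl⟩ (Finsupp.single_add_single_le (hPQ.ne hn) hP hQ)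

theorem IsStandard_s7.mono {u v : SymIdx n →₀ ℕ} (hv : IsStandard_s7 n v) (huv : u ≤ v) :
    IsStandard_s7 n u := fun P hP Q hQ =>
  hv P (Finsupp.support_mono huv hP) Q (Finsupp.support_mono huv hQ)

noncomputable def incidence (P : SymIdx n) : Fin n →₀ ℕ :=
  Finsupp.single P.1.1 1 + Finsupp.single P.1.2 1

noncomputable def vertexDegrees : (SymIdx n →₀ ℕ) →ₗ[ℕ] (Fin n →₀ ℕ) :=
  Finsupp.linearCombination ℕ incidence

theorem mem_support_vertexDegrees {u : SymIdx n →₀ ℕ} {P : SymIdx n} {a : Fin n}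
    (hP : P ∈ u.support) (ha : IsEndpoint a P) : a ∈ (vertexDegrees u).support := by
  have hle : u P • incidence P ≤ vertexDegrees u := by
    rw [vertexDegrees, Finsupp.linearCombination_apply, Finsupp.sum]
    exact Finset.single_le_sum (f := fun Q => u Q • incidence Q) (fun _ _ => zero_le) hP
  have hpos : 0 < (u P • incidence P) a := by
    rw [Finsupp.mem_support_iff] at hP
    rcases ha with rfl | rfl <;> simp [incidence, Finsupp.single_apply] <;> omega
  exact Finsupp.mem_support_iff.mpr (hpos.trans_le (hle a)).ne'

theorem exists_isEndpoint_of_mem_support {u : SymIdx n →₀ ℕ} {a : Fin n}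
    (ha : a ∈ (vertexDegrees u).support) : ∃ P ∈ u.support, IsEndpoint a P := by
  classical
  rw [vertexDegrees, Finsupp.linearCombination_apply] at ha
  obtain ⟨P, hP, haP⟩ := Finset.mem_biUnion.mp (Finsupp.support_sum ha)
  refine ⟨P, hP, ?_⟩
  have := Finsupp.support_smul haP
  simp only [incidence, Finsupp.mem_support_iff, Finsupp.add_apply, Finsupp.single_apply] at this
  unfold IsEndpoint
  by_contra h
  push Not at h
  simp [h.1, h.2] at this

theorem IsStandard_s7.mem_of_isAnti {u v : SymIdx n →₀ ℕ} (hv : IsStandard_s7 n v)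
    (hdeg : vertexDegrees u = vertexDegrees v) {P : SymIdx n} (hP : P ∈ u.support)
    (hanti : IsAnti n P.1.1 P.1.2) : P ∈ v.support := by
  obtain ⟨Q, hQ, hQP⟩ := exists_isEndpoint_of_mem_support
    (hdeg ▸ mem_support_vertexDegrees hP (Or.inl rfl))
  obtain ⟨Q', hQ', hQ'P⟩ := exists_isEndpoint_of_mem_support
    (hdeg ▸ mem_support_vertexDegrees hP (Or.inr rfl))
  by_contra hPv
  have hnot : ∀ R ∈ v.support, ∀ a, IsEndpoint a P → IsEndpoint a R →
      ¬ IsAnti n R.1.1 R.1.2 := fun R hR a haP haR hR' =>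
    hPv (eq_of_isAnti_of_isEndpoint hanti hR' haP haR ▸ hR)
  exact hv Q hQ Q' hQ' (isKPair_of_isAnti (hnot Q hQ _ (Or.inl rfl) hQP)
    (hnot Q' hQ' _ (Or.inr rfl) hQ'P) hQP hQ'P hanti)

/-- No two variables of an antidiagonal-free standard monomial are strictly increasing in both
indices, so the variable through the smallest index also reaches the largest one, or the other
way round. -/
theorem IsStandard_s7.exists_extreme_mem {w : SymIdx n →₀ ℕ} (hw : IsStandard_s7 n w)
    (hfree : ∀ P ∈ w.support, ¬ IsAnti n P.1.1 P.1.2)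
    (hne : (vertexDegrees w).support.Nonempty) :
    ∃ P ∈ w.support, P.1.1 = (vertexDegrees w).support.min' hne ∧
      P.1.2 = (vertexDegrees w).support.max' hne := by
  set A := (vertexDegrees w).support
  have hbounds : ∀ P ∈ w.support, A.min' hne ≤ P.1.1 ∧ P.1.2 ≤ A.max' hne := fun P hP =>
    ⟨A.min'_le _ (mem_support_vertexDegrees hP (Or.inl rfl)),
      A.le_max' _ (mem_support_vertexDegrees hP (Or.inr rfl))⟩
  obtain ⟨P, hP, hPa⟩ := exists_isEndpoint_of_mem_support (A.min'_mem hne)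
  obtain ⟨Q, hQ, hQb⟩ := exists_isEndpoint_of_mem_support (A.max'_mem hne)
  have hP1 : P.1.1 = A.min' hne := by
    rcases hPa with h | h
    · exact h
    · exact le_antisymm (h ▸ P.2) (hbounds P hP).1
  have hQ2 : Q.1.2 = A.max' hne := by
    rcases hQb with h | h
    · exact le_antisymm (hbounds Q hQ).2 (h ▸ Q.2)
    · exact h
  have hPQ : ¬ (P.1.1 < Q.1.1 ∧ P.1.2 < Q.1.2) := fun h =>
    hw P hP Q hQ ⟨hfree P hP, hfree Q hQ, Or.inr h⟩
  by_cases hlt : P.1.1 < Q.1.1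
  · exact ⟨P, hP, hP1, le_antisymm (hbounds P hP).2 (hQ2 ▸ not_lt.mp (hPQ ⟨hlt, ·⟩))⟩
  · exact ⟨Q, hQ, le_antisymm (hP1 ▸ not_lt.mp hlt) (hbounds Q hQ).1, hQ2⟩

theorem IsStandard_s7.exists_common_mem {u v : SymIdx n →₀ ℕ} (hu : IsStandard_s7 n u)
    (hv : IsStandard_s7 n v) (hdeg : vertexDegrees u = vertexDegrees v) (hne : u ≠ 0) :
    ∃ R ∈ u.support, R ∈ v.support := by
  by_cases hanti : ∃ P ∈ u.support, IsAnti n P.1.1 P.1.2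
  · obtain ⟨P, hP, hPanti⟩ := hanti
    exact ⟨P, hP, hv.mem_of_isAnti hdeg hP hPanti⟩
  push Not at hanti
  have hanti' : ∀ Q ∈ v.support, ¬ IsAnti n Q.1.1 Q.1.2 := fun Q hQ hQanti =>
    hanti Q (hu.mem_of_isAnti hdeg.symm hQ hQanti) hQanti
  obtain ⟨P0, hP0⟩ := Finsupp.support_nonempty_iff.mpr hne
  have hneu : (vertexDegrees u).support.Nonempty :=
    ⟨_, mem_support_vertexDegrees hP0 (Or.inl rfl)⟩
  have hnev : (vertexDegrees v).support.Nonempty := hdeg ▸ hneu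
  obtain ⟨P, hP, hP1, hP2⟩ := hu.exists_extreme_mem hanti hneu
  obtain ⟨Q, hQ, hQ1, hQ2⟩ := hv.exists_extreme_mem hanti' hnev
  have hPQ : P = Q := by
    refine Subtype.ext (Prod.ext ?_ ?_)
    · rw [hP1, hQ1]; congr 1; rw [hdeg]
    · rw [hP2, hQ2]; congr 1; rw [hdeg]
  exact ⟨P, hP, hPQ ▸ hQ⟩

theorem vertexDegrees_injOn : Set.InjOn (vertexDegrees (n := n)) {u | IsStandard_s7 n u} := by
  intro u hu v hv hdeg
  induction u using WellFoundedLT.induction generalizing v with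
  | ind u ih =>
  by_cases hu0 : u = 0
  · subst hu0
    by_contra hv0
    obtain ⟨P, hP⟩ := Finsupp.support_nonempty_iff.mpr (Ne.symm hv0)
    simpa [← hdeg] using mem_support_vertexDegrees hP (Or.inl rfl)
  obtain ⟨R, hRu, hRv⟩ := IsStandard_s7.exists_common_mem hu hv hdeg hu0
  have hsingle : ∀ w : SymIdx n →₀ ℕ, R ∈ w.support → Finsupp.single R 1 ≤ w :=
    fun w hw => Finsupp.single_le_iff.mpr
      (Nat.one_le_iff_ne_zero.mpr (Finsupp.mem_support_iff.mp hw))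
  have hRu' := hsingle u hRu
  have hRv' := hsingle v hRv
  have hlt : u - Finsupp.single R 1 < u := by
    refine lt_of_le_of_ne tsub_le_self fun h => ?_
    have := DFunLike.congr_fun h R
    rw [Finsupp.mem_support_iff] at hRu
    simp only [Finsupp.coe_tsub, Pi.sub_apply, Finsupp.single_eq_same] at this
    omega
  have := ih _ hlt (hu.mono tsub_le_self) (hv.mono tsub_le_self) (by
    rw [← add_left_inj (vertexDegrees (Finsupp.single R 1)), ← map_add, ← map_add,
      tsub_add_cancel_of_le hRu', tsub_add_cancel_of_le hRv', hdeg])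
  rw [← tsub_add_cancel_of_le hRu', ← tsub_add_cancel_of_le hRv', this]

end StandardMonomials

section Veronese

variable (K : Type*) [Field K] {n : ℕ}

noncomputable def veronese : MvPolynomial (SymIdx n) K →ₐ[K] MvPolynomial (Fin n) K :=
  aeval fun P => X P.1.1 * X P.1.2

variable {K}

theorem veronese_monomial (u : SymIdx n →₀ ℕ) (c : K) :
    veronese K (monomial u c) = monomial (vertexDegrees u) c := by
  induction u using Finsupp.induction generalizing c with
  | zero => simp [veronese]
  | single_add P k u _ _ ih =>
    have hX : veronese K (X P) = monomial (incidence P) (1 : K) := by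
      rw [veronese, aeval_X, X, X, monomial_mul, one_mul, incidence]
    rw [← one_mul c, ← monomial_mul, map_mul, ih, ← X_pow_eq_monomial, map_pow, hX,
      monomial_pow, one_pow, monomial_mul, map_add, vertexDegrees,
      Finsupp.linearCombination_single]

theorem coeff_veronese {f : MvPolynomial (SymIdx n) K}
    (hinj : Set.InjOn vertexDegrees (f.support : Set (SymIdx n →₀ ℕ)))
    {d : SymIdx n →₀ ℕ} (hd : d ∈ f.support) :
    (veronese K f).coeff (vertexDegrees d) = f.coeff d := by
  conv_lhs => rw [← support_sum_monomial_coeff f]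
  rw [map_sum, coeff_sum, Finset.sum_eq_single d]
  · rw [veronese_monomial, coeff_monomial, if_pos rfl]
  · intro c hc hcd
    rw [veronese_monomial, coeff_monomial, if_neg (hcd ∘ hinj hc hd)]
  · exact fun h => absurd hd h

theorem veronese_symMinor (i h j k : Fin n) : veronese K (symMinor K i h j k) = 0 := by
  have hX : ∀ a b : Fin n, veronese K (Xsym K a b) = X a * X b := by
    intro a b
    rcases le_total a b with hab | hab
    · simp [veronese, Xsym, symIdx, hab]
    · simp [veronese, Xsym, symIdx, hab, mul_comm]
  simp only [symMinor, map_sub, map_mul, hX]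
  ring

theorem symMinorsIdeal_le_ker : symMinorsIdeal K n ≤ RingHom.ker (veronese K (n := n)) := by
  rw [symMinorsIdeal, Ideal.span_le]
  rintro _ ⟨i, h, j, k, -, -, rfl⟩
  exact veronese_symMinor i h j k

theorem eq_zero_of_isStandard {f : MvPolynomial (SymIdx n) K} (hf : f ∈ symMinorsIdeal K n)
    (hstd : ∀ c ∈ f.support, IsStandard_s7 n c) : f = 0 := by
  by_contra hne
  obtain ⟨d, hd⟩ := support_nonempty.mpr hne
  have hcoeff := coeff_veronese (vertexDegrees_injOn.mono fun c hc => hstd c hc) hd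
  rw [RingHom.mem_ker.mp (symMinorsIdeal_le_ker hf), coeff_zero] at hcoeff
  exact mem_support_iff.mp hd hcoeff.symm

end Veronese

section Minors

def HasMinorLeadingMonomials (K : Type*) [Field K] {n : ℕ} (m : MonomialOrder (SymIdx n)) :
    Prop :=
  ∀ i h j k : Fin n, i < h → j < k →
    ((IsAnti n i j ∨ IsAnti n h k) →
      IsLeadingMonomial m (symMinor K i h j k) (symMon i k h j)) ∧
    (¬ (IsAnti n i j ∨ IsAnti n h k) →
      IsLeadingMonomial m (symMinor K i h j k) (symMon i j h k))

variable {K : Type*} [Field K] {n : ℕ} {m : MonomialOrder (SymIdx n)}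

theorem symMinor_mem {i h j k : Fin n} (hih : i < h) (hjk : j < k) :
    symMinor K i h j k ∈ symMinorsIdeal K n :=
  Ideal.subset_span ⟨i, h, j, k, hih, hjk, rfl⟩

theorem HasMinorLeadingMonomials.exists_antidiagonal (hm : HasMinorLeadingMonomials K m)
    {i h j k : Fin n} (hih : i < h) (hjk : j < k) (hanti : IsAnti n i j ∨ IsAnti n h k) :
    ∃ f ∈ symMinorsIdeal K n, IsLeadingMonomial m f (symMon i k h j) :=
  ⟨_, symMinor_mem hih hjk, (hm i h j k hih hjk).1 hanti⟩

theorem HasMinorLeadingMonomials.exists_diagonal (hm : HasMinorLeadingMonomials K m)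
    {i h j k : Fin n} (hih : i < h) (hjk : j < k) (hij : ¬ IsAnti n i j)
    (hhk : ¬ IsAnti n h k) :
    ∃ f ∈ symMinorsIdeal K n, IsLeadingMonomial m f (symMon i j h k) :=
  ⟨_, symMinor_mem hih hjk, (hm i h j k hih hjk).2 (by tauto)⟩

theorem HasMinorLeadingMonomials.exists_of_lt (hm : HasMinorLeadingMonomials K m)
    {a a' b b' : Fin n} (ha : ¬ IsAnti n a a') (hb : ¬ IsAnti n b b') (hab : a < b')
    (hab' : a' < b) : ∃ f ∈ symMinorsIdeal K n, IsLeadingMonomial m f (symMon a a' b b') := by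
  rw [symMon, symIdx_comm b]
  exact hm.exists_diagonal hab hab' ha (mt IsAnti.symm hb)

theorem HasMinorLeadingMonomials.exists_of_isAnti (hm : HasMinorLeadingMonomials K m)
    {a a' b b' : Fin n} (ha : ¬ IsAnti n a a') (hb : ¬ IsAnti n b b') (hab : IsAnti n a b) :
    ∃ f ∈ symMinorsIdeal K n, IsLeadingMonomial m f (symMon a a' b b') := by
  have hab' : a ≠ b' := by rintro rfl; exact hb hab.symm
  have hba' : b ≠ a' := by rintro rfl; exact ha hab
  rcases hab'.lt_or_gt with h1 | h1 <;> rcases hba'.lt_or_gt with h2 | h2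
  · rw [symMon, symIdx_comm b]
    exact hm.exists_antidiagonal h1 h2 (Or.inl hab)
  · exact hm.exists_of_lt ha hb h1 h2
  · rw [symMon_comm]
    exact hm.exists_of_lt hb ha h2 h1
  · rw [symMon_comm, symMon, symIdx_comm b]
    exact hm.exists_antidiagonal h1 h2 (Or.inr hab)

theorem HasMinorLeadingMonomials.exists_of_isKPair (hm : HasMinorLeadingMonomials K m)
    {P Q : SymIdx n} (hPQ : IsKPair n P Q) :
    ∃ f ∈ symMinorsIdeal K n,
      IsLeadingMonomial m f (Finsupp.single P 1 + Finsupp.single Q 1) := by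
  obtain ⟨hP, hQ, (h | h | h | h) | ⟨h1, h2⟩⟩ := hPQ
  · simpa only [symMon, symIdx_fst_snd] using hm.exists_of_isAnti hP hQ h
  · simpa only [symMon, symIdx_fst_snd, symIdx_snd_fst] using
      hm.exists_of_isAnti hP (mt IsAnti.symm hQ) h
  · simpa only [symMon, symIdx_fst_snd, symIdx_snd_fst] using
      hm.exists_of_isAnti (mt IsAnti.symm hP) hQ h
  · simpa only [symMon, symIdx_snd_fst] using
      hm.exists_of_isAnti (mt IsAnti.symm hP) (mt IsAnti.symm hQ) h
  · simpa only [symMon, symIdx_fst_snd, symIdx_snd_fst] using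
      hm.exists_of_lt hP (mt IsAnti.symm hQ) h1 h2

end Minors

theorem initial_symMinorsIdeal_eq_Kideal_general (K : Type*) [Field K]
    (mhalf n : ℕ) (hn : n = 2 * mhalf)
    (m : MonomialOrder (SymIdx n))
    (hlead : ∀ i h j k : Fin n, i < h → j < k →
      ((IsAnti n i j ∨ IsAnti n h k) →
        IsLeadingMonomial m (symMinor K i h j k) (symMon i k h j)) ∧
      (¬ (IsAnti n i j ∨ IsAnti n h k) →
        IsLeadingMonomial m (symMinor K i h j k) (symMon i j h k))) :
    initialIdeal m (symMinorsIdeal K n) = Kideal K n := by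
  have hlead : HasMinorLeadingMonomials K m := hlead
  have heven : Even n := ⟨mhalf, by omega⟩
  rw [Kideal_eq_span]
  refine initialIdeal_eq_span_of_forall_eq_zero ?_ fun f hf hstd => ?_
  · rintro _ ⟨P, Q, hPQ, rfl⟩
    exact hlead.exists_of_isKPair hPQ
  · exact eq_zero_of_isStandard hf fun c hc => isStandard_of_forall_not_le heven (hstd c hc)

/-- Let `n = 2m` be even, and let `≻` be a monomial order such that the
leading monomial of the 2-minor `X_{ij}X_{hk} - X_{ik}X_{hj}` (`i < h`,
`j < k`) is the antidiagonal `X_{ik}X_{hj}` when `i + j = n + 1` or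
`h + k = n + 1`, and the main diagonal `X_{ij}X_{hk}` otherwise. Then the
initial ideal of `J(2,n)` equals `K(2,n)`. -/
theorem initial_symMinorsIdeal_eq_Kideal (K : Type*) [Field K]
    (mhalf n : ℕ) (hm : 1 ≤ mhalf) (hn : n = 2 * mhalf)
    (m : MonomialOrder (SymIdx n))
    (hlead : ∀ i h j k : Fin n, i < h → j < k →
      ((IsAnti n i j ∨ IsAnti n h k) →
        IsLeadingMonomial m (symMinor K i h j k) (symMon i k h j)) ∧
      (¬ (IsAnti n i j ∨ IsAnti n h k) →
        IsLeadingMonomial m (symMinor K i h j k) (symMon i j h k))) :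
    initialIdeal m (symMinorsIdeal K n) = Kideal K n :=
  initial_symMinorsIdeal_eq_Kideal_general K mhalf n hn m hlead
end
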